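/- arXiv:1911.08143 — 4 statements merged into one kernel-verified Lean document; each statement's English description precedes it below -/
import Mathlib

section
/- For every Young diagram λ with n boxes, the modified jeu de taquin transformation J — which applies j to a tableau T ∈ 𝒯_λ, places a new box with entry n+1 at the final position of the hole, and then decreases all entries by 1 — is a bijection of 𝒯_λ onto itself. -/
/-!
Common framework.

A *cell* `(x, y)` has column `x` and row `y` (0-indexed, French convention, so the
bottom-left corner is `(0, 0)`).  A *filling* assigns to every cell a natural number,
where `0` encodes an empty cell.
-/

abbrev Cell : Type := ℕ × ℕ

abbrev Filling : Type := Cell → ℕ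

/-- One sliding step of jeu de taquin: given a filling `F` and the position `h` of the
hole, slide into the hole the smaller of the entries of the boxes directly to the right
of and directly above the hole (of those that exist); the hole moves to the vacated box.
If neither neighbouring box is occupied, nothing happens. -/
def slide (F : Filling) (h : Cell) : Filling × Cell :=
  let r := F (h.1 + 1, h.2)
  let u := F (h.1, h.2 + 1)
  if r = 0 ∧ u = 0 then (F, h)
  else if u = 0 ∨ (r ≠ 0 ∧ r < u) then
    (fun c => if c = h then r else if c = (h.1 + 1, h.2) then 0 else F c, (h.1 + 1, h.2))
  else
    (fun c => if c = h then u else if c = (h.1, h.2 + 1) then 0 else F c, (h.1, h.2 + 1))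

/-- Iterated sliding, with explicit fuel.  The process stops (and the result is stable
under adding more fuel) as soon as no box lies to the right of or above the hole. -/
def slideIter : ℕ → Filling → Cell → Filling × Cell
  | 0, F, h => (F, h)
  | fuel + 1, F, h =>
      if F (h.1 + 1, h.2) = 0 ∧ F (h.1, h.2 + 1) = 0 then (F, h)
      else slideIter fuel (slide F h).1 (slide F h).2

/-- Jeu de taquin with fuel `n` applied to `F`: erase the entry of the corner box
`(0,0)`, creating a hole there, then slide until no box lies to the right of or above
the hole.  Returns the resulting filling together with the final position of the hole.
For a standard Young tableau with at most `n` boxes, fuel `n` always suffices. -/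
def jdtAux (n : ℕ) (F : Filling) : Filling × Cell :=
  slideIter n (fun c => if c = ((0, 0) : Cell) then 0 else F c) (0, 0)

/-- The jeu de taquin transformation `j` (for tableaux with at most `n` boxes). -/
def jdt (n : ℕ) (F : Filling) : Filling := (jdtAux n F).1

/-- The final position of the hole in the jeu de taquin applied to `F`. -/
def holeEnd (n : ℕ) (F : Filling) : Cell := (jdtAux n F).2

/-- The position of the hole after `s` sliding steps of the jeu de taquin applied
to `F`; the sequence of these positions is the jeu de taquin path of `F`. -/
def holeAt (F : Filling) (s : ℕ) : Cell :=
  (slideIter s (fun c => if c = ((0, 0) : Cell) then 0 else F c) (0, 0)).2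

open Classical in
/-- The position `pos F k` of the entry `k` in the filling `F` (junk value if absent). -/
noncomputable def pos (F : Filling) (k : ℕ) : Cell :=
  if h : ∃ c : Cell, F c = k then h.choose else (0, 0)

/-- The content (`u`-coordinate) of the box of `F` containing the entry `k`:
the column minus the row. -/
noncomputable def content (F : Filling) (k : ℕ) : ℤ :=
  ((pos F k).1 : ℤ) - ((pos F k).2 : ℤ)

/-- `IsStdFilling F a n` : the filling `F` is a standard tableau with entries
`a+1, …, n`: every such entry occurs in exactly one box, there are no other entries,
the occupied boxes form a Young diagram (a lower set), and the entries strictly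
increase from left to right along rows and from bottom to top along columns. -/
def IsStdFilling (F : Filling) (a n : ℕ) : Prop :=
  (∀ k : ℕ, a < k → k ≤ n → ∃! c : Cell, F c = k) ∧
  (∀ c : Cell, F c ≤ n ∧ (F c = 0 ∨ a < F c)) ∧
  (∀ x y : ℕ, F (x + 1, y) ≠ 0 → F (x, y) ≠ 0) ∧
  (∀ x y : ℕ, F (x, y + 1) ≠ 0 → F (x, y) ≠ 0) ∧
  (∀ x y : ℕ, F (x + 1, y) ≠ 0 → F (x, y) < F (x + 1, y)) ∧
  (∀ x y : ℕ, F (x, y + 1) ≠ 0 → F (x, y) < F (x, y + 1))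

/-- The shape of a filling: the set of occupied cells. -/
def shape (F : Filling) : Set Cell := {c : Cell | F c ≠ 0}

/-- A finite set of cells is a Young diagram if it is a lower set. -/
def IsYoung (s : Finset Cell) : Prop :=
  ∀ x y : ℕ, ((x + 1, y) ∈ s → (x, y) ∈ s) ∧ ((x, y + 1) ∈ s → (x, y) ∈ s)

/-- The filling `F` has shape exactly `s`. -/
def HasShape (F : Filling) (s : Finset Cell) : Prop := ∀ c : Cell, c ∈ s ↔ F c ≠ 0

/-- `F ∈ 𝒯_s` : `F` is a standard Young tableau of shape `s`. -/
def IsSYTof (F : Filling) (s : Finset Cell) : Prop :=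
  IsStdFilling F 0 s.card ∧ HasShape F s

/-- The square Young diagram `□_N` of side `N`. -/
def squareDiagram (N : ℕ) : Finset Cell := Finset.range N ×ˢ Finset.range N

/-- `F ∈ 𝒯_{□_N}` : `F` is a standard Young tableau of square shape `□_N`. -/
def IsSquareSYT (N : ℕ) (F : Filling) : Prop := IsSYTof F (squareDiagram N)

/-- The modified jeu de taquin `J` on tableaux with `n` boxes: apply `j`, place a new box
with entry `n+1` at the final position of the hole, then decrease all entries by `1`. -/
def Jmod (n : ℕ) (F : Filling) : Filling :=
  fun c => (if c = holeEnd n F then n + 1 else jdt n F c) - 1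

/-- `IsPieri F n k` : the filling `F`, whose `k` largest entries are
`n-k+1, …, n`, is a Pieri tableau with respect to `k`: the contents of the boxes
containing the `k` largest entries are strictly increasing. -/
noncomputable def IsPieri (F : Filling) (n k : ℕ) : Prop :=
  ∀ p : ℕ, 1 ≤ p → p < k → content F (n - k + p) < content F (n - k + p + 1)

/-- The column into which the value `v` lands when row-inserted into row `y` of `P`
(searching columns `0, …, B`): the first column whose entry is empty or exceeds `v`. -/
def bumpCol (P : Filling) (v y B : ℕ) : ℕ :=
  (((List.range (B + 1)).find? fun x => decide (P (x, y) = 0 ∨ v < P (x, y))).getD B)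

/-- Row insertion: insert the value `v` into row `y` of `P`, bumping to higher rows;
returns the new filling and the cell where a new box was created. -/
def insertRow : ℕ → Filling → ℕ → ℕ → ℕ → Filling × Cell
  | 0, P, _, y, _ => (P, (0, y))
  | fuel + 1, P, v, y, B =>
      let x := bumpCol P v y B
      let w := P (x, y)
      let P' : Filling := fun c => if c = ((x, y) : Cell) then v else P c
      if w = 0 then (P', (x, y)) else insertRow fuel P' w (y + 1) B

/-- One step of the Robinson–Schensted algorithm: insert the value `vi.1` into the
insertion tableau and record the entry `vi.2` in the newly created box of the
recording tableau. -/
def rsStep (B : ℕ) (PQ : Filling × Filling) (vi : ℕ × ℕ) : Filling × Filling :=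
  let res := insertRow (B + 1) PQ.1 vi.1 0 B
  (res.1, fun c => if c = res.2 then vi.2 else PQ.2 c)

/-- The recording tableau `Q(w)` of the Robinson–Schensted row insertion of the
sequence `w`: the entry `i` marks the box created at step `i`. -/
def Qtab (w : List ℕ) : Filling :=
  ((w.zip (List.range' 1 w.length)).foldl (rsStep w.length) (fun _ => 0, fun _ => 0)).2

/-- The lazy parametrization `𝐪_i` of the jeu de taquin path of a tableau `F` with `n`
boxes: the last box along the jeu de taquin path of `F` whose entry in `F` is `≤ i`. -/
def lazyQ (n : ℕ) (F : Filling) (i : ℕ) : Cell :=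
  holeAt F (Nat.findGreatest (fun s => F (holeAt F s) ≤ i) n)

/-- The water configuration `W'(T)` in the single surfer scenario: apply `j` to
`T ∈ 𝒯_{□_N}` `m` times, renumber the entries to `1, …, w+1` (where `w = N²-m-1`)
preserving their order, and remove the box containing the largest entry `w+1`. -/
def waterSingle (N m : ℕ) (T : Filling) : Filling :=
  fun c =>
    if ((jdt (N ^ 2))^[m] T) c - m = N ^ 2 - m then 0
    else ((jdt (N ^ 2))^[m] T) c - m

/-- The water configuration `W̃'(M)` in the multisurfer scenario: apply `j` to
`M ∈ 𝒯̃_{□_N}` `m+1-k` times, renumber the entries to `1, …, w+k` (where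
`w = N²-m-1`) preserving their order, and remove the `k` boxes containing the
entries `w+1, …, w+k`. -/
def waterMulti (N m k : ℕ) (M : Filling) : Filling :=
  fun c =>
    if N ^ 2 - m - 1 < ((jdt (N ^ 2))^[m + 1 - k] M) c - (m + 1 - k) then 0
    else ((jdt (N ^ 2))^[m + 1 - k] M) c - (m + 1 - k)


/-! ### Auxiliary machinery for `stmt1` -/

/-- Reverse sliding step. -/
def rslide (F : Filling) (h : Cell) : Filling × Cell :=
  let l := F (h.1 - 1, h.2)
  let d := F (h.1, h.2 - 1)
  if l = 0 ∧ d = 0 then (F, h)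
  else if d = 0 ∨ (l ≠ 0 ∧ d < l) then
    (fun c => if c = h then l else if c = (h.1 - 1, h.2) then 0 else F c, (h.1 - 1, h.2))
  else
    (fun c => if c = h then d else if c = (h.1, h.2 - 1) then 0 else F c, (h.1, h.2 - 1))

def rstep : Filling × Cell → Filling × Cell := fun p => rslide p.1 p.2

/-- Invariant during the sliding process. -/
structure SInv (lam : Finset Cell) (n : ℕ) (F : Filling) (h : Cell) : Prop where
  hole : F h = 0
  memh : h ∈ lam
  shp : ∀ c : Cell, F c ≠ 0 ↔ (c ∈ lam ∧ c ≠ h)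
  uniq : ∀ k, 2 ≤ k → k ≤ n → ∃! c : Cell, F c = k
  bnd : ∀ c, F c ≤ n ∧ (F c = 0 ∨ 2 ≤ F c)
  row : ∀ x y : ℕ, F (x+1,y) ≠ 0 → F (x,y) < F (x+1,y)
  col : ∀ x y : ℕ, F (x,y+1) ≠ 0 → F (x,y) < F (x,y+1)
  ax : F (h.1+1,h.2) ≠ 0 → F (h.1-1,h.2) < F (h.1+1,h.2)
  ay : F (h.1,h.2+1) ≠ 0 → F (h.1,h.2-1) < F (h.1,h.2+1)

lemma SInv.distinct {lam n F h} (hI : SInv lam n F h) {c c' : Cell}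
    (hc : F c ≠ 0) (hcc : F c = F c') : c = c' := by
  have hb := hI.bnd c
  have h2 : 2 ≤ F c := by
    rcases hb.2 with h0 | h2
    · exact absurd h0 hc
    · exact h2
  obtain ⟨d, hd, hu⟩ := hI.uniq (F c) h2 hb.1
  rw [hu c rfl, hu c' hcc.symm]

lemma slide_eq_right {F : Filling} {h : Cell}
    (h2 : F (h.1, h.2+1) = 0 ∨ (F (h.1+1, h.2) ≠ 0 ∧ F (h.1+1, h.2) < F (h.1, h.2+1)))
    (hr : F (h.1+1, h.2) ≠ 0) :
    slide F h = (fun c => if c = h then F (h.1+1, h.2)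
      else if c = (h.1+1, h.2) then 0 else F c, (h.1+1, h.2)) := by
  have hns : ¬(F (h.1+1,h.2) = 0 ∧ F (h.1,h.2+1) = 0) := fun ⟨a, _⟩ => hr a
  unfold slide
  rw [if_neg hns, if_pos h2]

lemma slide_eq_up {F : Filling} {h : Cell}
    (h2 : ¬(F (h.1, h.2+1) = 0 ∨ (F (h.1+1, h.2) ≠ 0 ∧ F (h.1+1, h.2) < F (h.1, h.2+1))))
    (hu : F (h.1, h.2+1) ≠ 0) :
    slide F h = (fun c => if c = h then F (h.1, h.2+1)
      else if c = (h.1, h.2+1) then 0 else F c, (h.1, h.2+1)) := by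
  have hns : ¬(F (h.1+1,h.2) = 0 ∧ F (h.1,h.2+1) = 0) := fun ⟨_, a⟩ => hu a
  unfold slide
  rw [if_neg hns, if_neg h2]

lemma young_left {lam : Finset Cell} (hY : IsYoung lam) (k : ℕ) :
    ∀ x y : ℕ, (x + k, y) ∈ lam → (x, y) ∈ lam := by
  induction k with
  | zero => intro x y hx; rwa [Nat.add_zero] at hx
  | succ k ih =>
      intro x y hx
      exact ih x y ((hY (x + k) y).1 hx)

lemma young_down {lam : Finset Cell} (hY : IsYoung lam) (k : ℕ) :
    ∀ x y : ℕ, (x, y + k) ∈ lam → (x, y) ∈ lam := by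
  induction k with
  | zero => intro x y hx; rwa [Nat.add_zero] at hx
  | succ k ih =>
      intro x y hx
      exact ih x y ((hY x (y + k)).2 hx)

/-- Hook bound: a cell `(a,b)` of a Young diagram with `n` cells has `a + b < n`. -/
lemma hook_bound {lam : Finset Cell} {n : ℕ} (hY : IsYoung lam) (hcard : lam.card = n)
    {a b : ℕ} (hab : (a, b) ∈ lam) : a + b < n := by
  classical
  set A : Finset Cell := (Finset.range (a+1)).image (fun i => (i, b)) with hA
  set B : Finset Cell := (Finset.range (b+1)).image (fun j => (a, j)) with hB
  have hAcard : A.card = a + 1 := by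
    rw [hA, Finset.card_image_of_injective _ (fun i j hij => by simpa using hij)]
    simp
  have hBcard : B.card = b + 1 := by
    rw [hB, Finset.card_image_of_injective _ (fun i j hij => by simpa using hij)]
    simp
  have hABsub : A ∪ B ⊆ lam := by
    intro c hc
    rcases Finset.mem_union.1 hc with hc | hc
    · obtain ⟨i, hi, rfl⟩ := Finset.mem_image.1 hc
      have : i + (a - i) = a := by have := Finset.mem_range.1 hi; omega
      exact young_left hY (a - i) i b (by rw [this]; exact hab)
    · obtain ⟨j, hj, rfl⟩ := Finset.mem_image.1 hc
      have : j + (b - j) = b := by have := Finset.mem_range.1 hj; omega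
      exact young_down hY (b - j) a j (by rw [this]; exact hab)
  have hint : A ∩ B = {(a, b)} := by
    ext ⟨x, y⟩
    simp only [hA, hB, Finset.mem_inter, Finset.mem_image, Finset.mem_range,
      Finset.mem_singleton, Prod.mk.injEq]
    constructor
    · rintro ⟨⟨i, hi, hix, hiy⟩, ⟨j, hj, hjx, hjy⟩⟩; omega
    · rintro ⟨h1, h2⟩
      refine ⟨⟨a, ?_, ?_, ?_⟩, ⟨b, ?_, ?_, ?_⟩⟩ <;> omega
  have hcardU : (A ∪ B).card = a + b + 1 := by
    have := Finset.card_union_add_card_inter A B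
    rw [hint] at this
    simp only [Finset.card_singleton] at this
    omega
  have := Finset.card_le_card hABsub
  omega
lemma cell_ne {x y u v : ℕ} (h : x ≠ u ∨ y ≠ v) : ((x,y) : Cell) ≠ (u,v) := by
  intro hcon
  rw [Prod.mk.injEq] at hcon
  rcases h with h | h
  · exact h hcon.1
  · exact h hcon.2

lemma existsUnique_comp_equiv {α β : Type*} (e : α ≃ β) {P : β → Prop} (h : ∃! b, P b) :
    ∃! a, P (e a) := by
  obtain ⟨b, hb, hu⟩ := h
  refine ⟨e.symm b, by simpa using hb, fun a ha => ?_⟩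
  have h1 := hu (e a) ha
  have := congrArg e.symm h1
  simpa using this

lemma rslide_eq_left {F : Filling} {h : Cell}
    (h2 : F (h.1, h.2-1) = 0 ∨ (F (h.1-1, h.2) ≠ 0 ∧ F (h.1, h.2-1) < F (h.1-1, h.2)))
    (hl : F (h.1-1, h.2) ≠ 0) :
    rslide F h = (fun c => if c = h then F (h.1-1, h.2)
      else if c = (h.1-1, h.2) then 0 else F c, (h.1-1, h.2)) := by
  unfold rslide
  rw [if_neg (fun hc => hl hc.1), if_pos h2]

lemma rslide_eq_down {F : Filling} {h : Cell}
    (h2 : ¬(F (h.1, h.2-1) = 0 ∨ (F (h.1-1, h.2) ≠ 0 ∧ F (h.1, h.2-1) < F (h.1-1, h.2))))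
    (hd : F (h.1, h.2-1) ≠ 0) :
    rslide F h = (fun c => if c = h then F (h.1, h.2-1)
      else if c = (h.1, h.2-1) then 0 else F c, (h.1, h.2-1)) := by
  unfold rslide
  rw [if_neg (fun hc => hd hc.2), if_neg h2]

lemma slide_inv_right {lam : Finset Cell} {n a b : ℕ} {F : Filling} (hY : IsYoung lam)
    (hI : SInv lam n F (a, b)) (hr : F (a+1, b) ≠ 0)
    (h2 : F (a, b+1) = 0 ∨ (F (a+1, b) ≠ 0 ∧ F (a+1, b) < F (a, b+1))) :
    SInv lam n (slide F (a,b)).1 (slide F (a,b)).2 ∧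
      rstep (slide F (a,b)) = (F, (a,b)) ∧
      (slide F (a,b)).2 = (a+1, b) := by
  classical
  set r := F (a+1, b) with hrdef
  set F' : Filling := fun c => if c = ((a,b) : Cell) then r
      else if c = ((a+1,b) : Cell) then 0 else F c with hF'def
  have hslide : slide F (a,b) = (F', (a+1,b)) := slide_eq_right h2 hr
  have hne1 : ((a+1,b) : Cell) ≠ ((a,b) : Cell) := by simp
  have hF'h : F' (a,b) = r := if_pos rfl
  have hF'h' : F' (a+1,b) = 0 := by
    rw [hF'def]
    simp
  have hF'c : ∀ c : Cell, c ≠ ((a,b):Cell) → c ≠ ((a+1,b):Cell) → F' c = F c := by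
    intro c h1 h2
    rw [hF'def]
    simp only [if_neg h1, if_neg h2]
  have hswap : ∀ c : Cell, F' c = F (Equiv.swap ((a,b):Cell) ((a+1,b):Cell) c) := by
    intro c
    rcases eq_or_ne c ((a,b):Cell) with rfl | hc1
    · rw [Equiv.swap_apply_left, hF'h]
    rcases eq_or_ne c ((a+1,b):Cell) with rfl | hc2
    · rw [Equiv.swap_apply_right, hI.hole, hF'h']
    · rw [Equiv.swap_apply_of_ne_of_ne hc1 hc2, hF'c c hc1 hc2]
  have memb' : ((a+1,b) : Cell) ∈ lam := ((hI.shp _).mp hr).1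
  have hInv' : SInv lam n F' ((a+1,b) : Cell) := by
    refine ⟨hF'h', memb', ?_, ?_, ?_, ?_, ?_, ?_, ?_⟩
    · -- shape
      intro c
      rcases eq_or_ne c ((a,b):Cell) with rfl | hc1
      · rw [hF'h]
        exact ⟨fun _ => ⟨hI.memh, fun hcon => hne1 hcon.symm⟩, fun _ => hr⟩
      rcases eq_or_ne c ((a+1,b):Cell) with rfl | hc2
      · rw [hF'h']
        simp
      · rw [hF'c c hc1 hc2, hI.shp c]
        exact ⟨fun hh => ⟨hh.1, hc2⟩, fun hh => ⟨hh.1, hc1⟩⟩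
    · -- uniq
      intro k h2k hkn
      have h1 := existsUnique_comp_equiv (Equiv.swap ((a,b):Cell) ((a+1,b):Cell))
        (hI.uniq k h2k hkn)
      exact (existsUnique_congr (fun c => by rw [hswap c])).mpr h1
    · -- bounds
      intro c
      rw [hswap c]
      exact hI.bnd _
    · -- row
      intro x y hne
      rcases eq_or_ne ((x+1,y) : Cell) ((a,b):Cell) with e1 | e1
      · rw [Prod.mk.injEq] at e1
        obtain ⟨hx, hy⟩ := e1
        have hxy1 : ((x,y):Cell) ≠ (a,b) := cell_ne (Or.inl (by omega))
        have hxy2 : ((x,y):Cell) ≠ (a+1,b) := cell_ne (Or.inl (by omega))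
        have hax : ((x+1,y):Cell) = (a,b) := by rw [Prod.mk.injEq]; exact ⟨hx, hy⟩
        rw [hax, hF'h, hF'c _ hxy1 hxy2]
        have hax2 : F (a-1, b) < F (a+1, b) := hI.ax hr
        have hcell : ((x,y):Cell) = (a-1, b) := by rw [Prod.mk.injEq]; exact ⟨by omega, hy⟩
        rw [hcell]
        exact hax2
      rcases eq_or_ne ((x+1,y) : Cell) ((a+1,b):Cell) with e2 | e2
      · rw [e2, hF'h'] at hne; exact absurd rfl hne
      rcases eq_or_ne ((x,y) : Cell) ((a,b):Cell) with e3 | e3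
      · exfalso; rw [Prod.mk.injEq] at e3; exact e2 (by simp [e3.1, e3.2])
      rcases eq_or_ne ((x,y) : Cell) ((a+1,b):Cell) with e4 | e4
      · rw [e4, hF'h']
        rw [hF'c _ e1 e2] at hne ⊢
        omega
      · rw [hF'c _ e1 e2] at hne ⊢
        rw [hF'c _ e3 e4]
        exact hI.row x y hne
    · -- col
      intro x y hne
      rcases eq_or_ne ((x,y+1) : Cell) ((a,b):Cell) with e1 | e1
      · rw [Prod.mk.injEq] at e1
        obtain ⟨rfl, hy⟩ := e1
        have hxy1 : ((x,y):Cell) ≠ (x,b) := cell_ne (Or.inr (by omega))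
        have hxy2 : ((x,y):Cell) ≠ (x+1,b) := cell_ne (Or.inl (by omega))
        rw [show ((x,y+1):Cell) = (x,b) by simp [hy], hF'h, hF'c _ hxy1 hxy2]
        have hmem : ((x+1, y) : Cell) ∈ lam := by
          have h5 := (hY (x+1) y).2
          rw [hy] at h5
          exact h5 memb'
        have hne' : F (x+1, y) ≠ 0 := (hI.shp _).mpr ⟨hmem, cell_ne (Or.inl (by omega))⟩
        have s1 : F (x, y) < F (x+1, y) := hI.row x y hne'
        have s2 : F (x+1, y) < F (x+1, y+1) := hI.col (x+1) y (by rw [hy]; exact hr)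
        rw [hy] at s2
        omega
      rcases eq_or_ne ((x,y+1) : Cell) ((a+1,b):Cell) with e2 | e2
      · rw [e2, hF'h'] at hne; exact absurd rfl hne
      rcases eq_or_ne ((x,y) : Cell) ((a,b):Cell) with e3 | e3
      · rw [Prod.mk.injEq] at e3
        obtain ⟨rfl, rfl⟩ := e3
        rw [hF'c _ e1 e2] at hne ⊢
        rw [hF'h]
        rcases h2 with h2 | h2
        · exact absurd h2 hne
        · exact h2.2
      rcases eq_or_ne ((x,y) : Cell) ((a+1,b):Cell) with e4 | e4
      · rw [e4, hF'h']
        rw [hF'c _ e1 e2] at hne ⊢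
        omega
      · rw [hF'c _ e1 e2] at hne ⊢
        rw [hF'c _ e3 e4]
        exact hI.col x y hne
    · -- ax at new hole (a+1,b)
      intro hne
      replace hne : F' (a+2, b) ≠ 0 := hne
      show F' (a, b) < F' (a+2, b)
      have q1 : ((a+2, b) : Cell) ≠ (a,b) := by simp
      have q2 : ((a+2, b) : Cell) ≠ (a+1,b) := by simp
      rw [hF'c _ q1 q2] at hne ⊢
      rw [hF'h]
      exact hI.row (a+1) b hne
    · -- ay at new hole (a+1,b)
      intro hne
      replace hne : F' (a+1, b+1) ≠ 0 := hne
      show F' (a+1, b-1) < F' (a+1, b+1)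
      have q1 : ((a+1, b+1) : Cell) ≠ (a,b) := by simp
      have q2 : ((a+1, b+1) : Cell) ≠ (a+1,b) := by simp
      rw [hF'c _ q1 q2] at hne ⊢
      rcases Nat.eq_zero_or_pos b with rfl | hb
      · have e0 : ((a+1, 0-1) : Cell) = (a+1, 0) := rfl
        rw [e0, hF'h']
        omega
      · have q3 : ((a+1, b-1) : Cell) ≠ (a,b) := cell_ne (Or.inl (by omega))
        have q4 : ((a+1, b-1) : Cell) ≠ (a+1,b) := cell_ne (Or.inr (by omega))
        rw [hF'c _ q3 q4]
        have s1 : F (a+1, b-1) < F (a+1, b) := by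
          have h5 := hI.col (a+1) (b-1) (by rw [show b - 1 + 1 = b by omega]; exact hr)
          rwa [show b - 1 + 1 = b by omega] at h5
        have s2 : F (a+1, b) < F (a+1, b+1) := hI.col (a+1) b hne
        omega
  have hd : F' (a+1, b-1) = 0 ∨ (F' (a+1, b-1) ≠ 0 ∧ F' (a+1, b-1) < r) := by
    rcases Nat.eq_zero_or_pos b with rfl | hb
    · left; exact hF'h'
    · have q3 : ((a+1, b-1) : Cell) ≠ (a,b) := cell_ne (Or.inl (by omega))
      have q4 : ((a+1, b-1) : Cell) ≠ (a+1,b) := cell_ne (Or.inr (by omega))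
      rw [hF'c _ q3 q4]
      rcases eq_or_ne (F (a+1, b-1)) 0 with hz | hz
      · left; exact hz
      · right
        refine ⟨hz, ?_⟩
        have h5 := hI.col (a+1) (b-1) (by rw [show b - 1 + 1 = b by omega]; exact hr)
        rwa [show b - 1 + 1 = b by omega] at h5
  have hlne : F' (a+1-1, b) ≠ 0 := by
    show F' (a, b) ≠ 0
    rw [hF'h]; exact hr
  have hcond2 : F' (((a+1,b):Cell).1, ((a+1,b):Cell).2 - 1) = 0 ∨
      (F' (((a+1,b):Cell).1 - 1, ((a+1,b):Cell).2) ≠ 0 ∧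
        F' (((a+1,b):Cell).1, ((a+1,b):Cell).2 - 1) < F' (((a+1,b):Cell).1 - 1, ((a+1,b):Cell).2)) := by
    show F' (a+1, b-1) = 0 ∨ (F' (a+1-1, b) ≠ 0 ∧ F' (a+1, b-1) < F' (a+1-1, b))
    have hlv : F' (a+1-1, b) = r := hF'h
    rcases hd with hd | hd
    · left; exact hd
    · right
      refine ⟨hlne, ?_⟩
      rw [hlv]
      exact hd.2
  have hrev : rslide F' ((a+1,b) : Cell) = (F, ((a,b) : Cell)) := by
    rw [rslide_eq_left hcond2 hlne]
    refine Prod.ext ?_ rfl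
    funext c
    show (if c = ((a+1,b):Cell) then F' (a+1-1, b)
      else if c = ((a+1-1, b) : Cell) then 0 else F' c) = F c
    rcases eq_or_ne c ((a+1,b):Cell) with rfl | hc1
    · rw [if_pos rfl]
      exact hF'h
    rcases eq_or_ne c ((a,b):Cell) with rfl | hc2
    · rw [if_neg hc1, if_pos (show ((a,b):Cell) = (a+1-1, b) from rfl), hI.hole]
    · rw [if_neg hc1, if_neg (fun hcon => hc2 (hcon.trans rfl)), hF'c c hc2 hc1]
  refine ⟨?_, ?_, ?_⟩
  · rw [hslide]; exact hInv'
  · rw [hslide]; exact hrev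
  · rw [hslide]
lemma slide_inv_up {lam : Finset Cell} {n a b : ℕ} {F : Filling} (hY : IsYoung lam)
    (hI : SInv lam n F (a, b)) (hu : F (a, b+1) ≠ 0)
    (h2 : ¬(F (a, b+1) = 0 ∨ (F (a+1, b) ≠ 0 ∧ F (a+1, b) < F (a, b+1)))) :
    SInv lam n (slide F (a,b)).1 (slide F (a,b)).2 ∧
      rstep (slide F (a,b)) = (F, (a,b)) ∧
      (slide F (a,b)).2 = (a, b+1) := by
  classical
  set u := F (a, b+1) with hudef
  set F' : Filling := fun c => if c = ((a,b) : Cell) then u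
      else if c = ((a,b+1) : Cell) then 0 else F c with hF'def
  have hslide : slide F (a,b) = (F', (a,b+1)) := slide_eq_up h2 hu
  have hne1 : ((a,b+1) : Cell) ≠ ((a,b) : Cell) := cell_ne (Or.inr (by omega))
  have hF'h : F' (a,b) = u := if_pos rfl
  have hF'h' : F' (a,b+1) = 0 := by
    rw [hF'def]
    simp
  have hF'c : ∀ c : Cell, c ≠ ((a,b):Cell) → c ≠ ((a,b+1):Cell) → F' c = F c := by
    intro c h1 h2
    rw [hF'def]
    simp only [if_neg h1, if_neg h2]
  have hur : F (a+1, b) ≠ 0 → u < F (a+1, b) := by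
    intro hr
    push_neg at h2
    have hle : u ≤ F (a+1, b) := by
      have h5 := h2.2 hr
      omega
    have hneq : u ≠ F (a+1, b) := by
      intro hcon
      have h6 := hI.distinct hu hcon
      rw [Prod.mk.injEq] at h6
      omega
    omega
  have hswap : ∀ c : Cell, F' c = F (Equiv.swap ((a,b):Cell) ((a,b+1):Cell) c) := by
    intro c
    rcases eq_or_ne c ((a,b):Cell) with rfl | hc1
    · rw [Equiv.swap_apply_left, hF'h]
    rcases eq_or_ne c ((a,b+1):Cell) with rfl | hc2
    · rw [Equiv.swap_apply_right, hI.hole, hF'h']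
    · rw [Equiv.swap_apply_of_ne_of_ne hc1 hc2, hF'c c hc1 hc2]
  have memb' : ((a,b+1) : Cell) ∈ lam := ((hI.shp _).mp hu).1
  have hInv' : SInv lam n F' ((a,b+1) : Cell) := by
    refine ⟨hF'h', memb', ?_, ?_, ?_, ?_, ?_, ?_, ?_⟩
    · -- shape
      intro c
      rcases eq_or_ne c ((a,b):Cell) with rfl | hc1
      · rw [hF'h]
        exact ⟨fun _ => ⟨hI.memh, fun hcon => hne1 hcon.symm⟩, fun _ => hu⟩
      rcases eq_or_ne c ((a,b+1):Cell) with rfl | hc2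
      · rw [hF'h']
        simp
      · rw [hF'c c hc1 hc2, hI.shp c]
        exact ⟨fun hh => ⟨hh.1, hc2⟩, fun hh => ⟨hh.1, hc1⟩⟩
    · -- uniq
      intro k h2k hkn
      have h1 := existsUnique_comp_equiv (Equiv.swap ((a,b):Cell) ((a,b+1):Cell))
        (hI.uniq k h2k hkn)
      exact (existsUnique_congr (fun c => by rw [hswap c])).mpr h1
    · -- bounds
      intro c
      rw [hswap c]
      exact hI.bnd _
    · -- row
      intro x y hne
      rcases eq_or_ne ((x+1,y) : Cell) ((a,b):Cell) with e1 | e1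
      · rw [Prod.mk.injEq] at e1
        obtain ⟨hx, hy⟩ := e1
        have hxy1 : ((x,y):Cell) ≠ (a,b) := cell_ne (Or.inl (by omega))
        have hxy2 : ((x,y):Cell) ≠ (a,b+1) := cell_ne (Or.inl (by omega))
        have hcell2 : ((x+1, y+1):Cell) = (a, b+1) := by
          rw [Prod.mk.injEq]; exact ⟨hx, by omega⟩
        rw [show ((x+1,y):Cell) = (a,b) by rw [Prod.mk.injEq]; exact ⟨hx, hy⟩,
          hF'h, hF'c _ hxy1 hxy2]
        have hmem : ((x, y+1) : Cell) ∈ lam := by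
          have h5 := (hY x (y+1)).1
          rw [hcell2] at h5
          exact h5 memb'
        have hne' : F (x, y+1) ≠ 0 := (hI.shp _).mpr ⟨hmem, cell_ne (Or.inr (by omega))⟩
        have s1 : F (x, y) < F (x, y+1) := hI.col x y hne'
        have s2 : F (x, y+1) < u := by
          have h6 := hI.row x (y+1) (by rw [hcell2]; exact hu)
          rwa [hcell2] at h6
        omega
      rcases eq_or_ne ((x+1,y) : Cell) ((a,b+1):Cell) with e2 | e2
      · rw [e2, hF'h'] at hne; exact absurd rfl hne
      rcases eq_or_ne ((x,y) : Cell) ((a,b):Cell) with e3 | e3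
      · rw [Prod.mk.injEq] at e3
        obtain ⟨hx, hy⟩ := e3
        have hcell3 : ((x+1, y):Cell) = (a+1, b) := by
          rw [Prod.mk.injEq]; exact ⟨by omega, hy⟩
        rw [show ((x,y):Cell) = (a,b) by rw [Prod.mk.injEq]; exact ⟨hx, hy⟩, hF'h]
        rw [hF'c _ e1 e2, hcell3] at hne ⊢
        exact hur hne
      rcases eq_or_ne ((x,y) : Cell) ((a,b+1):Cell) with e4 | e4
      · rw [e4, hF'h']
        rw [hF'c _ e1 e2] at hne ⊢
        omega
      · rw [hF'c _ e1 e2] at hne ⊢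
        rw [hF'c _ e3 e4]
        exact hI.row x y hne
    · -- col
      intro x y hne
      rcases eq_or_ne ((x,y+1) : Cell) ((a,b):Cell) with e1 | e1
      · rw [Prod.mk.injEq] at e1
        obtain ⟨hx, hy⟩ := e1
        have hxy1 : ((x,y):Cell) ≠ (a,b) := cell_ne (Or.inr (by omega))
        have hxy2 : ((x,y):Cell) ≠ (a,b+1) := cell_ne (Or.inr (by omega))
        rw [show ((x,y+1):Cell) = (a,b) by rw [Prod.mk.injEq]; exact ⟨hx, hy⟩,
          hF'h, hF'c _ hxy1 hxy2]
        have hay2 : F (a, b-1) < u := hI.ay hu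
        have hcell : ((x,y):Cell) = (a, b-1) := by
          rw [Prod.mk.injEq]; exact ⟨hx, by omega⟩
        rw [hcell]
        exact hay2
      rcases eq_or_ne ((x,y+1) : Cell) ((a,b+1):Cell) with e2 | e2
      · rw [e2, hF'h'] at hne; exact absurd rfl hne
      rcases eq_or_ne ((x,y) : Cell) ((a,b):Cell) with e3 | e3
      · exfalso
        rw [Prod.mk.injEq] at e3
        exact e2 (by rw [Prod.mk.injEq]; exact ⟨e3.1, by omega⟩)
      rcases eq_or_ne ((x,y) : Cell) ((a,b+1):Cell) with e4 | e4
      · rw [e4, hF'h']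
        rw [hF'c _ e1 e2] at hne ⊢
        omega
      · rw [hF'c _ e1 e2] at hne ⊢
        rw [hF'c _ e3 e4]
        exact hI.col x y hne
    · -- ax at new hole (a,b+1)
      intro hne
      replace hne : F' (a+1, b+1) ≠ 0 := hne
      show F' (a-1, b+1) < F' (a+1, b+1)
      have q1 : ((a+1, b+1) : Cell) ≠ (a,b) := cell_ne (Or.inl (by omega))
      have q2 : ((a+1, b+1) : Cell) ≠ (a,b+1) := cell_ne (Or.inl (by omega))
      rw [hF'c _ q1 q2] at hne ⊢
      rcases Nat.eq_zero_or_pos a with rfl | ha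
      · have e0 : ((0-1, b+1) : Cell) = (0, b+1) := rfl
        rw [e0, hF'h']
        omega
      · have q3 : ((a-1, b+1) : Cell) ≠ (a,b) := cell_ne (Or.inl (by omega))
        have q4 : ((a-1, b+1) : Cell) ≠ (a,b+1) := cell_ne (Or.inl (by omega))
        rw [hF'c _ q3 q4]
        have s1 : F (a-1, b+1) < u := by
          have h6 := hI.row (a-1) (b+1) (by rw [show a - 1 + 1 = a by omega]; exact hu)
          rwa [show a - 1 + 1 = a by omega] at h6
        have s2 : u < F (a+1, b+1) := hI.row a (b+1) hne
        omega
    · -- ay at new hole (a,b+1)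
      intro hne
      replace hne : F' (a, b+1+1) ≠ 0 := hne
      show F' (a, b) < F' (a, b+1+1)
      have q1 : ((a, b+1+1) : Cell) ≠ (a,b) := cell_ne (Or.inr (by omega))
      have q2 : ((a, b+1+1) : Cell) ≠ (a,b+1) := cell_ne (Or.inr (by omega))
      rw [hF'c _ q1 q2] at hne ⊢
      rw [hF'h]
      exact hI.col a (b+1) hne
  -- reverse step
  have hdv : F' (a, b+1-1) = u := hF'h
  have hdne : F' (a, b+1-1) ≠ 0 := by
    rw [hdv]; exact hu
  have hl : F' (a-1, b+1) = 0 ∨ (F' (a-1, b+1) ≠ 0 ∧ F' (a-1, b+1) < u) := by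
    rcases Nat.eq_zero_or_pos a with rfl | ha
    · left
      exact hF'h'
    · have q3 : ((a-1, b+1) : Cell) ≠ (a,b) := cell_ne (Or.inl (by omega))
      have q4 : ((a-1, b+1) : Cell) ≠ (a,b+1) := cell_ne (Or.inl (by omega))
      rw [hF'c _ q3 q4]
      rcases eq_or_ne (F (a-1, b+1)) 0 with hz | hz
      · left; exact hz
      · right
        refine ⟨hz, ?_⟩
        have h6 := hI.row (a-1) (b+1) (by rw [show a - 1 + 1 = a by omega]; exact hu)
        rwa [show a - 1 + 1 = a by omega] at h6
  have hcond2 : ¬(F' (((a,b+1):Cell).1, ((a,b+1):Cell).2 - 1) = 0 ∨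
      (F' (((a,b+1):Cell).1 - 1, ((a,b+1):Cell).2) ≠ 0 ∧
        F' (((a,b+1):Cell).1, ((a,b+1):Cell).2 - 1) < F' (((a,b+1):Cell).1 - 1, ((a,b+1):Cell).2))) := by
    show ¬(F' (a, b+1-1) = 0 ∨ (F' (a-1, b+1) ≠ 0 ∧ F' (a, b+1-1) < F' (a-1, b+1)))
    rintro (hc | hc)
    · exact hdne hc
    · obtain ⟨hc1, hc2⟩ := hc
      rw [hdv] at hc2
      rcases hl with hl | hl
      · exact hc1 hl
      · omega
  have hrev : rslide F' ((a,b+1) : Cell) = (F, ((a,b) : Cell)) := by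
    rw [rslide_eq_down hcond2 hdne]
    refine Prod.ext ?_ rfl
    funext c
    show (if c = ((a,b+1):Cell) then F' (a, b+1-1)
      else if c = ((a, b+1-1) : Cell) then 0 else F' c) = F c
    rcases eq_or_ne c ((a,b+1):Cell) with rfl | hc1
    · rw [if_pos rfl]
      exact hdv
    rcases eq_or_ne c ((a,b):Cell) with rfl | hc2
    · rw [if_neg hc1, if_pos (show ((a,b):Cell) = (a, b+1-1) from rfl)]
      exact hI.hole.symm
    · rw [if_neg hc1, if_neg (fun hcon => hc2 (hcon.trans rfl)), hF'c c hc2 hc1]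
  refine ⟨?_, ?_, ?_⟩
  · rw [hslide]; exact hInv'
  · rw [hslide]; exact hrev
  · rw [hslide]
lemma slide_inv {lam : Finset Cell} {n : ℕ} {F : Filling} {h : Cell} (hY : IsYoung lam)
    (hI : SInv lam n F h) (hns : ¬(F (h.1+1,h.2) = 0 ∧ F (h.1,h.2+1) = 0)) :
    SInv lam n (slide F h).1 (slide F h).2 ∧ rstep (slide F h) = (F, h) ∧
      (slide F h).2.1 + (slide F h).2.2 = h.1 + h.2 + 1 := by
  obtain ⟨a, b⟩ := h
  by_cases h2 : F (a,b+1) = 0 ∨ (F (a+1,b) ≠ 0 ∧ F (a+1,b) < F (a,b+1))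
  · have hr : F (a+1,b) ≠ 0 := by
      rcases h2 with h2 | h2
      · exact fun hc => hns ⟨hc, h2⟩
      · exact h2.1
    obtain ⟨i, rv, e⟩ := slide_inv_right hY hI hr h2
    refine ⟨i, rv, ?_⟩
    rw [e]
    show a + 1 + b = a + b + 1
    omega
  · have hu : F (a,b+1) ≠ 0 := fun hc => h2 (Or.inl hc)
    obtain ⟨i, rv, e⟩ := slide_inv_up hY hI hu h2
    refine ⟨i, rv, ?_⟩
    rw [e]
    show a + (b + 1) = a + b + 1
    omega

lemma slideIter_term {lam : Finset Cell} {n : ℕ} (hY : IsYoung lam) (hcard : lam.card = n) :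
    ∀ (fuel : ℕ) (F : Filling) (h : Cell), SInv lam n F h → n ≤ fuel + h.1 + h.2 →
    SInv lam n (slideIter fuel F h).1 (slideIter fuel F h).2 ∧
    (slideIter fuel F h).1 ((slideIter fuel F h).2.1 + 1, (slideIter fuel F h).2.2) = 0 ∧
    (slideIter fuel F h).1 ((slideIter fuel F h).2.1, (slideIter fuel F h).2.2 + 1) = 0 ∧
    h.1 + h.2 ≤ (slideIter fuel F h).2.1 + (slideIter fuel F h).2.2 ∧
    rstep^[(slideIter fuel F h).2.1 + (slideIter fuel F h).2.2 - (h.1 + h.2)]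
      (slideIter fuel F h) = (F, h) := by
  intro fuel
  induction fuel with
  | zero =>
      intro F h hI hn
      have hstop : F (h.1+1,h.2) = 0 ∧ F (h.1,h.2+1) = 0 := by
        constructor
        · by_contra hc
          have hm : ((h.1+1, h.2) : Cell) ∈ lam := ((hI.shp _).mp hc).1
          have := hook_bound hY hcard hm
          omega
        · by_contra hc
          have hm : ((h.1, h.2+1) : Cell) ∈ lam := ((hI.shp _).mp hc).1
          have := hook_bound hY hcard hm
          omega
      simp only [slideIter]
      exact ⟨hI, hstop.1, hstop.2, le_refl _, by simp⟩
  | succ fuel ih =>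
      intro F h hI hn
      by_cases hstop : F (h.1+1,h.2) = 0 ∧ F (h.1,h.2+1) = 0
      · have heq : slideIter (fuel+1) F h = (F, h) := by
          simp only [slideIter, if_pos hstop]
        rw [heq]
        exact ⟨hI, hstop.1, hstop.2, le_refl _, by simp⟩
      · obtain ⟨hI', hrev, hsum⟩ := slide_inv hY hI hstop
        have heq : slideIter (fuel+1) F h = slideIter fuel (slide F h).1 (slide F h).2 := by
          simp only [slideIter, if_neg hstop]
        obtain ⟨i1, z1, z2, mono, rec⟩ := ih (slide F h).1 (slide F h).2 hI' (by omega)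
        rw [heq]
        refine ⟨i1, z1, z2, by omega, ?_⟩
        have hexp : (slideIter fuel (slide F h).1 (slide F h).2).2.1 +
            (slideIter fuel (slide F h).1 (slide F h).2).2.2 - (h.1 + h.2) =
            ((slideIter fuel (slide F h).1 (slide F h).2).2.1 +
            (slideIter fuel (slide F h).1 (slide F h).2).2.2 -
            ((slide F h).2.1 + (slide F h).2.2)) + 1 := by omega
        rw [hexp, Function.iterate_succ_apply', rec]
        rw [← hrev]
lemma syt_corner {lam : Finset Cell} {n : ℕ} {F : Filling} (hn : 1 ≤ n)
    (hcard : lam.card = n) (hF : IsSYTof F lam) : F (0,0) = 1 := by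
  obtain ⟨⟨u1, u2, u3, u4, u5, u6⟩, hshape⟩ := hF
  rw [hcard] at u1
  obtain ⟨c1, hc1, huq⟩ := u1 1 one_pos hn
  obtain ⟨x, y⟩ := c1
  have hx : x = 0 := by
    rcases Nat.eq_zero_or_pos x with rfl | hx
    · rfl
    · exfalso
      have hxx : x - 1 + 1 = x := by omega
      have h5 := u5 (x-1) y (by rw [hxx, hc1]; omega)
      have h3 := u3 (x-1) y (by rw [hxx, hc1]; omega)
      rw [hxx, hc1] at h5
      omega
  have hy : y = 0 := by
    rcases Nat.eq_zero_or_pos y with rfl | hy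
    · rfl
    · exfalso
      have hyy : y - 1 + 1 = y := by omega
      have h6 := u6 x (y-1) (by rw [hyy, hc1]; omega)
      have h4 := u4 x (y-1) (by rw [hyy, hc1]; omega)
      rw [hyy, hc1] at h6
      omega
  rw [hx, hy] at hc1
  exact hc1

lemma inv_init {lam : Finset Cell} {n : ℕ} {F : Filling} (hn : 1 ≤ n)
    (hcard : lam.card = n) (hF : IsSYTof F lam) :
    SInv lam n (fun c => if c = ((0,0):Cell) then 0 else F c) (0,0) := by
  classical
  have hcor := syt_corner hn hcard hF
  obtain ⟨⟨u1, u2, u3, u4, u5, u6⟩, hshape⟩ := hF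
  rw [hcard] at u1 u2
  obtain ⟨c1, hc1, huq⟩ := u1 1 one_pos hn
  have hc10 : c1 = ((0,0) : Cell) := ((huq (0,0) hcor)).symm
  set F0 : Filling := fun c => if c = ((0,0):Cell) then 0 else F c with hF0
  have e0 : F0 (0,0) = 0 := if_pos rfl
  have ec : ∀ c : Cell, c ≠ ((0,0):Cell) → F0 c = F c := fun c hc => if_neg hc
  refine ⟨e0, ?_, ?_, ?_, ?_, ?_, ?_, ?_, ?_⟩
  · exact (hshape (0,0)).mpr (by rw [hcor]; omega)
  · intro c
    rcases eq_or_ne c ((0,0):Cell) with rfl | hc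
    · rw [e0]
      simp
    · rw [ec c hc, ← hshape c]
      exact ⟨fun hh => ⟨hh, hc⟩, fun hh => hh.1⟩
  · intro k h2k hkn
    obtain ⟨c, hc, hu⟩ := u1 k (by omega) hkn
    have hcne : c ≠ ((0,0):Cell) := by
      intro hcon
      rw [hcon, hcor] at hc
      omega
    refine ⟨c, by show F0 c = k; rw [ec c hcne]; exact hc, ?_⟩
    intro c' hc'
    replace hc' : F0 c' = k := hc'
    have hc'ne : c' ≠ ((0,0):Cell) := by
      intro hcon
      rw [hcon, e0] at hc'
      omega
    rw [ec c' hc'ne] at hc'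
    exact hu c' hc'
  · intro c
    rcases eq_or_ne c ((0,0):Cell) with rfl | hc
    · rw [e0]
      omega
    · rw [ec c hc]
      refine ⟨(u2 c).1, ?_⟩
      rcases (u2 c).2 with h0 | hpos
      · exact Or.inl h0
      · right
        rcases Nat.lt_or_ge (F c) 2 with hlt | hge
        · exfalso
          have hfc : F c = 1 := by omega
          have h7 := huq c hfc
          rw [hc10] at h7
          exact hc h7
        · exact hge
  · intro x y hne
    have hxy1 : ((x+1,y) : Cell) ≠ (0,0) := cell_ne (Or.inl (by omega))
    rw [ec _ hxy1] at hne ⊢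
    rcases eq_or_ne ((x,y):Cell) ((0,0):Cell) with e | e
    · rw [e, e0]; omega
    · rw [ec _ e]; exact u5 x y hne
  · intro x y hne
    have hxy1 : ((x,y+1) : Cell) ≠ (0,0) := cell_ne (Or.inr (by omega))
    rw [ec _ hxy1] at hne ⊢
    rcases eq_or_ne ((x,y):Cell) ((0,0):Cell) with e | e
    · rw [e, e0]; omega
    · rw [ec _ e]; exact u6 x y hne
  · intro hne
    replace hne : F0 (0+1, 0) ≠ 0 := hne
    show F0 (0-1, 0) < F0 (0+1, 0)
    have e1 : ((0-1, 0) : Cell) = (0, 0) := rfl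
    rw [e1, e0]
    omega
  · intro hne
    replace hne : F0 (0, 0+1) ≠ 0 := hne
    show F0 (0, 0-1) < F0 (0, 0+1)
    have e1 : ((0, 0-1) : Cell) = (0, 0) := rfl
    rw [e1, e0]
    omega
lemma jdt_main {lam : Finset Cell} {n : ℕ} {F : Filling} (hY : IsYoung lam)
    (hcard : lam.card = n) (hn : 1 ≤ n) (hF : IsSYTof F lam) :
    SInv lam n (jdtAux n F).1 (jdtAux n F).2 ∧
    (jdtAux n F).1 ((jdtAux n F).2.1+1, (jdtAux n F).2.2) = 0 ∧
    (jdtAux n F).1 ((jdtAux n F).2.1, (jdtAux n F).2.2+1) = 0 ∧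
    rstep^[(jdtAux n F).2.1+(jdtAux n F).2.2] (jdtAux n F)
      = (fun c => if c = ((0,0):Cell) then 0 else F c, (0,0)) ∧
    IsSYTof (Jmod n F) lam := by
  classical
  have hI0 := inv_init hn hcard hF
  have hmain := slideIter_term hY hcard n _ ((0,0):Cell) hI0 (by simp)
  have hP : jdtAux n F
      = slideIter n (fun c => if c = ((0,0):Cell) then 0 else F c) ((0,0):Cell) := rfl
  rw [← hP] at hmain
  obtain ⟨i1, z1, z2, mono, rec⟩ := hmain
  simp only [Nat.sub_zero] at rec
  refine ⟨i1, z1, z2, by simpa using rec, ?_⟩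
  -- now show Jmod n F is an SYT of shape lam
  set G' : Filling := fun c => if c = (jdtAux n F).2 then n+1 else (jdtAux n F).1 c
    with hG'def
  have hJG : ∀ c, Jmod n F c = G' c - 1 := fun c => rfl
  have gh : G' ((jdtAux n F).2) = n + 1 := if_pos rfl
  have gc : ∀ c, c ≠ (jdtAux n F).2 → G' c = (jdtAux n F).1 c := fun c hc => if_neg hc
  have gbnd : ∀ c, G' c ≤ n + 1 := by
    intro c
    rcases eq_or_ne c ((jdtAux n F).2) with rfl | hc
    · rw [gh]
    · rw [gc c hc]
      have := (i1.bnd c).1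
      omega
  have gpos : ∀ c, G' c = 0 ∨ 2 ≤ G' c := by
    intro c
    rcases eq_or_ne c ((jdtAux n F).2) with rfl | hc
    · rw [gh]; omega
    · rw [gc c hc]; exact (i1.bnd c).2
  have gshape : ∀ c, G' c ≠ 0 ↔ c ∈ lam := by
    intro c
    rcases eq_or_ne c ((jdtAux n F).2) with rfl | hc
    · rw [gh]
      exact ⟨fun _ => i1.memh, fun _ => by omega⟩
    · rw [gc c hc, i1.shp c]
      exact ⟨fun hh => hh.1, fun hh => ⟨hh, hc⟩⟩
  have grow : ∀ x y : ℕ, G' (x+1,y) ≠ 0 → G' (x,y) < G' (x+1,y) := by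
    intro x y hne
    rcases eq_or_ne ((x+1,y):Cell) ((jdtAux n F).2) with e1 | e1
    · have e2 : ((x,y):Cell) ≠ (jdtAux n F).2 := by
        rw [← e1]; simp
      rw [e1, gh, gc _ e2]
      have := (i1.bnd (x,y)).1
      omega
    · rw [gc _ e1] at hne ⊢
      rcases eq_or_ne ((x,y):Cell) ((jdtAux n F).2) with e2 | e2
      · exfalso
        have e3 : ((x+1,y):Cell) = ((jdtAux n F).2.1+1, (jdtAux n F).2.2) := by
          rw [← e2]
        rw [e3, z1] at hne
        exact hne rfl
      · rw [gc _ e2]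
        exact i1.row x y hne
  have gcol : ∀ x y : ℕ, G' (x,y+1) ≠ 0 → G' (x,y) < G' (x,y+1) := by
    intro x y hne
    rcases eq_or_ne ((x,y+1):Cell) ((jdtAux n F).2) with e1 | e1
    · have e2 : ((x,y):Cell) ≠ (jdtAux n F).2 := by
        rw [← e1]; simp
      rw [e1, gh, gc _ e2]
      have := (i1.bnd (x,y)).1
      omega
    · rw [gc _ e1] at hne ⊢
      rcases eq_or_ne ((x,y):Cell) ((jdtAux n F).2) with e2 | e2
      · exfalso
        have e3 : ((x,y+1):Cell) = ((jdtAux n F).2.1, (jdtAux n F).2.2+1) := by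
          rw [← e2]
        rw [e3, z2] at hne
        exact hne rfl
      · rw [gc _ e2]
        exact i1.col x y hne
  constructor
  · rw [hcard]
    refine ⟨?_, ?_, ?_, ?_, ?_, ?_⟩
    · intro k hk0 hkn
      rcases eq_or_lt_of_le hkn with heq | hklt
      · refine ⟨(jdtAux n F).2, ?_, ?_⟩
        · show Jmod n F (jdtAux n F).2 = k
          simp only [hJG, gh]
          omega
        · intro c' hc'
          replace hc' : Jmod n F c' = k := hc'
          simp only [hJG] at hc'
          by_contra hcon
          rw [gc _ hcon] at hc'
          have hb := (i1.bnd c').1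
          have hb2 := (i1.bnd c').2
          omega
      · obtain ⟨c, hc, hu⟩ := i1.uniq (k+1) (by omega) (by omega)
        have hcne : c ≠ (jdtAux n F).2 := by
          intro hcon
          rw [hcon, i1.hole] at hc
          omega
        refine ⟨c, ?_, ?_⟩
        · show Jmod n F c = k
          simp only [hJG]; rw [gc _ hcne, hc]
          omega
        · intro c' hc'
          replace hc' : Jmod n F c' = k := hc'
          simp only [hJG] at hc'
          have hg2 : 2 ≤ G' c' := by
            rcases gpos c' with h0 | h2
            · omega
            · exact h2
          have hgk : G' c' = k + 1 := by omega
          have hc'ne : c' ≠ (jdtAux n F).2 := by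
            intro hcon
            rw [hcon, gh] at hgk
            omega
          rw [gc _ hc'ne] at hgk
          exact hu c' hgk
    · intro c
      simp only [hJG]
      have := gbnd c
      omega
    · intro x y hne
      simp only [hJG] at hne ⊢
      have h2 : 2 ≤ G' (x+1,y) := by rcases gpos (x+1,y) with h0 | h2; omega; exact h2
      have hmem : ((x+1,y):Cell) ∈ lam := (gshape _).mp (by omega)
      have hmem2 : ((x,y):Cell) ∈ lam := (hY x y).1 hmem
      have := (gshape (x,y)).mpr hmem2
      rcases gpos (x,y) with h0 | h2'
      · omega
      · omega
    · intro x y hne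
      simp only [hJG] at hne ⊢
      have h2 : 2 ≤ G' (x,y+1) := by rcases gpos (x,y+1) with h0 | h2; omega; exact h2
      have hmem : ((x,y+1):Cell) ∈ lam := (gshape _).mp (by omega)
      have hmem2 : ((x,y):Cell) ∈ lam := (hY x y).2 hmem
      have := (gshape (x,y)).mpr hmem2
      rcases gpos (x,y) with h0 | h2'
      · omega
      · omega
    · intro x y hne
      simp only [hJG] at hne ⊢
      have h2 : 2 ≤ G' (x+1,y) := by rcases gpos (x+1,y) with h0 | h2; omega; exact h2
      have := grow x y (by omega)
      omega
    · intro x y hne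
      simp only [hJG] at hne ⊢
      have h2 : 2 ≤ G' (x,y+1) := by rcases gpos (x,y+1) with h0 | h2; omega; exact h2
      have := gcol x y (by omega)
      omega
  · intro c
    rw [← gshape c]
    simp only [hJG]
    rcases gpos c with h0 | h2
    · constructor <;> intro hh <;> omega
    · constructor <;> intro hh <;> omega
lemma syt_finite {lam : Finset Cell} {n : ℕ} (hcard : lam.card = n) :
    {F : Filling | IsSYTof F lam}.Finite := by
  classical
  set Φ : Filling → ({x // x ∈ lam} → Fin (n+1)) :=
    fun F c => ⟨F c.1 % (n+1), Nat.mod_lt _ (by omega)⟩ with hΦ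
  apply Set.Finite.of_finite_image (f := Φ)
  · exact Set.Finite.subset Set.finite_univ (Set.subset_univ _)
  · intro F hF G hG hFG
    have hFb : ∀ c, F c ≤ n := by
      intro c
      have := (hF.1.2.1 c).1
      omega
    have hGb : ∀ c, G c ≤ n := by
      intro c
      have := (hG.1.2.1 c).1
      omega
    funext c
    by_cases hc : c ∈ lam
    · have := congrFun hFG ⟨c, hc⟩
      rw [hΦ] at this
      simp only [Fin.mk.injEq] at this
      rwa [Nat.mod_eq_of_lt (by have := hFb c; omega),
        Nat.mod_eq_of_lt (by have := hGb c; omega)] at this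
    · have h1 : F c = 0 := by
        by_contra hcon
        exact hc ((hF.2 c).mpr hcon)
      have h2 : G c = 0 := by
        by_contra hcon
        exact hc ((hG.2 c).mpr hcon)
      rw [h1, h2]

lemma jmod_injOn {lam : Finset Cell} {n : ℕ} (hY : IsYoung lam) (hcard : lam.card = n)
    (hn : 1 ≤ n) :
    Set.InjOn (Jmod n) {F : Filling | IsSYTof F lam} := by
  intro F hF G hG hFG
  obtain ⟨iF, zF1, zF2, recF, sytF⟩ := jdt_main hY hcard hn hF
  obtain ⟨iG, zG1, zG2, recG, sytG⟩ := jdt_main hY hcard hn hG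
  -- the final hole positions agree
  have hJF : ∀ c, Jmod n F c = (if c = (jdtAux n F).2 then n+1 else (jdtAux n F).1 c) - 1 :=
    fun c => rfl
  have hJG : ∀ c, Jmod n G c = (if c = (jdtAux n G).2 then n+1 else (jdtAux n G).1 c) - 1 :=
    fun c => rfl
  have hvF : Jmod n F (jdtAux n F).2 = n := by rw [hJF, if_pos rfl]; omega
  have hvG : Jmod n G (jdtAux n G).2 = n := by rw [hJG, if_pos rfl]; omega
  have huq : ∃! c : Cell, Jmod n F c = n := by
    have := sytF.1.1 n hn (by rw [hcard])
    exact this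
  have hhole : (jdtAux n F).2 = (jdtAux n G).2 := by
    obtain ⟨c, hc, hu⟩ := huq
    have e1 := hu _ hvF
    have e2 := hu _ (by rw [hFG]; exact hvG)
    rw [e1, e2]
  -- the final fillings agree
  have hfill : (jdtAux n F).1 = (jdtAux n G).1 := by
    funext c
    rcases eq_or_ne c ((jdtAux n F).2) with hc | hc
    · rw [hc, iF.hole, hhole, iG.hole]
    · have hc' : c ≠ (jdtAux n G).2 := by rw [← hhole]; exact hc
      have e1 : Jmod n F c = (jdtAux n F).1 c - 1 := by rw [hJF, if_neg hc]
      have e2 : Jmod n G c = (jdtAux n G).1 c - 1 := by rw [hJG, if_neg hc']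
      have b1 := (iF.bnd c).2
      have b2 := (iG.bnd c).2
      have := congrFun hFG c
      rw [e1] at this
      rw [e2] at this
      omega
  have hpair : jdtAux n F = jdtAux n G := Prod.ext hfill hhole
  have hrec : ((fun c => if c = ((0,0):Cell) then 0 else F c : Filling), ((0,0):Cell))
      = ((fun c => if c = ((0,0):Cell) then 0 else G c : Filling), ((0,0):Cell)) := by
    rw [← recF, ← recG, hpair]
  have h0 : (fun c => if c = ((0,0):Cell) then 0 else F c)
      = (fun c => if c = ((0,0):Cell) then 0 else G c) := congrArg Prod.fst hrec
  funext c
  rcases eq_or_ne c ((0,0):Cell) with rfl | hc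
  · rw [syt_corner hn hcard hF, syt_corner hn hcard hG]
  · have := congrFun h0 c
    rwa [if_neg hc, if_neg hc] at this

/-- For every Young diagram `lam` with `n` boxes, the modified jeu de
taquin transformation `J` is a bijection of `𝒯_lam` onto itself. -/
theorem stmt1 (n : ℕ) (lam : Finset Cell) (hlam : IsYoung lam) (hcard : lam.card = n) :
    Set.BijOn (Jmod n) {F : Filling | IsSYTof F lam} {F : Filling | IsSYTof F lam} := by
  classical
  rcases Nat.eq_zero_or_pos n with rfl | hn
  · -- trivial case: empty diagram
    have hzero : ∀ F : Filling, IsSYTof F lam → ∀ c, F c = 0 := by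
      intro F hF c
      have := (hF.1.2.1 c).1
      rw [hcard] at this
      omega
    have hmap : ∀ F : Filling, IsSYTof F lam → Jmod 0 F = F := by
      intro F hF
      funext c
      have hJ : Jmod 0 F c = (if c = ((0,0):Cell) then 1
          else if c = ((0,0):Cell) then 0 else F c) - 1 := rfl
      rw [hJ, hzero F hF c]
      rcases eq_or_ne c ((0,0):Cell) with rfl | hc
      · rw [if_pos rfl]
      · rw [if_neg hc, if_neg hc]
    refine ⟨fun F hF => ?_, fun F hF G hG _ => ?_, fun F hF => ⟨F, hF, hmap F hF⟩⟩
    · rw [Set.mem_setOf_eq] at hF ⊢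
      rw [hmap F hF]
      exact hF
    · funext c
      rw [hzero F hF c, hzero G hG c]
  · have hmaps : Set.MapsTo (Jmod n) {F : Filling | IsSYTof F lam}
        {F : Filling | IsSYTof F lam} := by
      intro F hF
      exact (jdt_main hlam hcard hn hF).2.2.2.2
    exact ((syt_finite hcard).injOn_iff_bijOn_of_mapsTo hmaps).mp (jmod_injOn hlam hcard hn)
end

section
/- Let T be a standard Young tableau with n ≥ 2 boxes. Then the position of the largest entry n in j(T) is equal to its position in T, or is one node to the left of it, or is one node below it; that is, pos_n(j(T)) ∈ { pos_n(T), pos_n(T) − (1,0), pos_n(T) − (0,1) }. -/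
def moveEntry (F : Filling) (h s : Cell) : Filling :=
  fun c => if c = h then F s else if c = s then 0 else F c

lemma slide_eq_or (F : Filling) (h : Cell) :
    slide F h = (F, h) ∨
    slide F h = (moveEntry F h (h.1 + 1, h.2), (h.1 + 1, h.2)) ∨
    slide F h = (moveEntry F h (h.1, h.2 + 1), (h.1, h.2 + 1)) := by
  dsimp only [slide]
  split_ifs
  · exact Or.inl rfl
  · exact Or.inr (Or.inl rfl)
  · exact Or.inr (Or.inr rfl)

lemma moveEntry_eq_iff {F : Filling} {h s c : Cell} {k : ℕ} (hk : k ≠ 0) (hh : F h = 0)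
    (hs : s ≠ h) (hc : ∀ c', F c' = k ↔ c' = c) (c' : Cell) :
    moveEntry F h s c' = k ↔ c' = if c = s then h else c := by
  have hch : c ≠ h := by
    rintro rfl
    exact hk (hh ▸ (hc c).mpr rfl).symm
  unfold moveEntry
  split_ifs <;> grind

/-- While the hole `h` travels, the entry `k` sits at its original cell `P`, or one node to
the left of or below it; in the second case it was moved into the hole once, after which
the hole is strictly further from the corner, so it can never reach `k` again. -/
def SlideInv (k : ℕ) (P : Cell) (F : Filling) (h : Cell) : Prop :=
  F h = 0 ∧ ∃ c : Cell, (∀ c', F c' = k ↔ c' = c) ∧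
    (c = P ∨ ((c = (P.1 - 1, P.2) ∨ c = (P.1, P.2 - 1)) ∧ c.1 + c.2 < h.1 + h.2))

namespace SlideInv

variable {k : ℕ} {P : Cell} {F : Filling} {h : Cell}

lemma moveEntry (hk : k ≠ 0) {s : Cell} (hs : s = (h.1 + 1, h.2) ∨ s = (h.1, h.2 + 1))
    (hI : SlideInv k P F h) : SlideInv k P (moveEntry F h s) s := by
  obtain ⟨hh, c, hc, hcP⟩ := hI
  have hsh : s ≠ h := by rcases hs with rfl | rfl <;> simp [Prod.ext_iff]
  have hsum : s.1 + s.2 = h.1 + h.2 + 1 := by rcases hs with rfl | rfl <;> simp <;> omega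
  refine ⟨by simp [_root_.moveEntry, hsh], _, moveEntry_eq_iff hk hh hsh hc, ?_⟩
  split_ifs with hcs
  · have hsP : s = P := hcs ▸ hcP.resolve_right (by rw [hcs]; omega)
    rw [← hsP]
    rcases hs with rfl | rfl <;> simp
  · rcases hcP with hcP | ⟨hcP, hlt⟩
    · exact Or.inl hcP
    · exact Or.inr ⟨hcP, by omega⟩

lemma slide (hk : k ≠ 0) (hI : SlideInv k P F h) : SlideInv k P (slide F h).1 (slide F h).2 := by
  rcases slide_eq_or F h with e | e | e <;> rw [e]
  · exact hI
  · exact hI.moveEntry hk (Or.inl rfl)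
  · exact hI.moveEntry hk (Or.inr rfl)

lemma slideIter (hk : k ≠ 0) (fuel : ℕ) (hI : SlideInv k P F h) :
    SlideInv k P (slideIter fuel F h).1 (slideIter fuel F h).2 := by
  induction fuel generalizing F h with
  | zero => exact hI
  | succ fuel ih =>
    rw [_root_.slideIter]
    split
    · exact hI
    · exact ih (hI.slide hk)

end SlideInv

lemma slideInv_eraseCorner {T : Filling} {k : ℕ} {P : Cell} (hk : k ≠ 0)
    (hT : ∀ c, T c = k ↔ c = P) (hP : P ≠ (0, 0)) :
    SlideInv k P (fun c => if c = ((0, 0) : Cell) then 0 else T c) (0, 0) := by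
  refine ⟨if_pos rfl, P, fun c => ?_, Or.inl rfl⟩
  dsimp only
  split_ifs with hc
  · subst hc
    exact ⟨fun e => absurd e.symm hk, fun e => absurd e.symm hP⟩
  · exact hT c

lemma pos_eq_of_forall_eq_iff {F : Filling} {k : ℕ} {c : Cell}
    (hc : ∀ c', F c' = k ↔ c' = c) : pos F k = c := by
  have hex : ∃ c', F c' = k := ⟨c, (hc c).mpr rfl⟩
  rw [pos, dif_pos hex]
  exact (hc _).mp hex.choose_spec

namespace IsStdFilling

variable {T : Filling} {a n : ℕ}

lemma corner_le (hT : IsStdFilling T a n) (x y : ℕ) (hxy : T (x, y) ≠ 0) :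
    T (0, 0) ≤ T (x, y) := by
  obtain ⟨-, -, hrow0, hcol0, hrow, hcol⟩ := hT
  induction y with
  | zero =>
    induction x with
    | zero => exact le_rfl
    | succ x ih => exact (ih (hrow0 x 0 hxy)).trans (hrow x 0 hxy).le
  | succ y ih => exact (ih (hcol0 x y hxy)).trans (hcol x y hxy).le

lemma corner_ne_max (hT : IsStdFilling T 0 n) (hn : 2 ≤ n) : T (0, 0) ≠ n := by
  obtain ⟨c, hc, -⟩ := hT.1 1 one_pos (by omega)
  have := hT.corner_le c.1 c.2 (by simp [hc])
  simp only [Prod.mk.eta, hc] at this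
  omega

end IsStdFilling

/-- For a standard Young tableau `T` with `n ≥ 2` boxes, the position
of the largest entry `n` in `j(T)` equals its position in `T`, or is one node to the
left of it, or one node below it. -/
theorem stmt2 (n : ℕ) (hn : 2 ≤ n) (T : Filling) (hT : IsStdFilling T 0 n) :
    pos (jdt n T) n = pos T n ∨
    pos (jdt n T) n = ((pos T n).1 - 1, (pos T n).2) ∨
    pos (jdt n T) n = ((pos T n).1, (pos T n).2 - 1) := by
  obtain ⟨P, hP, hPu⟩ := hT.1 n (by omega) le_rfl
  have hTP : ∀ c, T c = n ↔ c = P := fun c => ⟨hPu c, fun e => e ▸ hP⟩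
  have hP0 : P ≠ (0, 0) := fun e => hT.corner_ne_max hn (e ▸ hP)
  obtain ⟨-, c, hc, hcP⟩ := (slideInv_eraseCorner (by omega) hTP hP0).slideIter (by omega) n
  rw [jdt, jdtAux, pos_eq_of_forall_eq_iff hc, pos_eq_of_forall_eq_iff hTP]
  rcases hcP with hcP | ⟨hcP | hcP, -⟩
  · exact Or.inl hcP
  · exact Or.inr (Or.inl hcP)
  · exact Or.inr (Or.inr hcP)
end

section
/- Fix k ≥ 1 and let M be a standard Young tableau with at least k+1 boxes. Then M is a Pieri tableau with respect to k if and only if j(M) is a Pieri tableau with respect to k. -/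
namespace Stmt5

def InS (n k v : ℕ) : Prop := n - k + 1 ≤ v ∧ v ≤ n

def Mem (F : Filling) (h c : Cell) : Prop := F c ≠ 0 ∨ c = h

structure PT (n : ℕ) (F : Filling) (h : Cell) : Prop where
  uniq : ∀ v : ℕ, 2 ≤ v → v ≤ n → ∃! c : Cell, F c = v
  bound : ∀ c : Cell, F c ≤ n
  lo : ∀ c : Cell, F c = 0 ∨ 2 ≤ F c
  hole : F h = 0
  closeX : ∀ x y : ℕ, Mem F h (x+1,y) → Mem F h (x,y)
  closeY : ∀ x y : ℕ, Mem F h (x,y+1) → Mem F h (x,y)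
  monoX : ∀ x y : ℕ, F (x,y) ≠ 0 → F (x+1,y) ≠ 0 → F (x,y) < F (x+1,y)
  monoY : ∀ x y : ℕ, F (x,y) ≠ 0 → F (x,y+1) ≠ 0 → F (x,y) < F (x,y+1)
  holeL : ∀ x y : ℕ, h = (x+1,y) → F (x,y) ≠ 0 →
    (F (x+2,y) ≠ 0 → F (x,y) < F (x+2,y)) ∧ (F (x+1,y+1) ≠ 0 → F (x,y) < F (x+1,y+1))
  holeB : ∀ x y : ℕ, h = (x,y+1) → F (x,y) ≠ 0 →
    (F (x+1,y+1) ≠ 0 → F (x,y) < F (x+1,y+1)) ∧ (F (x,y+2) ≠ 0 → F (x,y) < F (x,y+2))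

variable {n k : ℕ} {F F' : Filling} {h : Cell}

lemma mem_of_ne_zero (hc : F c ≠ 0) : Mem F h c := Or.inl hc

lemma ne_zero_of_mem_x (pt : PT n F h) {x y : ℕ} (hx : x ≠ h.1) (hm : Mem F h (x,y)) :
    F (x,y) ≠ 0 := by
  rcases hm with h1 | h1
  · exact h1
  · exact absurd (congrArg Prod.fst h1) (by simpa using hx)

lemma ne_zero_of_mem_y (pt : PT n F h) {x y : ℕ} (hy : y ≠ h.2) (hm : Mem F h (x,y)) :
    F (x,y) ≠ 0 := by
  rcases hm with h1 | h1
  · exact h1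
  · exact absurd (congrArg Prod.snd h1) (by simpa using hy)

lemma memX (pt : PT n F h) {a b : ℕ} (a' : ℕ) (ha : a' ≤ a) (hm : Mem F h (a,b)) :
    Mem F h (a',b) := by
  obtain ⟨d, rfl⟩ : ∃ d, a = a' + d := ⟨a - a', by omega⟩
  clear ha
  induction d with
  | zero => exact hm
  | succ d ih => exact ih (pt.closeX (a'+d) b hm)

lemma memY (pt : PT n F h) {a b : ℕ} (b' : ℕ) (hb : b' ≤ b) (hm : Mem F h (a,b)) :
    Mem F h (a,b') := by
  obtain ⟨d, rfl⟩ : ∃ d, b = b' + d := ⟨b - b', by omega⟩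
  clear hb
  induction d with
  | zero => exact hm
  | succ d ih => exact ih (pt.closeY a (b'+d) hm)

lemma closure (pt : PT n F h) {a b : ℕ} (a' b' : ℕ) (ha : a' ≤ a) (hb : b' ≤ b)
    (hm : Mem F h (a,b)) : Mem F h (a',b') :=
  memY pt b' hb (memX pt a' ha hm)

lemma monoY_chain (pt : PT n F h) {x a b : ℕ} (hx : x ≠ h.1) (hab : a < b)
    (hb : F (x,b) ≠ 0) : F (x,a) < F (x,b) := by
  obtain ⟨d, rfl⟩ : ∃ d, b = a + d + 1 := ⟨b - a - 1, by omega⟩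
  clear hab
  induction d with
  | zero =>
    have h0 : F (x,a) ≠ 0 := ne_zero_of_mem_x pt hx (pt.closeY x a (mem_of_ne_zero hb))
    exact pt.monoY x a h0 hb
  | succ d ih =>
    have h0 : F (x,a+d+1) ≠ 0 :=
      ne_zero_of_mem_x pt hx (pt.closeY x (a+d+1) (mem_of_ne_zero hb))
    exact lt_trans (ih h0) (pt.monoY x (a+d+1) h0 hb)

lemma monoX_chain (pt : PT n F h) {y a b : ℕ} (hy : y ≠ h.2) (hab : a < b)
    (hb : F (b,y) ≠ 0) : F (a,y) < F (b,y) := by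
  obtain ⟨d, rfl⟩ : ∃ d, b = a + d + 1 := ⟨b - a - 1, by omega⟩
  clear hab
  induction d with
  | zero =>
    have h0 : F (a,y) ≠ 0 := ne_zero_of_mem_y pt hy (pt.closeX a y (mem_of_ne_zero hb))
    exact pt.monoX a y h0 hb
  | succ d ih =>
    have h0 : F (a+d+1,y) ≠ 0 :=
      ne_zero_of_mem_y pt hy (pt.closeX (a+d+1) y (mem_of_ne_zero hb))
    exact lt_trans (ih h0) (pt.monoX (a+d+1) y h0 hb)

lemma pos_eq {v : ℕ} {c : Cell} (hu : ∃! c : Cell, F c = v) (hc : F c = v) :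
    pos F v = c := by
  have hex : ∃ c : Cell, F c = v := ⟨c, hc⟩
  rw [pos, dif_pos hex]
  exact hu.unique hex.choose_spec hc

lemma content_eq {v : ℕ} {c : Cell} (hu : ∃! c : Cell, F c = v) (hc : F c = v) :
    content F v = (c.1 : ℤ) - (c.2 : ℤ) := by
  rw [content, pos_eq hu hc]

def PieriV (F : Filling) (n k : ℕ) : Prop :=
  ∀ s : ℕ, n - k + 1 ≤ s → s < n → content F s < content F (s+1)

lemma pieriV_mono (hp : PieriV F n k) {s t : ℕ} (hs : n - k + 1 ≤ s) (hst : s < t)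
    (htn : t ≤ n) : content F s < content F t := by
  induction t with
  | zero => omega
  | succ t ih =>
    rcases Nat.lt_or_ge s t with h' | h'
    · exact lt_trans (ih h' (by omega)) (hp t (by omega) (by omega))
    · have hst' : s = t := by omega
      subst hst'
      exact hp s hs (by omega)

lemma InS.two_le (hkn : k + 1 ≤ n) {v : ℕ} (hv : InS n k v) : 2 ≤ v := by
  rcases hv with ⟨h1, h2⟩; omega

lemma not_pieriV_of_bad (hkn : k + 1 ≤ n) (pt : PT n F h) {s t : ℕ} {c d : Cell}
    (hs : F c = s) (ht : F d = t) (hins : InS n k s) (hint : InS n k t) (hst : s < t)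
    (hbad : (d.1:ℤ) - (d.2:ℤ) ≤ (c.1:ℤ) - (c.2:ℤ)) : ¬ PieriV F n k := by
  intro hp
  have h1 := pieriV_mono hp hins.1 hst hint.2
  rw [content_eq (pt.uniq s (hins.two_le hkn) hins.2) hs,
    content_eq (pt.uniq t (hint.two_le hkn) hint.2) ht] at h1
  omega

lemma pieriV_congr (hkn : k + 1 ≤ n)
    (hc : ∀ v, InS n k v → content F v = content F' v) :
    PieriV F n k ↔ PieriV F' n k := by
  constructor <;> intro hp s hs hsn
  · rw [← hc s ⟨hs, by omega⟩, ← hc (s+1) ⟨by omega, by omega⟩]; exact hp s hs hsn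
  · rw [hc s ⟨hs, by omega⟩, hc (s+1) ⟨by omega, by omega⟩]; exact hp s hs hsn

lemma pieriV_shift (hkn : k + 1 ≤ n) {e : ℕ} (he : InS n k e) {γ γ' : ℤ}
    (hγ : γ' = γ + 1 ∨ γ' = γ - 1) (hce : content F e = γ) (hce' : content F' e = γ')
    (hsame : ∀ v, InS n k v → v ≠ e → content F' v = content F v)
    (havoid : ∀ v, InS n k v → v ≠ e → content F v ≠ γ ∧ content F v ≠ γ') :
    PieriV F n k ↔ PieriV F' n k := by
  have hIn : ∀ s : ℕ, n - k + 1 ≤ s → s ≤ n → InS n k s := fun s h1 h2 => ⟨h1, h2⟩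
  constructor <;> intro hp s hs hsn
  · by_cases h1 : s = e
    · subst h1
      have hIe : InS n k (s+1) := ⟨by omega, by omega⟩
      have hne : s + 1 ≠ s := by omega
      rw [hce', hsame (s+1) hIe hne]
      have h2 := hp s hs hsn
      rw [hce] at h2
      have h3 := (havoid (s+1) hIe hne).1
      have h4 := (havoid (s+1) hIe hne).2
      omega
    · by_cases h2 : s + 1 = e
      · have hIs : InS n k s := ⟨hs, by omega⟩
        have e1 : content F' s = content F s := hsame s hIs h1
        have e2 : content F' (s+1) = γ' := by rw [h2, hce']
        have e3 : content F (s+1) = γ := by rw [h2, hce]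
        have h3 := hp s hs hsn
        have h4 := (havoid s hIs h1).1
        have h5 := (havoid s hIs h1).2
        rw [e3] at h3
        rw [e1, e2]
        omega
      · rw [hsame s ⟨hs, by omega⟩ h1, hsame (s+1) ⟨by omega, by omega⟩ h2]
        exact hp s hs hsn
  · by_cases h1 : s = e
    · subst h1
      have hIe : InS n k (s+1) := ⟨by omega, by omega⟩
      have hne : s + 1 ≠ s := by omega
      have h2 := hp s hs hsn
      rw [hce', hsame (s+1) hIe hne] at h2
      rw [hce]
      have h3 := (havoid (s+1) hIe hne).1
      have h4 := (havoid (s+1) hIe hne).2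
      omega
    · by_cases h2 : s + 1 = e
      · have hIs : InS n k s := ⟨hs, by omega⟩
        have e1 : content F' s = content F s := hsame s hIs h1
        have e2 : content F' (s+1) = γ' := by rw [h2, hce']
        have e3 : content F (s+1) = γ := by rw [h2, hce]
        have h3 := hp s hs hsn
        have h4 := (havoid s hIs h1).1
        have h5 := (havoid s hIs h1).2
        rw [e1, e2] at h3
        rw [e3]
        omega
      · have h3 := hp s hs hsn
        rw [hsame s ⟨hs, by omega⟩ h1, hsame (s+1) ⟨by omega, by omega⟩ h2] at h3
        exact h3

end Stmt5
namespace Stmt5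

variable {n k : ℕ} {F F' : Filling} {h : Cell}

def updR (F : Filling) (h : Cell) : Filling :=
  fun c => if c = h then F (h.1+1, h.2) else if c = (h.1+1, h.2) then 0 else F c

def updU (F : Filling) (h : Cell) : Filling :=
  fun c => if c = h then F (h.1, h.2+1) else if c = (h.1, h.2+1) then 0 else F c

lemma cell_ne_right : ((h.1+1, h.2) : Cell) ≠ h := by
  intro hh
  rw [Prod.ext_iff] at hh
  omega

lemma cell_ne_up : ((h.1, h.2+1) : Cell) ≠ h := by
  intro hh
  rw [Prod.ext_iff] at hh
  omega

lemma updR_self : updR F h h = F (h.1+1, h.2) := by simp [updR]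

lemma updR_from : updR F h (h.1+1, h.2) = 0 := by
  simp [updR, cell_ne_right]

lemma updR_other {c : Cell} (h1 : c ≠ h) (h2 : c ≠ (h.1+1, h.2)) : updR F h c = F c := by
  simp [updR, h1, h2]

lemma updU_self : updU F h h = F (h.1, h.2+1) := by simp [updU]

lemma updU_from : updU F h (h.1, h.2+1) = 0 := by
  simp [updU, cell_ne_up]

lemma updU_other {c : Cell} (h1 : c ≠ h) (h2 : c ≠ (h.1, h.2+1)) : updU F h c = F c := by
  simp [updU, h1, h2]

lemma slide_cases (hg : ¬(F (h.1+1, h.2) = 0 ∧ F (h.1, h.2+1) = 0)) :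
    (slide F h = (updR F h, (h.1+1, h.2)) ∧ F (h.1+1, h.2) ≠ 0 ∧
      (F (h.1, h.2+1) = 0 ∨ F (h.1+1, h.2) < F (h.1, h.2+1)))
    ∨ (slide F h = (updU F h, (h.1, h.2+1)) ∧ F (h.1, h.2+1) ≠ 0 ∧
      (F (h.1+1, h.2) = 0 ∨ ¬ F (h.1+1, h.2) < F (h.1, h.2+1))) := by
  by_cases hc : F (h.1, h.2+1) = 0 ∨ (F (h.1+1, h.2) ≠ 0 ∧ F (h.1+1, h.2) < F (h.1, h.2+1))
  · left
    have hr : F (h.1+1, h.2) ≠ 0 := by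
      rcases hc with hc | hc
      · intro h0; exact hg ⟨h0, hc⟩
      · exact hc.1
    refine ⟨?_, hr, ?_⟩
    · show slide F h = _
      unfold slide
      rw [if_neg hg, if_pos hc]
      rfl
    · rcases hc with hc | hc
      · exact Or.inl hc
      · exact Or.inr hc.2
  · right
    push_neg at hc
    refine ⟨?_, hc.1, ?_⟩
    · show slide F h = _
      unfold slide
      rw [if_neg hg, if_neg]
      · rfl
      · push_neg
        exact hc
    · by_cases hr : F (h.1+1, h.2) = 0
      · exact Or.inl hr
      · exact Or.inr (by have := hc.2 hr; omega)

lemma slideIter_succ (fuel : ℕ) (F : Filling) (h : Cell) :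
    slideIter (fuel+1) F h =
      if F (h.1 + 1, h.2) = 0 ∧ F (h.1, h.2 + 1) = 0 then (F, h)
      else slideIter fuel (slide F h).1 (slide F h).2 := rfl

lemma slideIter_stop (h1 : F (h.1+1, h.2) = 0) (h2 : F (h.1, h.2+1) = 0) :
    ∀ fuel, slideIter fuel F h = (F, h) := by
  intro fuel
  cases fuel with
  | zero => rfl
  | succ fuel => rw [slideIter_succ, if_pos ⟨h1, h2⟩]

lemma frozen : ∀ (fuel : ℕ) (F : Filling) (h c : Cell),
    (c.1 < h.1 ∨ c.2 < h.2) → (slideIter fuel F h).1 c = F c := by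
  intro fuel
  induction fuel with
  | zero => intro F h c _; rfl
  | succ fuel ih =>
    intro F h c hc
    rw [slideIter_succ]
    by_cases hg : F (h.1 + 1, h.2) = 0 ∧ F (h.1, h.2 + 1) = 0
    · rw [if_pos hg]
    · rw [if_neg hg]
      have hch : c ≠ h := by
        intro hh; subst hh; omega
      rcases slide_cases hg with ⟨he, _, _⟩ | ⟨he, _, _⟩
      · rw [he]
        have : updR F h c = F c := updR_other hch (by
          intro hh; subst hh; simp at hc)
        rw [← this]
        exact ih _ _ c (by simp; omega)
      · rw [he]
        have : updU F h c = F c := updU_other hch (by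
          intro hh; subst hh; simp at hc)
        rw [← this]
        exact ih _ _ c (by simp; omega)

end Stmt5
namespace Stmt5

variable {n k : ℕ} {F F' : Filling} {h : Cell}

lemma ne_fst {c d : Cell} (hne : c.1 ≠ d.1) : c ≠ d := fun hh => hne (congrArg Prod.fst hh)
lemma ne_snd {c d : Cell} (hne : c.2 ≠ d.2) : c ≠ d := fun hh => hne (congrArg Prod.snd hh)

lemma memR_iff (hr : F (h.1+1, h.2) ≠ 0) (c : Cell) :
    Mem (updR F h) (h.1+1, h.2) c ↔ Mem F h c := by
  unfold Mem
  by_cases h1 : c = h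
  · subst h1
    rw [updR_self]
    simp [hr]
  · by_cases h2 : c = (h.1+1, h.2)
    · subst h2
      rw [updR_from]
      simp [hr]
    · rw [updR_other h1 h2]
      simp [h1, h2]

lemma memU_iff (hu : F (h.1, h.2+1) ≠ 0) (c : Cell) :
    Mem (updU F h) (h.1, h.2+1) c ↔ Mem F h c := by
  unfold Mem
  by_cases h1 : c = h
  · subst h1
    rw [updU_self]
    simp [hu]
  · by_cases h2 : c = (h.1, h.2+1)
    · subst h2
      rw [updU_from]
      simp [hu]
    · rw [updU_other h1 h2]
      simp [h1, h2]

lemma heta : ((h.1, h.2) : Cell) = h := rfl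

lemma PT_slideR (pt : PT n F h) (hr : F (h.1+1, h.2) ≠ 0)
    (hcond : F (h.1, h.2+1) = 0 ∨ F (h.1+1, h.2) < F (h.1, h.2+1)) :
    PT n (updR F h) (h.1+1, h.2) := by
  constructor
  · -- uniq
    intro v hv2 hvn
    obtain ⟨c, hc, hcu⟩ := pt.uniq v hv2 hvn
    by_cases hcr : c = ((h.1+1, h.2) : Cell)
    · refine ⟨h, ?_, ?_⟩
      · show updR F h h = v
        rw [updR_self]
        exact hcr ▸ hc
      · intro c' hc'
        have hc'' : updR F h c' = v := hc'
        by_cases h1 : c' = h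
        · exact h1
        · by_cases h2 : c' = ((h.1+1, h.2) : Cell)
          · exfalso
            rw [h2, updR_from] at hc''
            omega
          · rw [updR_other h1 h2] at hc''
            exact absurd ((hcu c' hc'').trans hcr) h2
    · refine ⟨c, ?_, ?_⟩
      · show updR F h c = v
        have hch : c ≠ h := by
          intro hh
          rw [hh, pt.hole] at hc
          omega
        rw [updR_other hch hcr]
        exact hc
      · intro c' hc'
        have hc'' : updR F h c' = v := hc'
        by_cases h1 : c' = h
        · exfalso
          rw [h1, updR_self] at hc''
          exact hcr (hcu (h.1+1, h.2) hc'').symm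
        · by_cases h2 : c' = ((h.1+1, h.2) : Cell)
          · exfalso
            rw [h2, updR_from] at hc''
            omega
          · rw [updR_other h1 h2] at hc''
            exact hcu c' hc''
  · -- bound
    intro c
    by_cases h1 : c = h
    · rw [h1, updR_self]; exact pt.bound _
    · by_cases h2 : c = ((h.1+1, h.2) : Cell)
      · rw [h2, updR_from]; omega
      · rw [updR_other h1 h2]; exact pt.bound c
  · -- lo
    intro c
    by_cases h1 : c = h
    · rw [h1, updR_self]; exact pt.lo _
    · by_cases h2 : c = ((h.1+1, h.2) : Cell)
      · rw [h2, updR_from]; left; rfl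
      · rw [updR_other h1 h2]; exact pt.lo c
  · -- hole
    exact updR_from
  · -- closeX
    intro a b hm
    exact (memR_iff hr (a,b)).mpr (pt.closeX a b ((memR_iff hr (a+1,b)).mp hm))
  · -- closeY
    intro a b hm
    exact (memR_iff hr (a,b)).mpr (pt.closeY a b ((memR_iff hr (a,b+1)).mp hm))
  · -- monoX
    intro a b h1 h2
    by_cases e1 : ((a,b) : Cell) = h
    · exfalso
      apply h2
      subst e1
      exact updR_from
    · by_cases e2 : ((a,b) : Cell) = (h.1+1, h.2)
      · exfalso
        apply h1
        rw [e2]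
        exact updR_from
      · by_cases e3 : ((a+1,b) : Cell) = h
        · subst e3
          have e2' : ((a,b) : Cell) ≠ (a+1+1, b) := ne_fst (by omega)
          rw [updR_other e1 e2'] at h1 ⊢
          rw [updR_self] at h2 ⊢
          exact (pt.holeL a b rfl h1).1 h2
        · by_cases e4 : ((a+1,b) : Cell) = (h.1+1, h.2)
          · exfalso
            apply e1
            have q1 : a + 1 = h.1 + 1 := congrArg Prod.fst e4
            have q2 : b = h.2 := congrArg Prod.snd e4
            have q3 : a = h.1 := by omega
            rw [q3, q2]
          · rw [updR_other e1 e2] at h1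
            rw [updR_other e3 e4] at h2
            rw [updR_other e1 e2, updR_other e3 e4]
            exact pt.monoX a b h1 h2
  · -- monoY
    intro a b h1 h2
    by_cases e1 : ((a,b) : Cell) = h
    · subst e1
      have k2 : ((a,b+1) : Cell) ≠ (a,b) := ne_snd (by omega)
      have k3 : ((a,b+1) : Cell) ≠ (a+1, b) := ne_fst (by omega)
      rw [updR_self]
      rw [updR_other k2 k3] at h2 ⊢
      rcases hcond with hc | hc
      · exact absurd hc h2
      · exact hc
    · by_cases e2 : ((a,b) : Cell) = (h.1+1, h.2)
      · exfalso
        apply h1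
        rw [e2]
        exact updR_from
      · by_cases e3 : ((a,b+1) : Cell) = h
        · subst e3
          have e2' : ((a,b) : Cell) ≠ (a+1, b+1) := ne_fst (by omega)
          rw [updR_other e1 e2'] at h1 ⊢
          rw [updR_self] at h2 ⊢
          exact (pt.holeB a b rfl h1).1 h2
        · by_cases e4 : ((a,b+1) : Cell) = (h.1+1, h.2)
          · exfalso
            apply h2
            rw [e4]
            exact updR_from
          · rw [updR_other e1 e2] at h1
            rw [updR_other e3 e4] at h2
            rw [updR_other e1 e2, updR_other e3 e4]
            exact pt.monoY a b h1 h2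
  · -- holeL
    intro a b he hne
    have ha : h.1 + 1 = a + 1 := congrArg Prod.fst he
    have hb : h.2 = b := congrArg Prod.snd he
    have ha' : a = h.1 := by omega
    subst ha'
    subst hb
    have n1 : ((h.1+2, h.2) : Cell) ≠ h := ne_fst (by omega)
    have n2 : ((h.1+2, h.2) : Cell) ≠ (h.1+1, h.2) := ne_fst (by omega)
    have n3 : ((h.1+1, h.2+1) : Cell) ≠ h := ne_snd (by omega)
    have n4 : ((h.1+1, h.2+1) : Cell) ≠ (h.1+1, h.2) := ne_snd (by omega)
    constructor
    · intro hz
      rw [updR_other n1 n2] at hz ⊢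
      rw [heta, updR_self]
      exact pt.monoX (h.1+1) h.2 hr hz
    · intro hz
      rw [updR_other n3 n4] at hz ⊢
      rw [heta, updR_self]
      exact pt.monoY (h.1+1) h.2 hr hz
  · -- holeB
    intro a b he hne
    have ha : h.1 + 1 = a := congrArg Prod.fst he
    have hb : h.2 = b + 1 := congrArg Prod.snd he
    subst ha
    have m1 : ((h.1+1, b) : Cell) ≠ h := ne_snd (by omega)
    have m2 : ((h.1+1, b) : Cell) ≠ (h.1+1, h.2) := ne_snd (by omega)
    rw [updR_other m1 m2] at hne
    constructor
    · intro hz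
      have n1 : ((h.1+1+1, b+1) : Cell) ≠ h := ne_fst (by omega)
      have n2 : ((h.1+1+1, b+1) : Cell) ≠ (h.1+1, h.2) := ne_fst (by omega)
      rw [updR_other n1 n2] at hz ⊢
      rw [updR_other m1 m2]
      have hmem : F (h.1+2, b) ≠ 0 := by
        apply ne_zero_of_mem_x pt (by omega)
        exact pt.closeY (h.1+2) b (mem_of_ne_zero hz)
      exact lt_trans (pt.monoX (h.1+1) b hne hmem) (pt.monoY (h.1+2) b hmem hz)
    · intro hz
      have n1 : ((h.1+1, b+2) : Cell) ≠ h := ne_snd (by omega)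
      have n2 : ((h.1+1, b+2) : Cell) ≠ (h.1+1, h.2) := ne_snd (by omega)
      rw [updR_other n1 n2] at hz ⊢
      rw [updR_other m1 m2]
      exact monoY_chain pt (by omega) (by omega) hz

end Stmt5
namespace Stmt5

variable {n k : ℕ} {F F' : Filling} {h : Cell}

lemma val_ne (pt : PT n F h) {c d : Cell} (hc : F c ≠ 0) (hcd : c ≠ d) : F c ≠ F d := by
  intro heq
  have h2 : 2 ≤ F c := by
    rcases pt.lo c with h1 | h1
    · exact absurd h1 hc
    · exact h1
  obtain ⟨c0, hc0, hu0⟩ := pt.uniq (F c) h2 (pt.bound c)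
  exact hcd ((hu0 c rfl).trans (hu0 d heq.symm).symm)

lemma PT_slideU (pt : PT n F h) (hu : F (h.1, h.2+1) ≠ 0)
    (hcond : F (h.1+1, h.2) = 0 ∨ F (h.1, h.2+1) < F (h.1+1, h.2)) :
    PT n (updU F h) (h.1, h.2+1) := by
  constructor
  · -- uniq
    intro v hv2 hvn
    obtain ⟨c, hc, hcu⟩ := pt.uniq v hv2 hvn
    by_cases hcr : c = ((h.1, h.2+1) : Cell)
    · refine ⟨h, ?_, ?_⟩
      · show updU F h h = v
        rw [updU_self]
        exact hcr ▸ hc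
      · intro c' hc'
        have hc'' : updU F h c' = v := hc'
        by_cases h1 : c' = h
        · exact h1
        · by_cases h2 : c' = ((h.1, h.2+1) : Cell)
          · exfalso
            rw [h2, updU_from] at hc''
            omega
          · rw [updU_other h1 h2] at hc''
            exact absurd ((hcu c' hc'').trans hcr) h2
    · refine ⟨c, ?_, ?_⟩
      · show updU F h c = v
        have hch : c ≠ h := by
          intro hh
          rw [hh, pt.hole] at hc
          omega
        rw [updU_other hch hcr]
        exact hc
      · intro c' hc'
        have hc'' : updU F h c' = v := hc'
        by_cases h1 : c' = h
        · exfalso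
          rw [h1, updU_self] at hc''
          exact hcr (hcu (h.1, h.2+1) hc'').symm
        · by_cases h2 : c' = ((h.1, h.2+1) : Cell)
          · exfalso
            rw [h2, updU_from] at hc''
            omega
          · rw [updU_other h1 h2] at hc''
            exact hcu c' hc''
  · -- bound
    intro c
    by_cases h1 : c = h
    · rw [h1, updU_self]; exact pt.bound _
    · by_cases h2 : c = ((h.1, h.2+1) : Cell)
      · rw [h2, updU_from]; omega
      · rw [updU_other h1 h2]; exact pt.bound c
  · -- lo
    intro c
    by_cases h1 : c = h
    · rw [h1, updU_self]; exact pt.lo _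
    · by_cases h2 : c = ((h.1, h.2+1) : Cell)
      · rw [h2, updU_from]; left; rfl
      · rw [updU_other h1 h2]; exact pt.lo c
  · -- hole
    exact updU_from
  · -- closeX
    intro a b hm
    exact (memU_iff hu (a,b)).mpr (pt.closeX a b ((memU_iff hu (a+1,b)).mp hm))
  · -- closeY
    intro a b hm
    exact (memU_iff hu (a,b)).mpr (pt.closeY a b ((memU_iff hu (a,b+1)).mp hm))
  · -- monoX
    intro a b h1 h2
    by_cases e1 : ((a,b) : Cell) = h
    · subst e1
      have k2 : ((a+1,b) : Cell) ≠ (a,b) := ne_fst (by omega)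
      have k3 : ((a+1,b) : Cell) ≠ (a, b+1) := ne_fst (by omega)
      rw [updU_self]
      rw [updU_other k2 k3] at h2 ⊢
      rcases hcond with hc | hc
      · exact absurd hc h2
      · exact hc
    · by_cases e2 : ((a,b) : Cell) = (h.1, h.2+1)
      · exfalso
        apply h1
        rw [e2]
        exact updU_from
      · by_cases e3 : ((a+1,b) : Cell) = h
        · subst e3
          have e2' : ((a,b) : Cell) ≠ (a+1, b+1) := ne_fst (by omega)
          rw [updU_other e1 e2'] at h1 ⊢
          rw [updU_self] at h2 ⊢
          exact (pt.holeL a b rfl h1).2 h2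
        · by_cases e4 : ((a+1,b) : Cell) = (h.1, h.2+1)
          · exfalso
            apply h2
            rw [e4]
            exact updU_from
          · rw [updU_other e1 e2] at h1
            rw [updU_other e3 e4] at h2
            rw [updU_other e1 e2, updU_other e3 e4]
            exact pt.monoX a b h1 h2
  · -- monoY
    intro a b h1 h2
    by_cases e1 : ((a,b) : Cell) = h
    · exfalso
      apply h2
      subst e1
      exact updU_from
    · by_cases e2 : ((a,b) : Cell) = (h.1, h.2+1)
      · exfalso
        apply h1
        rw [e2]
        exact updU_from
      · by_cases e3 : ((a,b+1) : Cell) = h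
        · subst e3
          have e2' : ((a,b) : Cell) ≠ (a, b+1+1) := ne_snd (by omega)
          rw [updU_other e1 e2'] at h1 ⊢
          rw [updU_self] at h2 ⊢
          exact (pt.holeB a b rfl h1).2 h2
        · by_cases e4 : ((a,b+1) : Cell) = (h.1, h.2+1)
          · exfalso
            apply e1
            have q1 : a = h.1 := congrArg Prod.fst e4
            have q2 : b + 1 = h.2 + 1 := congrArg Prod.snd e4
            have q3 : b = h.2 := by omega
            rw [q1, q3]
          · rw [updU_other e1 e2] at h1
            rw [updU_other e3 e4] at h2
            rw [updU_other e1 e2, updU_other e3 e4]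
            exact pt.monoY a b h1 h2
  · -- holeL
    intro a b he hne
    have ha : h.1 = a + 1 := congrArg Prod.fst he
    have hb : h.2 + 1 = b := congrArg Prod.snd he
    subst hb
    have m1 : ((a, h.2+1) : Cell) ≠ h := ne_snd (by omega)
    have m2 : ((a, h.2+1) : Cell) ≠ (h.1, h.2+1) := ne_fst (by omega)
    rw [updU_other m1 m2] at hne
    constructor
    · intro hz
      have n1 : ((a+1+1, h.2+1) : Cell) ≠ h := ne_snd (by omega)
      have n2 : ((a+1+1, h.2+1) : Cell) ≠ (h.1, h.2+1) := ne_fst (by omega)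
      rw [updU_other n1 n2] at hz ⊢
      rw [updU_other m1 m2]
      exact monoX_chain pt (by omega) (by omega) hz
    · intro hz
      have n1 : ((a+1, h.2+1+1) : Cell) ≠ h := ne_snd (by omega)
      have n2 : ((a+1, h.2+1+1) : Cell) ≠ (h.1, h.2+1) := ne_snd (by omega)
      rw [updU_other n1 n2] at hz ⊢
      rw [updU_other m1 m2]
      have hu' : F (a+1, h.2+1) ≠ 0 := by rw [← ha]; exact hu
      exact lt_trans (pt.monoX a (h.2+1) hne hu') (pt.monoY (a+1) (h.2+1) hu' hz)
  · -- holeB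
    intro a b he hne
    have ha : h.1 = a := congrArg Prod.fst he
    have hb : h.2 + 1 = b + 1 := congrArg Prod.snd he
    have hb' : b = h.2 := by omega
    subst ha
    subst hb'
    constructor
    · intro hz
      have n1 : ((h.1+1, h.2+1) : Cell) ≠ h := ne_snd (by omega)
      have n2 : ((h.1+1, h.2+1) : Cell) ≠ (h.1, h.2+1) := ne_fst (by omega)
      rw [updU_other n1 n2] at hz ⊢
      rw [heta, updU_self]
      exact pt.monoX h.1 (h.2+1) hu hz
    · intro hz
      have n1 : ((h.1, h.2+1+1) : Cell) ≠ h := ne_snd (by omega)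
      have n2 : ((h.1, h.2+1+1) : Cell) ≠ (h.1, h.2+1) := ne_snd (by omega)
      rw [updU_other n1 n2] at hz ⊢
      rw [heta, updU_self]
      exact pt.monoY h.1 (h.2+1) hu hz

lemma up_cond (pt : PT n F h) (hu : F (h.1, h.2+1) ≠ 0)
    (hc : F (h.1+1, h.2) = 0 ∨ ¬ F (h.1+1, h.2) < F (h.1, h.2+1)) :
    F (h.1+1, h.2) = 0 ∨ F (h.1, h.2+1) < F (h.1+1, h.2) := by
  rcases hc with hc | hc
  · exact Or.inl hc
  · by_cases hr0 : F (h.1 + 1, h.2) = 0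
    · exact Or.inl hr0
    · have hne : F (h.1, h.2+1) ≠ F (h.1+1, h.2) := val_ne pt hu (ne_snd (by omega))
      right
      omega

lemma PT_iter (fuel : ℕ) : ∀ (F : Filling) (h : Cell), PT n F h →
    PT n (slideIter fuel F h).1 (slideIter fuel F h).2 := by
  induction fuel with
  | zero => intro F h pt; exact pt
  | succ fuel ih =>
    intro F h pt
    rw [slideIter_succ]
    by_cases hg : F (h.1 + 1, h.2) = 0 ∧ F (h.1, h.2 + 1) = 0
    · rw [if_pos hg]; exact pt
    · rw [if_neg hg]
      rcases slide_cases hg with ⟨he, hr, hc⟩ | ⟨he, hu, hc⟩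
      · rw [he]
        exact ih _ _ (PT_slideR pt hr hc)
      · rw [he]
        exact ih _ _ (PT_slideU pt hu (up_cond pt hu hc))

end Stmt5
namespace Stmt5

variable {n k : ℕ} {F F' : Filling} {h : Cell}

lemma cellfst {a b : ℕ} : (((a,b) : Cell)).1 = a := rfl
lemma cellsnd {a b : ℕ} : (((a,b) : Cell)).2 = b := rfl

lemma cellmk_eq {a b c d : ℕ} (h1 : a = c) (h2 : b = d) : ((a,b) : Cell) = (c,d) := by
  rw [h1, h2]

lemma InS.ne_zero (hkn : k + 1 ≤ n) {v : ℕ} (hv : InS n k v) : v ≠ 0 := by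
  rcases hv with ⟨h1, h2⟩; omega

def Kp (n k : ℕ) (F : Filling) (h : Cell) : Prop :=
  ∀ c : Cell, c.1 ≤ h.1 → c.2 ≤ h.2 → ¬ InS n k (F c)

def Qp (n k : ℕ) (F : Filling) (h : Cell) : Prop :=
  F (h.1, h.2+1) = 0 ∧
  (∀ c : Cell, InS n k (F c) → (c.1 : ℤ) - (c.2 : ℤ) ≠ (h.1 : ℤ) - (h.2 : ℤ)) ∧
  (∀ c : Cell, c.1 ≤ h.1 → c.2 < h.2 → ¬ InS n k (F c))

lemma notPieri_future_frozen (hkn : k + 1 ≤ n) (pt : PT n F h) {s t : ℕ} {c d : Cell}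
    (hs : F c = s) (ht : F d = t) (hins : InS n k s) (hint : InS n k t) (hst : s < t)
    (hcf : c.1 < h.1 ∨ c.2 < h.2) (hdf : d.1 < h.1 ∨ d.2 < h.2)
    (hbad : (d.1:ℤ) - (d.2:ℤ) ≤ (c.1:ℤ) - (c.2:ℤ)) :
    ∀ fuel, ¬ PieriV (slideIter fuel F h).1 n k := by
  intro fuel
  have pt' := PT_iter fuel F h pt
  have hc' : (slideIter fuel F h).1 c = s := by rw [frozen fuel F h c hcf]; exact hs
  have hd' : (slideIter fuel F h).1 d = t := by rw [frozen fuel F h d hdf]; exact ht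
  exact not_pieriV_of_bad hkn pt' hc' hd' hins hint hst hbad

lemma above_moves : ∀ (fuel : ℕ) (F : Filling) (h : Cell), F (h.1, h.2+1) ≠ 0 →
    ∃ d : Cell, (slideIter fuel F h).1 d = F (h.1, h.2+1) ∧
      (d.1:ℤ) - (d.2:ℤ) ≤ (h.1:ℤ) - (h.2:ℤ) := by
  intro fuel
  cases fuel with
  | zero =>
    intro F h htz
    exact ⟨(h.1, h.2+1), rfl, by simp only [cellfst, cellsnd]; omega⟩
  | succ fuel =>
    intro F h htz
    rw [slideIter_succ]
    by_cases hg : F (h.1 + 1, h.2) = 0 ∧ F (h.1, h.2 + 1) = 0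
    · rw [if_pos hg]
      exact ⟨(h.1, h.2+1), rfl, by simp only [cellfst, cellsnd]; omega⟩
    · rw [if_neg hg]
      rcases slide_cases hg with ⟨he, hr, hc⟩ | ⟨he, hu, hc⟩
      · rw [he]
        refine ⟨(h.1, h.2+1), ?_, by simp only [cellfst, cellsnd]; omega⟩
        rw [frozen fuel _ _ _ (by left; simp only [cellfst, cellsnd]; omega)]
        exact updR_other (ne_snd (by simp only [cellsnd]; omega))
          (ne_fst (by simp only [cellfst]; omega))
      · rw [he]
        refine ⟨h, ?_, by omega⟩
        rw [frozen fuel _ _ _ (by right; simp only [cellsnd]; omega)]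
        exact updU_self

lemma right_moves : ∀ (fuel : ℕ) (F : Filling) (h : Cell), F (h.1+1, h.2) ≠ 0 →
    ∃ d : Cell, (slideIter fuel F h).1 d = F (h.1+1, h.2) ∧
      (d.1:ℤ) - (d.2:ℤ) ≤ (h.1:ℤ) + 1 - (h.2:ℤ) := by
  intro fuel
  cases fuel with
  | zero =>
    intro F h htz
    exact ⟨(h.1+1, h.2), rfl, by simp only [cellfst, cellsnd]; omega⟩
  | succ fuel =>
    intro F h htz
    rw [slideIter_succ]
    by_cases hg : F (h.1 + 1, h.2) = 0 ∧ F (h.1, h.2 + 1) = 0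
    · rw [if_pos hg]
      exact ⟨(h.1+1, h.2), rfl, by simp only [cellfst, cellsnd]; omega⟩
    · rw [if_neg hg]
      rcases slide_cases hg with ⟨he, hr, hc⟩ | ⟨he, hu, hc⟩
      · rw [he]
        refine ⟨h, ?_, by omega⟩
        rw [frozen fuel _ _ _ (by left; simp only [cellfst, cellsnd]; omega)]
        exact updR_self
      · rw [he]
        refine ⟨(h.1+1, h.2), ?_, by simp only [cellfst, cellsnd]; omega⟩
        rw [frozen fuel _ _ _ (by right; simp only [cellfst, cellsnd]; omega)]
        exact updU_other (ne_fst (by simp only [cellfst]; omega))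
          (ne_fst (by simp only [cellfst]; omega))

lemma notPieri_future_above (hkn : k + 1 ≤ n) (pt : PT n F h) {s t : ℕ} {c : Cell}
    (hs : F c = s) (ht : F (h.1, h.2+1) = t) (hins : InS n k s) (hint : InS n k t)
    (hst : s < t) (hcf : c.1 < h.1 ∨ c.2 < h.2)
    (hbad : (h.1:ℤ) - (h.2:ℤ) ≤ (c.1:ℤ) - (c.2:ℤ)) :
    ∀ fuel, ¬ PieriV (slideIter fuel F h).1 n k := by
  intro fuel
  have pt' := PT_iter fuel F h pt
  obtain ⟨d, hd, hdc⟩ := above_moves fuel F h (by rw [ht]; exact hint.ne_zero hkn)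
  have hc' : (slideIter fuel F h).1 c = s := by rw [frozen fuel F h c hcf]; exact hs
  have hd' : (slideIter fuel F h).1 d = t := by rw [hd, ht]
  exact not_pieriV_of_bad hkn pt' hc' hd' hins hint hst (by omega)

lemma notPieri_future_right (hkn : k + 1 ≤ n) (pt : PT n F h) {s t : ℕ} {c : Cell}
    (hs : F c = s) (ht : F (h.1+1, h.2) = t) (hins : InS n k s) (hint : InS n k t)
    (hst : s < t) (hcf : c.1 < h.1 ∨ c.2 < h.2)
    (hbad : (h.1:ℤ) + 1 - (h.2:ℤ) ≤ (c.1:ℤ) - (c.2:ℤ)) :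
    ∀ fuel, ¬ PieriV (slideIter fuel F h).1 n k := by
  intro fuel
  have pt' := PT_iter fuel F h pt
  obtain ⟨d, hd, hdc⟩ := right_moves fuel F h (by rw [ht]; exact hint.ne_zero hkn)
  have hc' : (slideIter fuel F h).1 c = s := by rw [frozen fuel F h c hcf]; exact hs
  have hd' : (slideIter fuel F h).1 d = t := by rw [hd, ht]
  exact not_pieriV_of_bad hkn pt' hc' hd' hins hint hst (by omega)

end Stmt5
namespace Stmt5

variable {n k : ℕ} {F F' : Filling} {h : Cell}

theorem stepR (hkn : k + 1 ≤ n) (pt : PT n F h)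
    (hinv : Kp n k F h ∨ Qp n k F h) (hr : F (h.1+1, h.2) ≠ 0)
    (hcnd : F (h.1, h.2+1) = 0 ∨ F (h.1+1, h.2) < F (h.1, h.2+1)) :
    ((Kp n k (updR F h) (h.1+1, h.2) ∨ Qp n k (updR F h) (h.1+1, h.2)) ∧
      (PieriV F n k ↔ PieriV (updR F h) n k))
    ∨ ((¬ PieriV F n k) ∧
      ∀ fuel, ¬ PieriV (slideIter fuel (updR F h) (h.1+1, h.2)).1 n k) := by
  have pt' := PT_slideR pt hr hcnd
  by_cases hrS : InS n k (F (h.1+1, h.2))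
  · -- the moved entry is one of the k largest
    by_cases hup : F (h.1+1, h.2+1) = 0
    · by_cases hbelow : ∃ b : ℕ, b < h.2 ∧ InS n k (F (h.1+1, b))
      · -- BAD: a large entry in column h.1+1 strictly below the hole row
        right
        obtain ⟨b, hb, hbS⟩ := hbelow
        have hlt : F (h.1+1, b) < F (h.1+1, h.2) := monoY_chain pt (by omega) hb hr
        constructor
        · exact not_pieriV_of_bad hkn pt (rfl : F (h.1+1,b) = _) (rfl : F (h.1+1,h.2) = _)
            hbS hrS hlt (by simp only [cellfst, cellsnd]; omega)
        · exact notPieri_future_frozen hkn pt'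
            (updR_other (ne_snd (by simp only [cellsnd]; omega))
              (ne_snd (by simp only [cellsnd]; omega)))
            updR_self hbS hrS hlt
            (by right; simp only [cellfst, cellsnd]; omega)
            (by left; simp only [cellfst, cellsnd]; omega)
            (by simp only [cellfst, cellsnd]; omega)
      · -- GOOD case: establish Qp and the shift equivalence
        push_neg at hbelow
        left
        have alpha : ∀ c : Cell, InS n k (F c) → (c.1:ℤ) - (c.2:ℤ) ≠ (h.1:ℤ) - (h.2:ℤ) := by
          intro c hS
          obtain ⟨c1, c2⟩ := c
          simp only [cellfst, cellsnd]
          intro hceq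
          have hnz : F (c1,c2) ≠ 0 := fun h0 => (by rw [h0] at hS; exact hS.ne_zero hkn rfl)
          rcases Nat.lt_or_ge h.1 c1 with hgt | hle
          · have hmem := closure pt (h.1+1) (h.2+1) (by omega) (by omega) (mem_of_ne_zero hnz)
            exact (ne_zero_of_mem_y pt (by omega) hmem) hup
          · rcases hinv with hK | hQ
            · exact hK (c1,c2) (by simp only [cellfst]; omega)
                (by simp only [cellsnd]; omega) hS
            · exact hQ.2.1 (c1,c2) hS (by simp only [cellfst, cellsnd]; omega)
        have beta : ∀ c : Cell, InS n k (F c) → c ≠ ((h.1+1,h.2) : Cell) →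
            (c.1:ℤ) - (c.2:ℤ) ≠ (h.1:ℤ) + 1 - (h.2:ℤ) := by
          intro c hS hne
          obtain ⟨c1, c2⟩ := c
          simp only [cellfst, cellsnd]
          intro hceq
          have hnz : F (c1,c2) ≠ 0 := fun h0 => (by rw [h0] at hS; exact hS.ne_zero hkn rfl)
          rcases Nat.lt_or_ge (h.1+1) c1 with hgt | hle
          · have hmem := closure pt (h.1+1) (h.2+1) (by omega) (by omega) (mem_of_ne_zero hnz)
            exact (ne_zero_of_mem_y pt (by omega) hmem) hup
          · rcases Nat.lt_or_ge c1 (h.1+1) with hlt2 | heq1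
            · rcases hinv with hK | hQ
              · exact hK (c1,c2) (by simp only [cellfst]; omega)
                  (by simp only [cellsnd]; omega) hS
              · exact hQ.2.2 (c1,c2) (by simp only [cellfst]; omega)
                  (by simp only [cellsnd]; omega) hS
            · exact hne (cellmk_eq (by omega) (by omega))
        constructor
        · right
          refine ⟨?_, ?_, ?_⟩
          · show updR F h (h.1+1, h.2+1) = 0
            rw [updR_other (ne_snd (by simp only [cellsnd]; omega))
              (ne_snd (by simp only [cellsnd]; omega))]
            exact hup
          · intro c hS
            show (c.1:ℤ) - (c.2:ℤ) ≠ ((h.1+1 : ℕ):ℤ) - (h.2:ℤ)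
            by_cases e1 : c = h
            · rw [e1, updR_self] at hS
              rw [e1]
              push_cast
              omega
            · by_cases e2 : c = ((h.1+1, h.2) : Cell)
              · rw [e2, updR_from] at hS
                exact absurd rfl (hS.ne_zero hkn)
              · rw [updR_other e1 e2] at hS
                have hb := beta c hS e2
                push_cast at hb ⊢
                omega
          · intro c hc1 hc2
            show ¬ InS n k (updR F h c)
            by_cases e1 : c = h
            · exfalso
              rw [e1] at hc2
              simp only [cellsnd] at hc2
              omega
            · by_cases e2 : c = ((h.1+1,h.2) : Cell)
              · exfalso
                rw [e2] at hc2
                simp only [cellsnd] at hc2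
                omega
              · rw [updR_other e1 e2]
                obtain ⟨c1, c2⟩ := c
                simp only [cellfst, cellsnd] at hc1 hc2
                rcases Nat.lt_or_ge c1 (h.1+1) with hx | hx
                · rcases hinv with hK | hQ
                  · exact hK (c1,c2) (by simp only [cellfst]; omega)
                      (by simp only [cellsnd]; omega)
                  · exact hQ.2.2 (c1,c2) (by simp only [cellfst]; omega)
                      (by simp only [cellsnd]; omega)
                · have hc1e : c1 = h.1+1 := by omega
                  subst hc1e
                  exact hbelow c2 hc2
        · -- the shift equivalence
          have hce : content F (F (h.1+1,h.2)) = (h.1:ℤ) + 1 - (h.2:ℤ) := by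
            rw [content_eq (pt.uniq _ (hrS.two_le hkn) hrS.2) (rfl : F (h.1+1,h.2) = _)]
            simp only [cellfst, cellsnd]
            push_cast
            ring
          have hce' : content (updR F h) (F (h.1+1,h.2)) = (h.1:ℤ) - (h.2:ℤ) :=
            content_eq (pt'.uniq _ (hrS.two_le hkn) hrS.2) updR_self
          have hsame : ∀ v, InS n k v → v ≠ F (h.1+1,h.2) →
              content (updR F h) v = content F v := by
            intro v hv hne
            obtain ⟨c, hc, hcu⟩ := pt.uniq v (hv.two_le hkn) hv.2
            have hch : c ≠ h := by
              intro hh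
              rw [hh, pt.hole] at hc
              have := hv.two_le hkn
              omega
            have hcr : c ≠ ((h.1+1,h.2) : Cell) := by
              intro hh
              rw [hh] at hc
              exact hne hc.symm
            have hc' : updR F h c = v := by rw [updR_other hch hcr]; exact hc
            rw [content_eq (pt'.uniq v (hv.two_le hkn) hv.2) hc',
              content_eq (pt.uniq v (hv.two_le hkn) hv.2) hc]
          have havoid : ∀ v, InS n k v → v ≠ F (h.1+1,h.2) →
              content F v ≠ (h.1:ℤ) + 1 - (h.2:ℤ) ∧ content F v ≠ (h.1:ℤ) - (h.2:ℤ) := by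
            intro v hv hne
            obtain ⟨c, hc, hcu⟩ := pt.uniq v (hv.two_le hkn) hv.2
            have hcr : c ≠ ((h.1+1,h.2) : Cell) := by
              intro hh
              rw [hh] at hc
              exact hne hc.symm
            have hSc : InS n k (F c) := by rw [hc]; exact hv
            constructor
            · rw [content_eq (pt.uniq v (hv.two_le hkn) hv.2) hc]
              exact beta c hSc hcr
            · rw [content_eq (pt.uniq v (hv.two_le hkn) hv.2) hc]
              exact alpha c hSc
          exact pieriV_shift hkn hrS (Or.inr (by ring)) hce hce' hsame havoid
    · -- BAD: occupied box above the moved entry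
      right
      have humem : F (h.1, h.2+1) ≠ 0 :=
        ne_zero_of_mem_y pt (by omega) (pt.closeX h.1 (h.2+1) (mem_of_ne_zero hup))
      have hru : F (h.1+1, h.2) < F (h.1, h.2+1) := by
        rcases hcnd with hc | hc
        · exact absurd hc humem
        · exact hc
      have huS : InS n k (F (h.1, h.2+1)) := ⟨by have := hrS.1; omega, pt.bound _⟩
      constructor
      · exact not_pieriV_of_bad hkn pt (rfl : F (h.1+1,h.2) = _) (rfl : F (h.1,h.2+1) = _)
          hrS huS hru (by simp only [cellfst, cellsnd]; push_cast; omega)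
      · exact notPieri_future_frozen hkn pt' updR_self
          (updR_other (ne_snd (by simp only [cellsnd]; omega))
            (ne_fst (by simp only [cellfst]; omega)))
          hrS huS hru
          (by left; simp only [cellfst, cellsnd]; omega)
          (by left; simp only [cellfst, cellsnd]; omega)
          (by simp only [cellfst, cellsnd]; push_cast; omega)
  · -- the moved entry is small: contents of large entries unchanged
    left
    constructor
    · rcases hinv with hK | hQ
      · left
        intro c hc1 hc2
        by_cases e1 : c = h
        · rw [e1, updR_self]
          exact hrS
        · by_cases e2 : c = ((h.1+1, h.2) : Cell)
          · rw [e2, updR_from]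
            exact fun hS => (hS.ne_zero hkn) rfl
          · rw [updR_other e1 e2]
            obtain ⟨c1, c2⟩ := c
            simp only [cellfst, cellsnd] at hc1 hc2
            rcases Nat.lt_or_ge c1 (h.1+1) with hx | hx
            · exact hK (c1,c2) (by simp only [cellfst]; omega)
                (by simp only [cellsnd]; omega)
            · have hc1e : c1 = h.1 + 1 := by omega
              have hc2e : c2 < h.2 := by
                rcases Nat.lt_or_ge c2 h.2 with hy | hy
                · exact hy
                · exact absurd (cellmk_eq hc1e (by omega)) e2
              subst hc1e
              have hlt : F (h.1+1, c2) < F (h.1+1, h.2) :=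
                monoY_chain pt (by omega) hc2e hr
              intro hS
              have hb := pt.bound (h.1+1, h.2)
              have hs2 : ¬ (n - k + 1 ≤ F (h.1+1, h.2)) := fun hx' => hrS ⟨hx', hb⟩
              rcases hS with ⟨i1, i2⟩
              omega
      · right
        obtain ⟨hQ1, hQ2, hQ3⟩ := hQ
        have hx11 : F (h.1+1, h.2+1) = 0 := by
          by_contra hnz
          have hmem := pt.closeX h.1 (h.2+1) (mem_of_ne_zero hnz)
          exact (ne_zero_of_mem_y pt (by omega) hmem) hQ1
        refine ⟨?_, ?_, ?_⟩
        · show updR F h (h.1+1, h.2+1) = 0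
          rw [updR_other (ne_snd (by simp only [cellsnd]; omega))
            (ne_snd (by simp only [cellsnd]; omega))]
          exact hx11
        · intro c hS
          show (c.1:ℤ) - (c.2:ℤ) ≠ ((h.1+1 : ℕ):ℤ) - (h.2:ℤ)
          by_cases e1 : c = h
          · exfalso
            rw [e1, updR_self] at hS
            exact hrS hS
          · by_cases e2 : c = ((h.1+1,h.2) : Cell)
            · rw [e2, updR_from] at hS
              exact absurd rfl (hS.ne_zero hkn)
            · rw [updR_other e1 e2] at hS
              obtain ⟨c1, c2⟩ := c
              simp only [cellfst, cellsnd]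
              intro hceq
              push_cast at hceq
              rcases Nat.lt_or_ge c1 (h.1+1) with hx | hx
              · exact hQ3 (c1,c2) (by simp only [cellfst]; omega)
                  (by simp only [cellsnd]; omega) hS
              · rcases Nat.lt_or_ge c1 (h.1+2) with hx2 | hx2
                · exact e2 (cellmk_eq (by omega) (by omega))
                · have hnz : F (c1,c2) ≠ 0 := fun h0 =>
                    (by rw [h0] at hS; exact hS.ne_zero hkn rfl)
                  have hmem := closure pt (h.1+1) (h.2+1) (by omega) (by omega)
                    (mem_of_ne_zero hnz)
                  exact (ne_zero_of_mem_y pt (by omega) hmem) hx11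
        · intro c hc1 hc2
          show ¬ InS n k (updR F h c)
          by_cases e1 : c = h
          · rw [e1, updR_self]
            exact hrS
          · by_cases e2 : c = ((h.1+1,h.2) : Cell)
            · rw [e2, updR_from]
              exact fun hS => (hS.ne_zero hkn) rfl
            · rw [updR_other e1 e2]
              obtain ⟨c1, c2⟩ := c
              simp only [cellfst, cellsnd] at hc1 hc2
              rcases Nat.lt_or_ge c1 (h.1+1) with hx | hx
              · exact hQ3 (c1,c2) (by simp only [cellfst]; omega)
                  (by simp only [cellsnd]; omega)
              · have hc1e : c1 = h.1+1 := by omega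
                subst hc1e
                have hlt : F (h.1+1, c2) < F (h.1+1, h.2) :=
                  monoY_chain pt (by omega) hc2 hr
                intro hS
                have hb := pt.bound (h.1+1, h.2)
                have hs2 : ¬ (n - k + 1 ≤ F (h.1+1, h.2)) := fun hx' => hrS ⟨hx', hb⟩
                rcases hS with ⟨i1, i2⟩
                omega
    · apply pieriV_congr hkn
      intro v hv
      obtain ⟨c, hc, hcu⟩ := pt.uniq v (hv.two_le hkn) hv.2
      have hch : c ≠ h := by
        intro hh
        rw [hh, pt.hole] at hc
        have := hv.two_le hkn
        omega
      have hcr : c ≠ ((h.1+1, h.2) : Cell) := by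
        intro hh
        rw [hh] at hc
        rw [← hc] at hv
        exact hrS hv
      have hc' : updR F h c = v := by rw [updR_other hch hcr]; exact hc
      rw [content_eq (pt.uniq v (hv.two_le hkn) hv.2) hc,
        content_eq (pt'.uniq v (hv.two_le hkn) hv.2) hc']

end Stmt5
namespace Stmt5

variable {n k : ℕ} {F F' : Filling} {h : Cell}

theorem stepU (hkn : k + 1 ≤ n) (pt : PT n F h)
    (hinv : Kp n k F h ∨ Qp n k F h) (hu : F (h.1, h.2+1) ≠ 0)
    (hcnd : F (h.1+1, h.2) = 0 ∨ F (h.1, h.2+1) < F (h.1+1, h.2)) :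
    ((Kp n k (updU F h) (h.1, h.2+1) ∨ Qp n k (updU F h) (h.1, h.2+1)) ∧
      (PieriV F n k ↔ PieriV (updU F h) n k))
    ∨ ((∀ fuel, (slideIter fuel (updU F h) (h.1, h.2+1)).1 = updU F h) ∧
      (PieriV F n k ↔ PieriV (updU F h) n k))
    ∨ ((¬ PieriV F n k) ∧
      ∀ fuel, ¬ PieriV (slideIter fuel (updU F h) (h.1, h.2+1)).1 n k) := by
  have pt' := PT_slideU pt hu hcnd
  rcases hinv with hK | hQ
  swap
  · exact absurd hQ.1 hu
  by_cases huS : InS n k (F (h.1, h.2+1))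
  · by_cases hw0 : F (h.1, h.2+2) = 0
    · by_cases hright : F (h.1+1, h.2+1) = 0
      · -- terminal GOOD case
        right; left
        have hstop1 : updU F h (h.1+1, h.2+1) = 0 := by
          rw [updU_other (ne_snd (by simp only [cellsnd]; omega))
            (ne_fst (by simp only [cellfst]; omega))]
          exact hright
        have hstop2 : updU F h (h.1, h.2+2) = 0 := by
          rw [updU_other (ne_snd (by simp only [cellsnd]; omega))
            (ne_snd (by simp only [cellsnd]; omega))]
          exact hw0
        constructor
        · intro fuel
          rw [slideIter_stop hstop1 hstop2 fuel]
        · have alpha : ∀ c : Cell, InS n k (F c) → c ≠ ((h.1, h.2+1) : Cell) →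
              (c.1:ℤ) - (c.2:ℤ) ≠ (h.1:ℤ) - (h.2:ℤ) - 1 := by
            intro c hS hne
            obtain ⟨c1, c2⟩ := c
            simp only [cellfst, cellsnd]
            intro hceq
            have hnz : F (c1,c2) ≠ 0 := fun h0 => (by rw [h0] at hS; exact hS.ne_zero hkn rfl)
            rcases Nat.lt_or_ge h.1 c1 with hgt | hle
            · have hmem := closure pt (h.1+1) (h.2+2) (by omega) (by omega)
                (mem_of_ne_zero hnz)
              have hmem2 := pt.closeX h.1 (h.2+2) hmem
              exact (ne_zero_of_mem_y pt (by omega) hmem2) hw0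
            · rcases Nat.lt_or_ge c1 h.1 with hlt2 | heq1
              · exact hK (c1,c2) (by simp only [cellfst]; omega)
                  (by simp only [cellsnd]; omega) hS
              · exact hne (cellmk_eq (by omega) (by omega))
          have beta : ∀ c : Cell, InS n k (F c) →
              (c.1:ℤ) - (c.2:ℤ) ≠ (h.1:ℤ) - (h.2:ℤ) := by
            intro c hS
            obtain ⟨c1, c2⟩ := c
            simp only [cellfst, cellsnd]
            intro hceq
            have hnz : F (c1,c2) ≠ 0 := fun h0 => (by rw [h0] at hS; exact hS.ne_zero hkn rfl)
            rcases Nat.lt_or_ge h.1 c1 with hgt | hle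
            · have hmem := closure pt (h.1+1) (h.2+1) (by omega) (by omega)
                (mem_of_ne_zero hnz)
              exact (ne_zero_of_mem_x pt (by omega) hmem) hright
            · rcases Nat.lt_or_ge c1 h.1 with hlt2 | heq1
              · exact hK (c1,c2) (by simp only [cellfst]; omega)
                  (by simp only [cellsnd]; omega) hS
              · have hch : ((c1,c2) : Cell) = (h.1, h.2) := cellmk_eq (by omega) (by omega)
                rw [heta] at hch
                rw [hch, pt.hole] at hS
                exact hS.ne_zero hkn rfl
          have hce : content F (F (h.1,h.2+1)) = (h.1:ℤ) - (h.2:ℤ) - 1 := by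
            rw [content_eq (pt.uniq _ (huS.two_le hkn) huS.2) (rfl : F (h.1,h.2+1) = _)]
            simp only [cellfst, cellsnd]
            push_cast
            ring
          have hce' : content (updU F h) (F (h.1,h.2+1)) = (h.1:ℤ) - (h.2:ℤ) :=
            content_eq (pt'.uniq _ (huS.two_le hkn) huS.2) updU_self
          have hsame : ∀ v, InS n k v → v ≠ F (h.1,h.2+1) →
              content (updU F h) v = content F v := by
            intro v hv hne
            obtain ⟨c, hc, hcu⟩ := pt.uniq v (hv.two_le hkn) hv.2
            have hch : c ≠ h := by
              intro hh
              rw [hh, pt.hole] at hc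
              have := hv.two_le hkn
              omega
            have hcr : c ≠ ((h.1,h.2+1) : Cell) := by
              intro hh
              rw [hh] at hc
              exact hne hc.symm
            have hc' : updU F h c = v := by rw [updU_other hch hcr]; exact hc
            rw [content_eq (pt'.uniq v (hv.two_le hkn) hv.2) hc',
              content_eq (pt.uniq v (hv.two_le hkn) hv.2) hc]
          have havoid : ∀ v, InS n k v → v ≠ F (h.1,h.2+1) →
              content F v ≠ (h.1:ℤ) - (h.2:ℤ) - 1 ∧ content F v ≠ (h.1:ℤ) - (h.2:ℤ) := by
            intro v hv hne
            obtain ⟨c, hc, hcu⟩ := pt.uniq v (hv.two_le hkn) hv.2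
            have hcr : c ≠ ((h.1,h.2+1) : Cell) := by
              intro hh
              rw [hh] at hc
              exact hne hc.symm
            have hSc : InS n k (F c) := by rw [hc]; exact hv
            constructor
            · rw [content_eq (pt.uniq v (hv.two_le hkn) hv.2) hc]
              exact alpha c hSc hcr
            · rw [content_eq (pt.uniq v (hv.two_le hkn) hv.2) hc]
              exact beta c hSc
          exact pieriV_shift hkn huS (Or.inl (by ring)) hce hce' hsame havoid
      · -- BAD: occupied box north-east of the hole
        right; right
        have hr0 : F (h.1+1, h.2) ≠ 0 :=
          ne_zero_of_mem_x pt (by omega) (pt.closeY (h.1+1) h.2 (mem_of_ne_zero hright))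
        have hur : F (h.1, h.2+1) < F (h.1+1, h.2) := by
          rcases hcnd with hc | hc
          · exact absurd hc hr0
          · exact hc
        have hrS : InS n k (F (h.1+1, h.2)) := ⟨by have := huS.1; omega, pt.bound _⟩
        have htlt : F (h.1+1, h.2) < F (h.1+1, h.2+1) := pt.monoY (h.1+1) h.2 hr0 hright
        have htS : InS n k (F (h.1+1, h.2+1)) := ⟨by have := hrS.1; omega, pt.bound _⟩
        constructor
        · exact not_pieriV_of_bad hkn pt (rfl : F (h.1+1,h.2) = _)
            (rfl : F (h.1+1,h.2+1) = _) hrS htS htlt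
            (by simp only [cellfst, cellsnd]; push_cast; omega)
        · exact notPieri_future_right hkn pt'
            (updU_other (ne_fst (by simp only [cellfst]; omega))
              (ne_fst (by simp only [cellfst]; omega)))
            (updU_other (ne_snd (by simp only [cellsnd]; omega))
              (ne_fst (by simp only [cellfst]; omega)))
            hrS htS htlt
            (by right; simp only [cellfst, cellsnd]; omega)
            (by simp only [cellfst, cellsnd]; push_cast; omega)
    · -- BAD: occupied box two above the hole
      right; right
      have hwlt : F (h.1, h.2+1) < F (h.1, h.2+2) := pt.monoY h.1 (h.2+1) hu hw0
      have hwS : InS n k (F (h.1, h.2+2)) := ⟨by have := huS.1; omega, pt.bound _⟩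
      constructor
      · exact not_pieriV_of_bad hkn pt (rfl : F (h.1,h.2+1) = _) (rfl : F (h.1,h.2+2) = _)
          huS hwS hwlt (by simp only [cellfst, cellsnd]; push_cast; omega)
      · exact notPieri_future_above hkn pt' updU_self
          (updU_other (ne_snd (by simp only [cellsnd]; omega))
            (ne_snd (by simp only [cellsnd]; omega)))
          huS hwS hwlt
          (by right; simp only [cellfst, cellsnd]; omega)
          (by simp only [cellfst, cellsnd]; push_cast; omega)
  · -- the moved entry is small
    left
    constructor
    · left
      intro c hc1 hc2
      by_cases e1 : c = h
      · rw [e1, updU_self]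
        exact huS
      · by_cases e2 : c = ((h.1, h.2+1) : Cell)
        · rw [e2, updU_from]
          exact fun hS => (hS.ne_zero hkn) rfl
        · rw [updU_other e1 e2]
          obtain ⟨c1, c2⟩ := c
          simp only [cellfst, cellsnd] at hc1 hc2
          rcases Nat.lt_or_ge c2 (h.2+1) with hy | hy
          · exact hK (c1,c2) (by simp only [cellfst]; omega)
              (by simp only [cellsnd]; omega)
          · have hc2e : c2 = h.2 + 1 := by omega
            have hc1e : c1 < h.1 := by
              rcases Nat.lt_or_ge c1 h.1 with hx | hx
              · exact hx
              · exact absurd (cellmk_eq (by omega) hc2e) e2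
            subst hc2e
            have hlt : F (c1, h.2+1) < F (h.1, h.2+1) :=
              monoX_chain pt (by omega) hc1e hu
            intro hS
            have hb := pt.bound (h.1, h.2+1)
            have hs2 : ¬ (n - k + 1 ≤ F (h.1, h.2+1)) := fun hx' => huS ⟨hx', hb⟩
            rcases hS with ⟨i1, i2⟩
            omega
    · apply pieriV_congr hkn
      intro v hv
      obtain ⟨c, hc, hcu⟩ := pt.uniq v (hv.two_le hkn) hv.2
      have hch : c ≠ h := by
        intro hh
        rw [hh, pt.hole] at hc
        have := hv.two_le hkn
        omega
      have hcr : c ≠ ((h.1, h.2+1) : Cell) := by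
        intro hh
        rw [hh] at hc
        rw [← hc] at hv
        exact huS hv
      have hc' : updU F h c = v := by rw [updU_other hch hcr]; exact hc
      rw [content_eq (pt.uniq v (hv.two_le hkn) hv.2) hc,
        content_eq (pt'.uniq v (hv.two_le hkn) hv.2) hc']

end Stmt5
namespace Stmt5

variable {n k : ℕ}

theorem fwd (hkn : k + 1 ≤ n) : ∀ (fuel : ℕ) (F : Filling) (h : Cell), PT n F h →
    (Kp n k F h ∨ Qp n k F h) → PieriV F n k → PieriV (slideIter fuel F h).1 n k := by
  intro fuel
  induction fuel with
  | zero => intro F h _ _ hp; exact hp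
  | succ fuel ih =>
    intro F h pt hinv hp
    rw [slideIter_succ]
    by_cases hg : F (h.1 + 1, h.2) = 0 ∧ F (h.1, h.2 + 1) = 0
    · rw [if_pos hg]; exact hp
    · rw [if_neg hg]
      rcases slide_cases hg with ⟨he, hr, hc⟩ | ⟨he, hu, hc⟩
      · rw [he]
        have pt' := PT_slideR pt hr hc
        rcases stepR hkn pt hinv hr hc with ⟨hinv', hiff⟩ | ⟨hnp, _⟩
        · exact ih _ _ pt' hinv' (hiff.mp hp)
        · exact absurd hp hnp
      · rw [he]
        have hc' := up_cond pt hu hc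
        have pt' := PT_slideU pt hu hc'
        rcases stepU hkn pt hinv hu hc' with ⟨hinv', hiff⟩ | ⟨hterm, hiff⟩ | ⟨hnp, _⟩
        · exact ih _ _ pt' hinv' (hiff.mp hp)
        · rw [hterm fuel]
          exact hiff.mp hp
        · exact absurd hp hnp

theorem bwd (hkn : k + 1 ≤ n) : ∀ (fuel : ℕ) (F : Filling) (h : Cell), PT n F h →
    (Kp n k F h ∨ Qp n k F h) → PieriV (slideIter fuel F h).1 n k → PieriV F n k := by
  intro fuel
  induction fuel with
  | zero => intro F h _ _ hp; exact hp
  | succ fuel ih =>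
    intro F h pt hinv hp
    rw [slideIter_succ] at hp
    by_cases hg : F (h.1 + 1, h.2) = 0 ∧ F (h.1, h.2 + 1) = 0
    · rw [if_pos hg] at hp; exact hp
    · rw [if_neg hg] at hp
      rcases slide_cases hg with ⟨he, hr, hc⟩ | ⟨he, hu, hc⟩
      · rw [he] at hp
        have pt' := PT_slideR pt hr hc
        rcases stepR hkn pt hinv hr hc with ⟨hinv', hiff⟩ | ⟨_, hfut⟩
        · exact hiff.mpr (ih _ _ pt' hinv' hp)
        · exact absurd hp (hfut fuel)
      · rw [he] at hp
        have hc' := up_cond pt hu hc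
        have pt' := PT_slideU pt hu hc'
        rcases stepU hkn pt hinv hu hc' with ⟨hinv', hiff⟩ | ⟨hterm, hiff⟩ | ⟨_, hfut⟩
        · exact hiff.mpr (ih _ _ pt' hinv' hp)
        · rw [hterm fuel] at hp
          exact hiff.mpr hp
        · exact absurd hp (hfut fuel)

lemma pieri_iff (hk : 1 ≤ k) (hkn : k + 1 ≤ n) (F : Filling) :
    IsPieri F n k ↔ PieriV F n k := by
  unfold IsPieri PieriV
  constructor
  · intro hp s hs hsn
    have := hp (s - (n-k)) (by omega) (by omega)
    have e1 : n - k + (s - (n-k)) = s := by omega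
    rw [e1] at this
    exact this
  · intro hp p h1 h2
    exact hp (n-k+p) (by omega) (by omega)

def F0def (M : Filling) : Filling := fun c => if c = ((0,0) : Cell) then 0 else M c

lemma F0_ne (M : Filling) {c : Cell} (hc : c ≠ (0,0)) : F0def M c = M c := if_neg hc

lemma F0_00 (M : Filling) : F0def M (0,0) = 0 := if_pos rfl

end Stmt5

open Stmt5 in
theorem stmt5' (k n : ℕ) (hk : 1 ≤ k) (hn : k + 1 ≤ n) (M : Filling)
    (hM : IsStdFilling M 0 n) :
    IsPieri M n k ↔ IsPieri (jdt n M) n k := by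
  obtain ⟨hM1, hM2, hM3, hM4, hM5, hM6⟩ := hM
  obtain ⟨c1, hc1, hu1⟩ := hM1 1 (by omega) (by omega)
  have hM00 : M (0,0) = 1 := by
    obtain ⟨x, y⟩ := c1
    rcases x with _ | x
    · rcases y with _ | y
      · exact hc1
      · exfalso
        have hne : M (0, y+1) ≠ 0 := by rw [hc1]; omega
        have h0 : M (0, y) ≠ 0 := hM4 0 y hne
        have hlt := hM6 0 y hne
        rw [hc1] at hlt
        omega
    · exfalso
      have hne : M (x+1, y) ≠ 0 := by rw [hc1]; omega
      have h0 : M (x, y) ≠ 0 := hM3 x y hne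
      have hlt := hM5 x y hne
      rw [hc1] at hlt
      omega
  have hMv : ∀ c : Cell, c ≠ (0,0) → M c = 0 ∨ 2 ≤ M c := by
    intro c hc
    rcases (hM2 c).2 with h0 | h0
    · exact Or.inl h0
    · right
      by_cases h1 : M c = 1
      · exact absurd ((hu1 c h1).trans (hu1 (0,0) hM00).symm) hc
      · omega
  have ptF0 : PT n (F0def M) (0,0) := by
    constructor
    · intro v hv2 hvn
      obtain ⟨c, hc, hcu⟩ := hM1 v (by omega) hvn
      have hch : c ≠ ((0,0) : Cell) := by
        intro hh
        rw [hh, hM00] at hc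
        omega
      refine ⟨c, ?_, ?_⟩
      · show F0def M c = v
        rw [F0_ne M hch]
        exact hc
      · intro c' hc'
        have hc'' : F0def M c' = v := hc'
        have hch' : c' ≠ ((0,0) : Cell) := by
          intro hh
          rw [hh, F0_00 M] at hc''
          omega
        rw [F0_ne M hch'] at hc''
        exact hcu c' hc''
    · intro c
      by_cases hc : c = ((0,0) : Cell)
      · rw [hc, F0_00 M]
        exact Nat.zero_le n
      · rw [F0_ne M hc]
        exact (hM2 c).1
    · intro c
      by_cases hc : c = ((0,0) : Cell)
      · rw [hc, F0_00 M]
        exact Or.inl rfl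
      · rw [F0_ne M hc]
        exact hMv c hc
    · exact F0_00 M
    · intro x y hm
      rcases hm with hnz | heq
      · have hne1 : ((x+1,y) : Cell) ≠ (0,0) := ne_fst (by simp only [cellfst]; omega)
        rw [F0_ne M hne1] at hnz
        have h0 : M (x, y) ≠ 0 := hM3 x y hnz
        by_cases hc : ((x,y) : Cell) = (0,0)
        · exact Or.inr hc
        · left
          rw [F0_ne M hc]
          exact h0
      · exact absurd (congrArg Prod.fst heq) (by simp only [cellfst]; omega)
    · intro x y hm
      rcases hm with hnz | heq
      · have hne1 : ((x,y+1) : Cell) ≠ (0,0) := ne_snd (by simp only [cellsnd]; omega)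
        rw [F0_ne M hne1] at hnz
        have h0 : M (x, y) ≠ 0 := hM4 x y hnz
        by_cases hc : ((x,y) : Cell) = (0,0)
        · exact Or.inr hc
        · left
          rw [F0_ne M hc]
          exact h0
      · exact absurd (congrArg Prod.snd heq) (by simp only [cellsnd]; omega)
    · intro x y h1 h2
      have hne1 : ((x,y) : Cell) ≠ (0,0) := by
        intro hh
        rw [hh, F0_00 M] at h1
        exact h1 rfl
      have hne2 : ((x+1,y) : Cell) ≠ (0,0) := ne_fst (by simp only [cellfst]; omega)
      rw [F0_ne M hne1] at h1 ⊢
      rw [F0_ne M hne2] at h2 ⊢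
      exact hM5 x y h2
    · intro x y h1 h2
      have hne1 : ((x,y) : Cell) ≠ (0,0) := by
        intro hh
        rw [hh, F0_00 M] at h1
        exact h1 rfl
      have hne2 : ((x,y+1) : Cell) ≠ (0,0) := ne_snd (by simp only [cellsnd]; omega)
      rw [F0_ne M hne1] at h1 ⊢
      rw [F0_ne M hne2] at h2 ⊢
      exact hM6 x y h2
    · intro x y he
      exact absurd (congrArg Prod.fst he) (by simp only [cellfst]; omega)
    · intro x y he
      exact absurd (congrArg Prod.snd he) (by simp only [cellsnd]; omega)
  have hK0 : Kp n k (F0def M) (0,0) := by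
    intro c hc1 hc2
    obtain ⟨a, b⟩ := c
    simp only [cellfst, cellsnd] at hc1 hc2
    have ha : a = 0 := by omega
    have hb : b = 0 := by omega
    subst ha
    subst hb
    rw [F0_00 M]
    exact fun hS => hS.ne_zero hn rfl
  have hcont : ∀ v, InS n k v → content M v = content (F0def M) v := by
    intro v hv
    obtain ⟨c, hc, hcu⟩ := hM1 v (by have := hv.two_le hn; omega) hv.2
    have hch : c ≠ ((0,0) : Cell) := by
      intro hh
      rw [hh, hM00] at hc
      have := hv.two_le hn
      omega
    have hc' : F0def M c = v := by rw [F0_ne M hch]; exact hc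
    rw [content_eq ⟨c, hc, hcu⟩ hc,
      content_eq (ptF0.uniq v (hv.two_le hn) hv.2) hc']
  have hjdt : jdt n M = (slideIter n (F0def M) (0,0)).1 := rfl
  rw [pieri_iff hk hn M, pieri_iff hk hn (jdt n M), hjdt,
    pieriV_congr hn hcont]
  constructor
  · exact fun hp => fwd hn n (F0def M) (0,0) ptF0 (Or.inl hK0) hp
  · exact fun hp => bwd hn n (F0def M) (0,0) ptF0 (Or.inl hK0) hp

/-- Fix `k ≥ 1` and let `M` be a standard Young tableau with
`n ≥ k+1` boxes.  Then `M` is a Pieri tableau with respect to `k` if and only if `j(M)`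
is a Pieri tableau with respect to `k`.  (In both `M` and `j(M)` the `k` largest
entries are `n-k+1, …, n`.) -/
theorem stmt5 (k n : ℕ) (hk : 1 ≤ k) (hn : k + 1 ≤ n) (M : Filling)
    (hM : IsStdFilling M 0 n) :
    IsPieri M n k ↔ IsPieri (jdt n M) n k := by
  exact stmt5' k n hk hn M hM
end

section
/- Fix N ≥ 1 and 0 ≤ m ≤ N²−1, and set w := N²−m−1. Let λ be a Young diagram with w boxes contained in the square diagram □_N, and let S, S' ∈ 𝒯_λ. Then the number of tableaux T ∈ 𝒯_{□_N} with W'(T) = S equals the number of tableaux T ∈ 𝒯_{□_N} with W'(T) = S'. Equivalently, the conditional distribution of the water configuration W'(T) of a uniformly random T ∈ 𝒯_{□_N}, given that its shape is λ, is uniform on 𝒯_λ. -/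
/-!
Jeu de taquin can be undone once one knows where its hole ended: sliding backwards from that
cell, always moving the larger of the entries to the left of and below the hole, retraces the
path. Both directions are controlled by one invariant: the entries increase strictly along the
product order on the occupied cells, and these cells together with the hole form a Young diagram.

Hence, if `G'` is any standard filling of the shape of `j^m T`, undoing `m` steps of jeu de taquin
on `G'` along the holes of `T, j T, …, j^(m-1) T` gives a square tableau `T'` with the same holes
and `j^m T' = G'`. Now `j^m T` is the water configuration `W'(T)` shifted up by `m`, together with
the entry `N²` in some cell `c`. Replacing `W'(T) = S` by a tableau `S'` of the same shape, with
`N²` kept at `c`, thus maps the tableaux with `W' = S` to those with `W' = S'`, and the same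
construction with `S` and `S'` exchanged is its inverse.
-/

open Set Function

@[simp] lemma mem_shape {F : Filling} {c : Cell} : c ∈ shape F ↔ F c ≠ 0 := Iff.rfl

lemma hasShape_iff {F : Filling} {s : Finset Cell} : HasShape F s ↔ shape F = ↑s := by
  simp only [HasShape, Set.ext_iff, mem_shape, Finset.mem_coe]
  exact forall_congr' fun _ => Iff.comm

lemma entries_iff_bijOn {F : Filling} {a n : ℕ} :
    ((∀ k, a < k → k ≤ n → ∃! c : Cell, F c = k) ∧
        ∀ c : Cell, F c ≤ n ∧ (F c = 0 ∨ a < F c)) ↔ BijOn F (shape F) (Ioc a n) := by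
  constructor
  · rintro ⟨huniq, hvals⟩
    have hmaps : MapsTo F (shape F) (Ioc a n) := fun c hc =>
      ⟨(hvals c).2.resolve_left hc, (hvals c).1⟩
    refine ⟨hmaps, fun c hc c' _ e => ?_, fun k hk => ?_⟩
    · obtain ⟨d, -, hd⟩ := huniq (F c) (hmaps hc).1 (hmaps hc).2
      exact (hd c rfl).trans (hd c' e.symm).symm
    · obtain ⟨c, hc, -⟩ := huniq k hk.1 hk.2
      exact ⟨c, by simp only [mem_shape, hc]; exact ((Nat.zero_le a).trans_lt hk.1).ne', hc⟩
  · intro h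
    refine ⟨fun k hk hkn => ?_, fun c => ?_⟩
    · obtain ⟨c, hc, rfl⟩ := h.surjOn ⟨hk, hkn⟩
      exact ⟨c, rfl, fun c' e => h.injOn (by simp only [mem_shape, e]; exact hc) hc e⟩
    · by_cases hc : F c = 0
      · simp [hc]
      · exact ⟨(h.mapsTo hc).2, Or.inr (h.mapsTo hc).1⟩

lemma isLowerSet_iff_step {s : Set Cell} :
    IsLowerSet s ↔ ∀ x y : ℕ, ((x + 1, y) ∈ s → (x, y) ∈ s) ∧
      ((x, y + 1) ∈ s → (x, y) ∈ s) := by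
  refine ⟨fun hs x y => ⟨hs (by simp), hs (by simp)⟩, fun hs => ?_⟩
  have hx : ∀ d x y, (x + d, y) ∈ s → (x, y) ∈ s := by
    intro d; induction d with
    | zero => exact fun _ _ h => h
    | succ d ih => exact fun x y h => ih x y ((hs (x + d) y).1 h)
  have hy : ∀ d x y, (x, y + d) ∈ s → (x, y) ∈ s := by
    intro d; induction d with
    | zero => exact fun _ _ h => h
    | succ d ih => exact fun x y h => ih x y ((hs x (y + d)).2 h)
  rintro ⟨x', y'⟩ ⟨x, y⟩ ⟨hle1, hle2⟩ hc
  obtain ⟨d, rfl⟩ := Nat.exists_eq_add_of_le hle1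
  obtain ⟨e, rfl⟩ := Nat.exists_eq_add_of_le hle2
  exact hy e x y (hx d x (y + e) hc)

lemma origin_le (c : Cell) : ((0, 0) : Cell) ≤ c := ⟨Nat.zero_le _, Nat.zero_le _⟩

lemma add_le_of_step {s : Set Cell} (hs : IsLowerSet s) {f : Cell → ℕ}
    (hx : ∀ x y, (x + 1, y) ∈ s → f (x, y) < f (x + 1, y))
    (hy : ∀ x y, (x, y + 1) ∈ s → f (x, y) < f (x, y + 1))
    {c c' : Cell} (hle : c ≤ c') (hc' : c' ∈ s) :
    f c + (c'.1 - c.1) + (c'.2 - c.2) ≤ f c' := by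
  have hrow : ∀ d x y, (x + d, y) ∈ s → f (x, y) + d ≤ f (x + d, y) := by
    intro d; induction d with
    | zero => simp
    | succ d ih =>
      intro x y h
      show f (x, y) + (d + 1) ≤ f (x + d + 1, y)
      have := ih x y (hs (Prod.mk_le_mk.2 ⟨by omega, le_rfl⟩) h)
      have := hx (x + d) y h
      omega
  have hcol : ∀ d x y, (x, y + d) ∈ s → f (x, y) + d ≤ f (x, y + d) := by
    intro d; induction d with
    | zero => simp
    | succ d ih =>
      intro x y h
      show f (x, y) + (d + 1) ≤ f (x, y + d + 1)
      have := ih x y (hs (Prod.mk_le_mk.2 ⟨le_rfl, by omega⟩) h)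
      have := hy x (y + d) h
      omega
  obtain ⟨x, y⟩ := c
  obtain ⟨x', y'⟩ := c'
  obtain ⟨hx', hy'⟩ := Prod.mk_le_mk.1 hle
  obtain ⟨d, rfl⟩ := Nat.exists_eq_add_of_le hx'
  obtain ⟨e, rfl⟩ := Nat.exists_eq_add_of_le hy'
  have h1 := hcol e x y (hs (Prod.mk_le_mk.2 ⟨by omega, le_rfl⟩) hc')
  have h2 := hrow d x (y + e) hc'
  simp only
  omega

lemma strictMonoOn_of_step {s : Set Cell} (hs : IsLowerSet s) {f : Cell → ℕ}
    (hx : ∀ x y, (x + 1, y) ∈ s → f (x, y) < f (x + 1, y))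
    (hy : ∀ x y, (x, y + 1) ∈ s → f (x, y) < f (x, y + 1)) : StrictMonoOn f s := by
  intro c _ c' hc' hlt
  have hpath := add_le_of_step hs hx hy hlt.le hc'
  have hne : c.1 < c'.1 ∨ c.2 < c'.2 := by
    rcases Prod.lt_iff.1 hlt with h | h
    · exact Or.inl h.1
    · exact Or.inr h.2
  omega

theorem isStdFilling_iff {F : Filling} {a n : ℕ} :
    IsStdFilling F a n ↔
      BijOn F (shape F) (Ioc a n) ∧ IsLowerSet (shape F) ∧ StrictMonoOn F (shape F) := by
  rw [isLowerSet_iff_step]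
  constructor
  · rintro ⟨huniq, hvals, hx, hy, hrow, hcol⟩
    have hs : IsLowerSet (shape F) := isLowerSet_iff_step.2 fun x y => ⟨hx x y, hy x y⟩
    exact ⟨entries_iff_bijOn.1 ⟨huniq, hvals⟩, fun x y => ⟨hx x y, hy x y⟩,
      strictMonoOn_of_step hs hrow hcol⟩
  · rintro ⟨hbij, hs, hmono⟩
    obtain ⟨huniq, hvals⟩ := entries_iff_bijOn.2 hbij
    refine ⟨huniq, hvals, fun x y => (hs x y).1, fun x y => (hs x y).2, fun x y h => ?_,
      fun x y h => ?_⟩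
    · exact hmono ((hs x y).1 h) h (Prod.mk_lt_mk.2 (Or.inl ⟨Nat.lt_succ_self x, le_rfl⟩))
    · exact hmono ((hs x y).2 h) h (Prod.mk_lt_mk.2 (Or.inr ⟨le_rfl, Nat.lt_succ_self y⟩))

def move (F : Filling) (p q : Cell) : Filling :=
  fun c => if c = p then F q else if c = q then 0 else F c

section Move

variable {F : Filling} {p q : Cell}

@[simp] lemma move_apply_left : move F p q p = F q := by simp [move]

lemma move_apply_right (hpq : p ≠ q) : move F p q q = 0 := by simp [move, hpq.symm]

lemma move_apply_of_ne {c : Cell} (hp : c ≠ p) (hq : c ≠ q) : move F p q c = F c := by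
  simp [move, hp, hq]

lemma move_eq_comp_swap (hp : F p = 0) (hpq : p ≠ q) : move F p q = F ∘ Equiv.swap p q := by
  funext c
  by_cases h1 : c = p
  · subst h1; simp
  by_cases h2 : c = q
  · subst h2; simp [move_apply_right hpq, hp]
  · simp [move_apply_of_ne h1 h2, Equiv.swap_apply_of_ne_of_ne h1 h2]

lemma insert_shape_move (hp : F p = 0) (hpq : p ≠ q) (hq : F q ≠ 0) :
    insert q (shape (move F p q)) = insert p (shape F) := by
  ext c
  by_cases h1 : c = p
  · subst h1; simp [hq]
  by_cases h2 : c = q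
  · subst h2; simp [hq]
  · simp [move_apply_of_ne h1 h2, h1, h2]

lemma move_move (hp : F p = 0) (hpq : p ≠ q) : move (move F p q) q p = F := by
  funext c
  by_cases h1 : c = q
  · subst h1; simp
  by_cases h2 : c = p
  · subst h2; rw [move_apply_right hpq.symm, hp]
  · rw [move_apply_of_ne h1 h2, move_apply_of_ne h2 h1]

end Move

lemma right_le_or_up_le_of_lt {x y : ℕ} {c : Cell} (hc : (x, y) < c) :
    (x + 1, y) ≤ c ∨ (x, y + 1) ≤ c := by
  obtain ⟨cx, cy⟩ := c
  simp only [Prod.mk_lt_mk, Prod.mk_le_mk] at hc ⊢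
  omega

lemma cell_covBy_iff {p q : Cell} : p ⋖ q ↔ q = (p.1 + 1, p.2) ∨ q = (p.1, p.2 + 1) := by
  obtain ⟨a, b⟩ := p
  obtain ⟨c, d⟩ := q
  simp only [Prod.mk_covBy_mk_iff, Nat.covBy_iff_add_one_eq, Prod.mk.injEq]
  omega

structure IsHoleTableau (b n : ℕ) (F : Filling) (h : Cell) : Prop where
  hole : F h = 0
  bijOn : BijOn F (shape F) (Ioc b n)
  isLowerSet : IsLowerSet (insert h (shape F))
  strictMonoOn : StrictMonoOn F (shape F)

namespace IsHoleTableau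

variable {b n : ℕ} {F : Filling} {h p q : Cell}

lemma apply_ne_zero_of_lt (I : IsHoleTableau b n F h) {c : Cell} (hc : c < h) : F c ≠ 0 := by
  have := I.isLowerSet hc.le (mem_insert h _)
  exact (mem_insert_iff.1 this).resolve_left hc.ne

lemma move_into (I : IsHoleTableau b n F h) (hq : F q ≠ 0) (hqh : q ≠ h)
    (hbelow : ∀ c ∈ shape F, c < h → c ≠ q → F c < F q)
    (habove : ∀ c ∈ shape F, h < c → c ≠ q → F q < F c) :
    IsHoleTableau b n (move F h q) q := by
  have hcomp := move_eq_comp_swap I.hole hqh.symm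
  refine ⟨move_apply_right hqh.symm, ?_, ?_, ?_⟩
  · rw [hcomp]
    exact I.bijOn.comp ((Equiv.swap h q).bijective.bijOn_preimage (t := shape F))
  · rw [insert_shape_move I.hole hqh.symm hq]
    exact I.isLowerSet
  · intro c hc c' hc' hlt
    simp only [mem_shape] at hc hc'
    have hcq : c ≠ q := by rintro rfl; exact hc (move_apply_right hqh.symm)
    have hc'q : c' ≠ q := by rintro rfl; exact hc' (move_apply_right hqh.symm)
    by_cases hch : c = h
    · subst hch
      rw [move_apply_of_ne hlt.ne' hc'q] at hc' ⊢
      rw [move_apply_left]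
      exact habove c' hc' hlt hc'q
    by_cases hc'h : c' = h
    · subst hc'h
      rw [move_apply_of_ne hch hcq] at hc ⊢
      rw [move_apply_left]
      exact hbelow c hc hlt hcq
    · rw [move_apply_of_ne hch hcq] at hc ⊢
      rw [move_apply_of_ne hc'h hc'q] at hc' ⊢
      exact I.strictMonoOn hc hc' hlt

lemma apply_lt (I : IsHoleTableau b n F h) {c : Cell} (hlt : c < q) (hq : F q ≠ 0) :
    F c < F q := by
  by_cases hc : F c = 0
  · rw [hc]; exact Nat.pos_of_ne_zero hq
  · exact I.strictMonoOn hc hq hlt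

lemma apply_lt_apply_of_hole_lt (I : IsHoleTableau b n F h) {q' : Cell}
    (hcov : ∀ c, h < c → q ≤ c ∨ q' ≤ c) (hq' : h < q') (hq : F q ≠ 0)
    (hqq' : F q' ≠ 0 → F q < F q') : ∀ c ∈ shape F, h < c → c ≠ q → F q < F c := by
  intro c hc hhc hcq
  rcases hcov c hhc with hle | hle
  · exact I.strictMonoOn hq hc (lt_of_le_of_ne hle (Ne.symm hcq))
  · have hq'0 : F q' ≠ 0 :=
      (mem_insert_iff.1 (I.isLowerSet hle (mem_insert_of_mem _ hc))).resolve_left hq'.ne'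
    rcases eq_or_lt_of_le hle with rfl | hlt
    · exact hqq' hq'0
    · exact (hqq' hq'0).trans (I.strictMonoOn hq'0 hc hlt)

lemma apply_lt_apply_of_lt_hole (I : IsHoleTableau b n F h) {p' : Cell}
    (hcov : ∀ c, c < h → c ≤ p ∨ c ≤ p') (hp' : p' < h) (hp : F p ≠ 0)
    (hp'p : F p' ≠ 0 → p' ≠ p → F p' < F p) :
    ∀ c ∈ shape F, c < h → c ≠ p → F c < F p := by
  intro c hc hch hcp
  rcases hcov c hch with hle | hle
  · exact I.strictMonoOn hc hp (lt_of_le_of_ne hle hcp)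
  · have hp'0 := I.apply_ne_zero_of_lt hp'
    by_cases hpp : p' = p
    · subst hpp; exact I.strictMonoOn hc hp (lt_of_le_of_ne hle hcp)
    rcases eq_or_lt_of_le hle with rfl | hlt
    · exact hp'p hp'0 hpp
    · exact (I.strictMonoOn hc hp'0 hlt).trans (hp'p hp'0 hpp)

end IsHoleTableau

lemma slide_eq (F : Filling) (x y : ℕ) : slide F (x, y) =
    if F (x + 1, y) = 0 ∧ F (x, y + 1) = 0 then (F, (x, y))
    else if F (x, y + 1) = 0 ∨ (F (x + 1, y) ≠ 0 ∧ F (x + 1, y) < F (x, y + 1)) then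
      (move F (x, y) (x + 1, y), (x + 1, y))
    else (move F (x, y) (x, y + 1), (x, y + 1)) := rfl

def unslide : Filling × Cell → Filling × Cell
  | (F, (0, 0)) => (F, (0, 0))
  | (F, (x + 1, 0)) => (move F (x + 1, 0) (x, 0), (x, 0))
  | (F, (0, y + 1)) => (move F (0, y + 1) (0, y), (0, y))
  | (F, (x + 1, y + 1)) =>
      if F (x + 1, y) < F (x, y + 1) then (move F (x + 1, y + 1) (x, y + 1), (x, y + 1))
      else (move F (x + 1, y + 1) (x + 1, y), (x + 1, y))

namespace IsHoleTableau

variable {b n : ℕ} {F : Filling} {p q : Cell} {x y : ℕ}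

lemma move_into_of_hole_covBy {h q' : Cell} (I : IsHoleTableau b n F h) (hq : h ⋖ q)
    (hq0 : F q ≠ 0) (hq' : h < q') (hcov : ∀ c, h < c → q ≤ c ∨ q' ≤ c)
    (hqq' : F q' ≠ 0 → F q < F q') : IsHoleTableau b n (move F h q) q :=
  I.move_into hq0 hq.lt.ne' (fun _ hc hlt _ => I.strictMonoOn hc hq0 (hlt.trans hq.lt))
    (I.apply_lt_apply_of_hole_lt hcov hq' hq0 hqq')

lemma exists_slide_eq (I : IsHoleTableau b n F (x, y))
    (hnt : ¬(F (x + 1, y) = 0 ∧ F (x, y + 1) = 0)) :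
    ∃ q, (x, y) ⋖ q ∧ F q ≠ 0 ∧
      slide F (x, y) = (move F (x, y) q, q) ∧ IsHoleTableau b n (move F (x, y) q) q := by
  have hr : ((x, y) : Cell) ⋖ (x + 1, y) := cell_covBy_iff.2 (Or.inl rfl)
  have hu : ((x, y) : Cell) ⋖ (x, y + 1) := cell_covBy_iff.2 (Or.inr rfl)
  rw [slide_eq, if_neg hnt]
  split_ifs with hright
  · have hr0 : F (x + 1, y) ≠ 0 := fun h0 => hnt ⟨h0, hright.resolve_right (by simp [h0])⟩
    exact ⟨_, hr, hr0, rfl, I.move_into_of_hole_covBy hr hr0 hu.lt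
      (fun c hc => right_le_or_up_le_of_lt hc) fun hu0 => (hright.resolve_left hu0).2⟩
  · push Not at hright
    refine ⟨_, hu, hright.1, rfl, I.move_into_of_hole_covBy hu hright.1 hr.lt
      (fun c hc => (right_le_or_up_le_of_lt hc).symm)
      fun hr0 => lt_of_le_of_ne (hright.2 hr0) fun e => ?_⟩
    simpa using I.bijOn.injOn hright.1 hr0 e

lemma unslide_move (I : IsHoleTableau b n F (x, y)) (hq : (x, y) ⋖ q) (hq0 : F q ≠ 0) :
    unslide (move F (x, y) q, q) = (F, (x, y)) := by
  rcases cell_covBy_iff.1 hq with rfl | rfl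
  · cases y with
    | zero => simp only [unslide, move_move I.hole (q := (x + 1, 0)) (by simp)]
    | succ y =>
      have hlt : F (x + 1, y) < F (x + 1, y + 1) :=
        I.apply_lt (Prod.mk_lt_mk.2 (Or.inr ⟨le_rfl, Nat.lt_succ_self y⟩)) hq0
      have hv : move F (x, y + 1) (x + 1, y + 1) (x + 1, y) = F (x + 1, y) :=
        move_apply_of_ne (by simp) (by simp)
      simp only [unslide, move_apply_left, hv, if_pos hlt,
        move_move I.hole (q := (x + 1, y + 1)) (by simp)]
  · cases x with
    | zero => simp only [unslide, move_move I.hole (q := (0, y + 1)) (by simp)]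
    | succ x =>
      have hlt : F (x, y + 1) < F (x + 1, y + 1) :=
        I.apply_lt (Prod.mk_lt_mk.2 (Or.inl ⟨Nat.lt_succ_self x, le_rfl⟩)) hq0
      have hv : move F (x + 1, y) (x + 1, y + 1) (x, y + 1) = F (x, y + 1) :=
        move_apply_of_ne (by simp) (by simp)
      simp only [unslide, move_apply_left, hv, if_neg hlt.not_gt,
        move_move I.hole (q := (x + 1, y + 1)) (by simp)]

lemma move_into_of_covBy_hole {h p' : Cell} (I : IsHoleTableau b n F h) (hp : p ⋖ h)
    (hp' : p' < h) (hcov : ∀ c, c < h → c ≤ p ∨ c ≤ p')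
    (hp'p : F p' ≠ 0 → p' ≠ p → F p' < F p) : IsHoleTableau b n (move F h p) p :=
  have hp0 := I.apply_ne_zero_of_lt hp.lt
  I.move_into hp0 hp.lt.ne (I.apply_lt_apply_of_lt_hole hcov hp' hp0 hp'p)
    fun _ hc hlt _ => I.strictMonoOn hp0 hc (hp.lt.trans hlt)

lemma exists_unslide_eq {h : Cell} (I : IsHoleTableau b n F h) (h0 : h ≠ (0, 0)) :
    ∃ p, p ⋖ h ∧ F p ≠ 0 ∧ unslide (F, h) = (move F h p, p) ∧
      IsHoleTableau b n (move F h p) p := by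
  obtain ⟨x, y⟩ := h
  have hedge : ∀ p : Cell, p ⋖ (x, y) → (∀ c, c < (x, y) → c ≤ p) →
      IsHoleTableau b n (move F (x, y) p) p := fun p hp hle =>
    I.move_into_of_covBy_hole hp hp.lt (fun c hc => Or.inl (hle c hc)) fun _ h => absurd rfl h
  rcases x with _ | x <;> rcases y with _ | y
  · exact absurd rfl h0
  · have hp : ((0, y) : Cell) ⋖ (0, y + 1) := cell_covBy_iff.2 (Or.inr rfl)
    refine ⟨_, hp, I.apply_ne_zero_of_lt hp.lt, rfl, hedge _ hp fun ⟨cx, cy⟩ hc => ?_⟩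
    simp only [Prod.mk_lt_mk, Prod.mk_le_mk] at hc ⊢
    omega
  · have hp : ((x, 0) : Cell) ⋖ (x + 1, 0) := cell_covBy_iff.2 (Or.inl rfl)
    refine ⟨_, hp, I.apply_ne_zero_of_lt hp.lt, rfl, hedge _ hp fun ⟨cx, cy⟩ hc => ?_⟩
    simp only [Prod.mk_lt_mk, Prod.mk_le_mk] at hc ⊢
    omega
  · have hle : ∀ c : Cell, c < (x + 1, y + 1) → c ≤ (x, y + 1) ∨ c ≤ (x + 1, y) := by
      rintro ⟨cx, cy⟩ hc
      simp only [Prod.mk_lt_mk, Prod.mk_le_mk] at hc ⊢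
      omega
    have hl : ((x, y + 1) : Cell) ⋖ (x + 1, y + 1) := cell_covBy_iff.2 (Or.inl rfl)
    have hd : ((x + 1, y) : Cell) ⋖ (x + 1, y + 1) := cell_covBy_iff.2 (Or.inr rfl)
    have hl0 := I.apply_ne_zero_of_lt hl.lt
    have hd0 := I.apply_ne_zero_of_lt hd.lt
    by_cases hdl : F (x + 1, y) < F (x, y + 1)
    · exact ⟨_, hl, hl0, if_pos hdl, I.move_into_of_covBy_hole hl hd.lt hle fun _ _ => hdl⟩
    · refine ⟨_, hd, hd0, if_neg hdl,
        I.move_into_of_covBy_hole hd hl.lt (fun c hc => (hle c hc).symm) fun _ hne => ?_⟩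
      exact lt_of_le_of_ne (not_lt.1 hdl) fun e => hne (I.bijOn.injOn hl0 hd0 e)

lemma slide_move {h : Cell} (I : IsHoleTableau b n F h) (hp : p ⋖ h) (hp0 : F p ≠ 0) :
    slide (move F h p) p = (F, h) := by
  obtain ⟨x, y⟩ := p
  rcases cell_covBy_iff.1 hp with rfl | rfl
  · have hv : move F (x + 1, y) (x, y) (x, y + 1) = F (x, y + 1) :=
      move_apply_of_ne (by simp) (by simp)
    have hu : F (x, y + 1) = 0 ∨ F (x, y) < F (x, y + 1) := by
      by_cases hu0 : F (x, y + 1) = 0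
      · exact Or.inl hu0
      · exact Or.inr (I.strictMonoOn hp0 hu0 (by simp [Prod.mk_lt_mk]))
    rw [slide_eq, if_neg (by simp [hp0]), if_pos (by rw [move_apply_left, hv]; tauto),
      move_move I.hole (by simp)]
  · have hv : move F (x, y + 1) (x, y) (x + 1, y) = F (x + 1, y) :=
      move_apply_of_ne (by simp) (by simp)
    have hr : F (x + 1, y) = 0 ∨ F (x, y) < F (x + 1, y) := by
      by_cases hr0 : F (x + 1, y) = 0
      · exact Or.inl hr0
      · exact Or.inr (I.strictMonoOn hp0 hr0 (by simp [Prod.mk_lt_mk]))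
    rw [slide_eq, if_neg (by simp [hp0]), if_neg (by rw [move_apply_left, hv]; omega),
      move_move I.hole (by simp)]

end IsHoleTableau

def slideStep (s : Filling × Cell) : Filling × Cell := slide s.1 s.2

abbrev IsStuck (s : Filling × Cell) : Prop :=
  s.1 (s.2.1 + 1, s.2.2) = 0 ∧ s.1 (s.2.1, s.2.2 + 1) = 0

section Iteration

variable {b n : ℕ} {s : Filling × Cell}

lemma slideStep_of_isStuck (hs : IsStuck s) : slideStep s = s := by
  simp [slideStep, slide, hs.1, hs.2]

lemma slideIter_eq_iterate (k : ℕ) (F : Filling) (h : Cell) :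
    slideIter k F h = slideStep^[k] (F, h) := by
  induction k generalizing F h with
  | zero => rfl
  | succ k ih =>
    rw [Function.iterate_succ_apply]
    by_cases hs : IsStuck (F, h)
    · rw [slideIter, if_pos hs, slideStep_of_isStuck hs,
        Function.iterate_fixed (slideStep_of_isStuck hs)]
    · rw [slideIter, if_neg hs, ih]; rfl

lemma slideStep_snd_sum (hs : ¬IsStuck s) :
    (slideStep s).2.1 + (slideStep s).2.2 = s.2.1 + s.2.2 + 1 := by
  obtain ⟨F, x, y⟩ := s
  simp only [slideStep, slide_eq]
  rw [if_neg hs]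
  split_ifs <;> simp only <;> omega

lemma unslide_snd_sum (h0 : s.2 ≠ (0, 0)) :
    (unslide s).2.1 + (unslide s).2.2 + 1 = s.2.1 + s.2.2 := by
  obtain ⟨F, _ | x, _ | y⟩ := s
  · exact absurd rfl h0
  · simp [unslide]
  · simp [unslide]
  · simp only [unslide]
    split_ifs <;> simp only <;> omega

lemma isHoleTableau_slideStep (I : IsHoleTableau b n s.1 s.2) :
    IsHoleTableau b n (slideStep s).1 (slideStep s).2 := by
  by_cases hs : IsStuck s
  · rwa [slideStep_of_isStuck hs]
  obtain ⟨F, x, y⟩ := s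
  obtain ⟨q, -, -, heq, I'⟩ := I.exists_slide_eq hs
  simpa only [slideStep, heq] using I'

lemma insert_shape_slideStep (I : IsHoleTableau b n s.1 s.2) :
    insert (slideStep s).2 (shape (slideStep s).1) = insert s.2 (shape s.1) := by
  by_cases hs : IsStuck s
  · rw [slideStep_of_isStuck hs]
  obtain ⟨F, x, y⟩ := s
  obtain ⟨q, hq, hq0, heq, -⟩ := I.exists_slide_eq hs
  simp only [slideStep, heq]
  exact insert_shape_move I.hole hq.lt.ne hq0

lemma unslide_slideStep (I : IsHoleTableau b n s.1 s.2) (hs : ¬IsStuck s) :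
    unslide (slideStep s) = s := by
  obtain ⟨F, x, y⟩ := s
  obtain ⟨q, hq, hq0, heq, -⟩ := I.exists_slide_eq hs
  simp only [slideStep, heq]
  exact I.unslide_move hq hq0

lemma isHoleTableau_unslide (I : IsHoleTableau b n s.1 s.2) :
    IsHoleTableau b n (unslide s).1 (unslide s).2 := by
  obtain ⟨F, h⟩ := s
  by_cases h0 : h = (0, 0)
  · subst h0; exact I
  obtain ⟨p, -, -, heq, I'⟩ := I.exists_unslide_eq h0
  rwa [heq]

lemma slideStep_unslide (I : IsHoleTableau b n s.1 s.2) (h0 : s.2 ≠ (0, 0)) :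
    slideStep (unslide s) = s := by
  obtain ⟨F, h⟩ := s
  obtain ⟨p, hp, hp0, heq, -⟩ := I.exists_unslide_eq h0
  rw [heq]
  exact I.slide_move hp hp0

lemma IsHoleTableau.snd_sum_le {F : Filling} {h : Cell} (I : IsHoleTableau b n F h) :
    h.1 + h.2 ≤ n - b := by
  by_cases h0 : h = (0, 0)
  · subst h0; simp
  obtain ⟨⟨x, y⟩, hp, hp0, -, -⟩ := I.exists_unslide_eq h0
  have hocc : ∀ c ≤ ((x, y) : Cell), F c ≠ 0 := fun c hc =>
    I.apply_ne_zero_of_lt (hc.trans_lt hp.lt)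
  have hpath := add_le_of_step (s := Iic (x, y)) (f := F) (isLowerSet_Iic _)
    (fun _ _ hc => I.strictMonoOn (hocc _ (le_trans (by simp) hc)) (hocc _ hc)
      (by simp [Prod.mk_lt_mk]))
    (fun _ _ hc => I.strictMonoOn (hocc _ (le_trans (by simp) hc)) (hocc _ hc)
      (by simp [Prod.mk_lt_mk]))
    (origin_le _) (mem_Iic.2 le_rfl)
  have h00 := I.bijOn.mapsTo (hocc (0, 0) (origin_le _))
  have hpn := I.bijOn.mapsTo hp0
  simp only [mem_Ioc, Nat.sub_zero] at h00 hpn hpath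
  rcases cell_covBy_iff.1 hp with rfl | rfl <;> simp only <;> omega

lemma isHoleTableau_slideStep_iterate (I : IsHoleTableau b n s.1 s.2) (m : ℕ) :
    IsHoleTableau b n (slideStep^[m] s).1 (slideStep^[m] s).2 := by
  induction m with
  | zero => exact I
  | succ m ih => rw [Function.iterate_succ_apply']; exact isHoleTableau_slideStep ih

lemma insert_shape_slideStep_iterate (I : IsHoleTableau b n s.1 s.2) (m : ℕ) :
    insert (slideStep^[m] s).2 (shape (slideStep^[m] s).1) = insert s.2 (shape s.1) := by
  induction m with
  | zero => rfl
  | succ m ih =>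
    rw [Function.iterate_succ_apply',
      insert_shape_slideStep (isHoleTableau_slideStep_iterate I m), ih]

lemma isStuck_slideStep_iterate (I : IsHoleTableau b n s.1 s.2) {m : ℕ}
    (hm : n - b ≤ m + (s.2.1 + s.2.2)) : IsStuck (slideStep^[m] s) := by
  induction m generalizing s with
  | zero =>
    by_contra hs
    rw [Function.iterate_zero, id] at hs
    have hle := (isHoleTableau_slideStep I).snd_sum_le
    rw [slideStep_snd_sum hs] at hle
    omega
  | succ m ih =>
    by_cases hs : IsStuck s
    · rwa [Function.iterate_fixed (slideStep_of_isStuck hs)]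
    rw [Function.iterate_succ_apply]
    exact ih (isHoleTableau_slideStep I) (by rw [slideStep_snd_sum hs]; omega)

lemma exists_unslide_iterate_slideStep_iterate (I : IsHoleTableau b n s.1 s.2) (m : ℕ) :
    ∃ k, (slideStep^[m] s).2.1 + (slideStep^[m] s).2.2 = s.2.1 + s.2.2 + k ∧
      unslide^[k] (slideStep^[m] s) = s := by
  induction m with
  | zero => exact ⟨0, rfl, rfl⟩
  | succ m ih =>
    obtain ⟨k, hsum, hk⟩ := ih
    rw [Function.iterate_succ_apply']
    by_cases hs : IsStuck (slideStep^[m] s)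
    · rw [slideStep_of_isStuck hs]; exact ⟨k, hsum, hk⟩
    · refine ⟨k + 1, by rw [slideStep_snd_sum hs, hsum]; ring, ?_⟩
      rw [Function.iterate_succ_apply,
        unslide_slideStep (isHoleTableau_slideStep_iterate I m) hs, hk]

lemma isHoleTableau_unslide_iterate (I : IsHoleTableau b n s.1 s.2) (k : ℕ) :
    IsHoleTableau b n (unslide^[k] s).1 (unslide^[k] s).2 := by
  induction k with
  | zero => exact I
  | succ k ih => rw [Function.iterate_succ_apply']; exact isHoleTableau_unslide ih

lemma unslide_iterate_snd_sum {k : ℕ} (hk : k ≤ s.2.1 + s.2.2) :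
    (unslide^[k] s).2.1 + (unslide^[k] s).2.2 + k = s.2.1 + s.2.2 := by
  induction k with
  | zero => rfl
  | succ k ih =>
    have h0 : (unslide^[k] s).2 ≠ (0, 0) := fun e => by rw [e] at ih; simp at ih; omega
    have hstep := unslide_snd_sum h0
    rw [Function.iterate_succ_apply']
    omega

lemma unslide_iterate_snd : (unslide^[s.2.1 + s.2.2] s).2 = (0, 0) := by
  have hsum := unslide_iterate_snd_sum (s := s) le_rfl
  exact Prod.ext (by simp only; omega) (by simp only; omega)

lemma slideStep_iterate_unslide_iterate (I : IsHoleTableau b n s.1 s.2) {k : ℕ}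
    (hk : k ≤ s.2.1 + s.2.2) : slideStep^[k] (unslide^[k] s) = s := by
  induction k generalizing s with
  | zero => rfl
  | succ k ih =>
    have h0 : s.2 ≠ (0, 0) := fun e => by rw [e] at hk; simp at hk
    have hsum := unslide_snd_sum h0
    rw [Function.iterate_succ_apply unslide, Function.iterate_succ_apply' slideStep,
      ih (isHoleTableau_unslide I) (by omega), slideStep_unslide I h0]

end Iteration

-- Each backward slide lowers `c.1 + c.2` by one, so the hole reaches `(0, 0)` after exactly
-- `c.1 + c.2` of them.
def revJdt (b : ℕ) (U : Filling) (c : Cell) : Filling :=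
  update (unslide^[c.1 + c.2] (U, c)).1 (0, 0) b

section Jdt

variable {a b n : ℕ} {F T U : Filling} {c h : Cell}

def jdtStart (T : Filling) : Filling × Cell := (update T (0, 0) 0, (0, 0))

lemma jdtAux_eq_iterate (n : ℕ) (T : Filling) : jdtAux n T = slideStep^[n] (jdtStart T) := by
  rw [jdtAux, slideIter_eq_iterate]
  congr 2
  funext x
  by_cases hx : x = (0, 0) <;> simp [hx]

lemma IsStdFilling.apply_origin (hT : IsStdFilling T a n) (han : a < n) : T (0, 0) = a + 1 := by
  obtain ⟨hbij, hlow, hmono⟩ := isStdFilling_iff.1 hT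
  obtain ⟨c, hc, hca⟩ := hbij.surjOn (show a + 1 ∈ Ioc a n from ⟨by omega, by omega⟩)
  have h0 : (0, 0) ∈ shape T := hlow (origin_le c) hc
  rcases eq_or_lt_of_le (origin_le c) with e | hlt
  · rw [e, hca]
  · have hlt' := hmono h0 hc hlt
    have hgt := (hbij.mapsTo h0).1
    omega

lemma IsStdFilling.isHoleTableau_jdtStart (hT : IsStdFilling T a n) (han : a < n) :
    IsHoleTableau (a + 1) n (jdtStart T).1 (jdtStart T).2 := by
  simp only [jdtStart]
  obtain ⟨hbij, hlow, hmono⟩ := isStdFilling_iff.1 hT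
  have h0 : (0, 0) ∈ shape T := by simp [hT.apply_origin han]
  have hshape : shape (update T (0, 0) 0) = shape T \ {(0, 0)} := by
    ext x; by_cases hx : x = (0, 0) <;> simp [hx]
  have heq : EqOn T (update T (0, 0) 0) (shape T \ {(0, 0)}) := fun x hx => by
    simp [update_of_ne (show x ≠ (0, 0) from hx.2)]
  refine ⟨by simp, ?_, ?_, ?_⟩
  · have hIoc : Ioc a n \ {T (0, 0)} = Ioc (a + 1) n := by
      ext k; simp only [mem_sdiff, mem_Ioc, mem_singleton_iff, hT.apply_origin han]; omega
    rw [hshape, ← hIoc]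
    exact (hbij.sdiff_singleton h0).congr heq
  · rwa [hshape, insert_sdiff_singleton, insert_eq_of_mem h0]
  · rw [hshape]
    exact (hmono.mono sdiff_subset).congr heq

lemma IsHoleTableau.isStdFilling (I : IsHoleTableau b n F h) (hs : IsStuck (F, h)) :
    IsStdFilling F b n := by
  refine isStdFilling_iff.2 ⟨I.bijOn, fun c' c hle hc' => ?_, I.strictMonoOn⟩
  rcases mem_insert_iff.1 (I.isLowerSet hle (mem_insert_of_mem h hc')) with rfl | hc
  · have hlt : c < c' := lt_of_le_of_ne hle fun e => hc' (e ▸ I.hole)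
    have hocc : ∀ q, c < q → q ≤ c' → F q ≠ 0 := fun q hq hqc' =>
      (mem_insert_iff.1 (I.isLowerSet hqc' (mem_insert_of_mem _ hc'))).resolve_left hq.ne'
    rcases right_le_or_up_le_of_lt hlt with hq | hq
    · exact absurd hs.1 (hocc _ (Prod.lt_iff.2 (Or.inl ⟨Nat.lt_succ_self _, le_rfl⟩)) hq)
    · exact absurd hs.2 (hocc _ (Prod.lt_iff.2 (Or.inr ⟨le_rfl, Nat.lt_succ_self _⟩)) hq)
  · exact hc

lemma IsStdFilling.isHoleTableau (hU : IsStdFilling U b n) (hc : c ∉ shape U)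
    (hlow : IsLowerSet (insert c (shape U))) : IsHoleTableau b n U c :=
  ⟨not_not.1 hc, (isStdFilling_iff.1 hU).1, hlow, (isStdFilling_iff.1 hU).2.2⟩

lemma IsStdFilling.isStuck (hU : IsStdFilling U b n) (hc : c ∉ shape U) : IsStuck (U, c) := by
  have hlow := (isStdFilling_iff.1 hU).2.1
  exact ⟨not_not.1 fun h => hc (hlow (Prod.mk_le_mk.2 ⟨Nat.le_succ _, le_rfl⟩) h),
    not_not.1 fun h => hc (hlow (Prod.mk_le_mk.2 ⟨le_rfl, Nat.le_succ _⟩) h)⟩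

lemma isHoleTableau_jdt (hT : IsStdFilling T a n) (han : a < n) :
    IsHoleTableau (a + 1) n (jdt n T) (holeEnd n T) := by
  have I := isHoleTableau_slideStep_iterate (hT.isHoleTableau_jdtStart han) n
  rwa [← jdtAux_eq_iterate] at I

lemma isStuck_jdt (hT : IsStdFilling T a n) (han : a < n) : IsStuck (jdt n T, holeEnd n T) := by
  have hs := isStuck_slideStep_iterate (hT.isHoleTableau_jdtStart han) (m := n)
    (by simp only [jdtStart]; omega)
  rwa [← jdtAux_eq_iterate] at hs

theorem isStdFilling_jdt (hT : IsStdFilling T a n) (han : a < n) :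
    IsStdFilling (jdt n T) (a + 1) n :=
  (isHoleTableau_jdt hT han).isStdFilling (isStuck_jdt hT han)

theorem insert_holeEnd_shape_jdt (hT : IsStdFilling T a n) (han : a < n) :
    insert (holeEnd n T) (shape (jdt n T)) = shape T := by
  have hshape := insert_shape_slideStep_iterate (hT.isHoleTableau_jdtStart han) n
  rw [← jdtAux_eq_iterate] at hshape
  refine hshape.trans ?_
  ext x
  by_cases hx : x = (0, 0) <;> simp [jdtStart, hx, hT.apply_origin han]

theorem revJdt_jdt (hT : IsStdFilling T a n) (han : a < n) :
    revJdt (a + 1) (jdt n T) (holeEnd n T) = T := by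
  obtain ⟨k, hsum, hk⟩ :=
    exists_unslide_iterate_slideStep_iterate (hT.isHoleTableau_jdtStart han) n
  rw [← jdtAux_eq_iterate] at hsum hk
  simp only [jdtStart, zero_add] at hsum
  show update (unslide^[(jdtAux n T).2.1 + (jdtAux n T).2.2] (jdtAux n T)).1 (0, 0) (a + 1) = T
  rw [hsum, hk, jdtStart, update_idem, ← hT.apply_origin han, update_eq_self]

lemma IsHoleTableau.isStdFilling_update (I : IsHoleTableau (a + 1) n F (0, 0)) (han : a < n) :
    IsStdFilling (update F (0, 0) (a + 1)) a n := by
  have h0 : (0, 0) ∉ shape F := not_not.2 I.hole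
  have hshape : shape (update F (0, 0) (a + 1)) = insert (0, 0) (shape F) := by
    ext x; by_cases hx : x = (0, 0) <;> simp [hx]
  have heq : EqOn F (update F (0, 0) (a + 1)) (shape F) := fun x hx =>
    (update_of_ne (ne_of_mem_of_not_mem hx h0) _ _).symm
  have hbij := (I.bijOn.congr heq).insert (a := (0, 0)) (by simp)
  have hIoc : insert (a + 1) (Ioc (a + 1) n) = Ioc a n := by
    ext k; simp only [mem_insert_iff, mem_Ioc]; omega
  rw [update_self, hIoc, ← hshape] at hbij
  refine isStdFilling_iff.2 ⟨hbij, hshape ▸ I.isLowerSet, ?_⟩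
  rw [hshape]
  rintro x (rfl | hx) y (rfl | hy) hlt
  · exact absurd hlt (lt_irrefl _)
  · rw [update_self, ← heq hy]; exact (I.bijOn.mapsTo hy).1
  · exact absurd (origin_le x) hlt.not_ge
  · rw [← heq hx, ← heq hy]; exact I.strictMonoOn hx hy hlt

theorem isStdFilling_revJdt (hU : IsStdFilling U (a + 1) n) (han : a < n) (hc : c ∉ shape U)
    (hlow : IsLowerSet (insert c (shape U))) : IsStdFilling (revJdt (a + 1) U c) a n := by
  have I := isHoleTableau_unslide_iterate (s := (U, c)) (hU.isHoleTableau hc hlow) (c.1 + c.2)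
  have h0 : (unslide^[c.1 + c.2] (U, c)).2 = (0, 0) := unslide_iterate_snd (s := (U, c))
  rw [h0] at I
  exact I.isStdFilling_update han

theorem jdtAux_revJdt (hU : IsStdFilling U b n) (hc : c ∉ shape U)
    (hlow : IsLowerSet (insert c (shape U))) (b' : ℕ) : jdtAux n (revJdt b' U c) = (U, c) := by
  have I := hU.isHoleTableau hc hlow
  have hsum : c.1 + c.2 ≤ n := I.snd_sum_le.trans (Nat.sub_le n b)
  have h0 : (unslide^[c.1 + c.2] (U, c)).2 = (0, 0) := unslide_iterate_snd (s := (U, c))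
  have hhole := (isHoleTableau_unslide_iterate (s := (U, c)) I (c.1 + c.2)).hole
  rw [h0] at hhole
  have hstart : jdtStart (revJdt b' U c) = unslide^[c.1 + c.2] (U, c) :=
    Prod.ext (by rw [jdtStart, revJdt, update_idem, update_eq_self_iff, hhole]) h0.symm
  rw [jdtAux_eq_iterate, hstart, ← Nat.sub_add_cancel hsum, Function.iterate_add_apply,
    slideStep_iterate_unslide_iterate (s := (U, c)) I le_rfl,
    Function.iterate_fixed (slideStep_of_isStuck (hU.isStuck hc))]

theorem shape_revJdt (hU : IsStdFilling U (a + 1) n) (han : a < n) (hc : c ∉ shape U)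
    (hlow : IsLowerSet (insert c (shape U))) : shape (revJdt (a + 1) U c) = insert c (shape U) := by
  have hshape := insert_holeEnd_shape_jdt (isStdFilling_revJdt hU han hc hlow) han
  rw [jdt, holeEnd, jdtAux_revJdt hU hc hlow] at hshape
  exact hshape.symm

end Jdt

/-- `revJdtAlong n a m T G` undoes `m` steps of jeu de taquin on `G`, putting the entries
`a + m, …, a + 1` back at the cells where the holes of `j^(m-1) T, …, T` ended. -/
def revJdtAlong (n : ℕ) : ℕ → ℕ → Filling → Filling → Filling
  | _, 0, _, G => G
  | a, m + 1, T, G => revJdt (a + 1) (revJdtAlong n (a + 1) m (jdt n T) G) (holeEnd n T)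

section Transport

variable {a n m : ℕ} {T G : Filling}

lemma holeEnd_not_mem_shape_jdt (hT : IsStdFilling T a n) (han : a < n) :
    holeEnd n T ∉ shape (jdt n T) :=
  not_not.2 (isHoleTableau_jdt hT han).hole

lemma isLowerSet_insert_holeEnd (hT : IsStdFilling T a n) (han : a < n) :
    IsLowerSet (insert (holeEnd n T) (shape (jdt n T))) := by
  rw [insert_holeEnd_shape_jdt hT han]
  exact (isStdFilling_iff.1 hT).2.1

lemma shape_jdt_iterate_succ (hG : shape G = shape ((jdt n)^[m + 1] T)) :
    shape G = shape ((jdt n)^[m] (jdt n T)) := by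
  rwa [← Function.iterate_succ_apply]

theorem revJdtAlong_spec (hm : a + m ≤ n) (hT : IsStdFilling T a n)
    (hG : IsStdFilling G (a + m) n) (hshape : shape G = shape ((jdt n)^[m] T)) :
    IsStdFilling (revJdtAlong n a m T G) a n ∧ shape (revJdtAlong n a m T G) = shape T ∧
      (jdt n)^[m] (revJdtAlong n a m T G) = G := by
  induction m generalizing a T with
  | zero => exact ⟨hG, hshape, rfl⟩
  | succ m ih =>
    have han : a < n := by omega
    obtain ⟨hU, hUshape, hUG⟩ := ih (by omega) (isStdFilling_jdt hT han)
      (by rwa [Nat.add_right_comm]) (shape_jdt_iterate_succ hshape)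
    have hc := hUshape ▸ holeEnd_not_mem_shape_jdt hT han
    have hlow := hUshape ▸ isLowerSet_insert_holeEnd hT han
    refine ⟨isStdFilling_revJdt hU han hc hlow, ?_, ?_⟩
    · rw [revJdtAlong, shape_revJdt hU han hc hlow, hUshape, insert_holeEnd_shape_jdt hT han]
    · rw [revJdtAlong, Function.iterate_succ_apply, jdt, jdtAux_revJdt hU hc hlow, hUG]

theorem revJdtAlong_revJdtAlong (hm : a + m ≤ n) (hT : IsStdFilling T a n)
    (hG : IsStdFilling G (a + m) n) (hshape : shape G = shape ((jdt n)^[m] T)) :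
    revJdtAlong n a m (revJdtAlong n a m T G) ((jdt n)^[m] T) = T := by
  induction m generalizing a T with
  | zero => rfl
  | succ m ih =>
    have han : a < n := by omega
    have hG' : IsStdFilling G (a + 1 + m) n := by rwa [Nat.add_right_comm]
    obtain ⟨hU, hUshape, -⟩ :=
      revJdtAlong_spec (by omega) (isStdFilling_jdt hT han) hG' (shape_jdt_iterate_succ hshape)
    have hc := hUshape ▸ holeEnd_not_mem_shape_jdt hT han
    have hlow := hUshape ▸ isLowerSet_insert_holeEnd hT han
    have hR := jdtAux_revJdt hU hc hlow (a + 1)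
    have hj : jdt n (revJdt (a + 1) _ (holeEnd n T)) = _ := congrArg Prod.fst hR
    have hh : holeEnd n (revJdt (a + 1) _ (holeEnd n T)) = _ := congrArg Prod.snd hR
    rw [revJdtAlong, revJdtAlong, Function.iterate_succ_apply, hj, hh,
      ih (by omega) (isStdFilling_jdt hT han) hG' (shape_jdt_iterate_succ hshape),
      revJdt_jdt hT han]

end Transport

def water (m M : ℕ) (G : Filling) : Filling := fun x => if G x - m = M - m then 0 else G x - m

def liftWater (m M : ℕ) (S : Filling) (c : Cell) : Filling :=
  update (fun x => if S x = 0 then 0 else S x + m) c M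

section Water

variable {m M w : ℕ} {G S : Filling} {c : Cell}

@[simp] lemma liftWater_apply_self : liftWater m M S c c = M := update_self ..

lemma liftWater_apply_of_ne {x : Cell} (hx : x ≠ c) :
    liftWater m M S c x = if S x = 0 then 0 else S x + m := update_of_ne hx ..

lemma liftWater_water (hG : IsStdFilling G m M) (hmM : m < M) (hc : G c = M) :
    liftWater m M (water m M G) c = G := by
  funext x
  by_cases hx : x = c
  · rw [hx, liftWater_apply_self, hc]
  rw [liftWater_apply_of_ne hx, water]
  by_cases hx0 : G x = 0
  · simp [hx0]
  · have hbij := (isStdFilling_iff.1 hG).1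
    have hxM : G x ≠ M := fun e =>
      hx (hbij.injOn hx0 (show c ∈ shape G by simp [hc]; omega) (e.trans hc.symm))
    have hval := hbij.mapsTo hx0
    simp only [mem_Ioc] at hval
    simp [show G x - m ≠ M - m by omega, show G x - m ≠ 0 by omega,
      Nat.sub_add_cancel hval.1.le]

lemma water_liftWater (hS : ∀ x, S x + m < M) (hSc : S c = 0) :
    water m M (liftWater m M S c) = S := by
  funext x
  by_cases hx : x = c
  · simp [water, hx, hSc]
  have hSx := hS x
  by_cases hx0 : S x = 0 <;> simp [water, liftWater_apply_of_ne hx, hx0]; omega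

lemma shape_liftWater (hM : M ≠ 0) : shape (liftWater m M S c) = insert c (shape S) := by
  ext x
  by_cases hx : x = c
  · simp [hx, hM]
  · by_cases hx0 : S x = 0 <;> simp [liftWater_apply_of_ne hx, hx, hx0]

theorem isStdFilling_liftWater (hS : IsStdFilling S 0 w) (hw : w + m + 1 = M) (hc : c ∉ shape S)
    (hlow : IsLowerSet (insert c (shape S))) : IsStdFilling (liftWater m M S c) m M := by
  obtain ⟨hbij, hSlow, hmono⟩ := isStdFilling_iff.1 hS
  have hM : M ≠ 0 := by omega
  have heq : EqOn ((· + m) ∘ S) (liftWater m M S c) (shape S) := fun x hx => by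
    simp [liftWater_apply_of_ne (ne_of_mem_of_not_mem hx hc), show S x ≠ 0 from hx]
  have hadd : BijOn (· + m) (Ioc 0 w) (Ioc m (w + m)) := by
    have himage := (add_left_injective m).injOn.bijOn_image (s := Ioc 0 w)
    rwa [image_add_const_Ioc, zero_add] at himage
  have hbij' := ((hadd.comp hbij).congr heq).insert (a := c)
    (by rw [liftWater_apply_self]; simp; omega)
  have hIoc : insert M (Ioc m (w + m)) = Ioc m M := by
    ext k; simp only [mem_insert_iff, mem_Ioc]; omega
  have hval : ∀ x ∈ shape S, liftWater m M S c x < M := fun x hx => by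
    have hSx := (hbij.mapsTo hx).2
    rw [← heq hx, comp_apply]
    omega
  rw [liftWater_apply_self, hIoc, ← shape_liftWater hM] at hbij'
  refine isStdFilling_iff.2 ⟨hbij', shape_liftWater hM ▸ hlow, ?_⟩
  rw [shape_liftWater hM]
  rintro x (rfl | hx) y (rfl | hy) hlt
  · exact absurd hlt (lt_irrefl _)
  · exact absurd (hSlow hlt.le hy) hc
  · rw [liftWater_apply_self]; exact hval x hx
  · rw [← heq hx, ← heq hy]; exact Nat.add_lt_add_right (hmono hx hy hlt) m

end Water

noncomputable def replaceWater (N m : ℕ) (S' T : Filling) : Filling :=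
  revJdtAlong (N ^ 2) 0 m T (liftWater m (N ^ 2) S' (pos ((jdt (N ^ 2))^[m] T) (N ^ 2)))

section Square

variable {N m n : ℕ} {T S S' : Filling} {lam : Finset Cell}

lemma isSquareSYT_iff :
    IsSquareSYT N T ↔ IsStdFilling T 0 (N ^ 2) ∧ shape T = ↑(squareDiagram N) := by
  rw [IsSquareSYT, IsSYTof, hasShape_iff, squareDiagram, Finset.card_product, Finset.card_range,
    sq]

lemma isStdFilling_jdt_iterate (hT : IsStdFilling T 0 n) (hm : m ≤ n) :
    IsStdFilling ((jdt n)^[m] T) m n := by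
  induction m with
  | zero => exact hT
  | succ m ih =>
    rw [Function.iterate_succ_apply']
    exact isStdFilling_jdt (ih (by omega)) (by omega)

lemma IsSYTof.apply_add_lt (hS : IsSYTof S lam) (hcard : lam.card = N ^ 2 - m - 1)
    (hmN : m < N ^ 2) (x : Cell) : S x + m < N ^ 2 := by
  have hSx := (hS.1.2.1 x).1
  omega

lemma waterSingle_eq_water : waterSingle N m T = water m (N ^ 2) ((jdt (N ^ 2))^[m] T) := rfl

lemma pos_eq {F : Filling} {k : ℕ} {c : Cell} (hF : InjOn F (shape F)) (hk : k ≠ 0)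
    (hc : F c = k) : pos F k = c := by
  have hex : ∃ x, F x = k := ⟨c, hc⟩
  rw [pos, dif_pos hex]
  exact hF (by simp [hex.choose_spec, hk]) (by simp [hc, hk]) (hex.choose_spec.trans hc.symm)

lemma liftWater_waterSingle (hmN : m < N ^ 2) (hT : IsSquareSYT N T) :
    liftWater m (N ^ 2) (waterSingle N m T) (pos ((jdt (N ^ 2))^[m] T) (N ^ 2)) =
      (jdt (N ^ 2))^[m] T := by
  have hG := isStdFilling_jdt_iterate (isSquareSYT_iff.1 hT).1 hmN.le
  have hbij := (isStdFilling_iff.1 hG).1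
  obtain ⟨c, -, hc⟩ := hbij.surjOn (show N ^ 2 ∈ Ioc m (N ^ 2) from ⟨hmN, le_rfl⟩)
  rw [pos_eq hbij.injOn (by omega) hc]
  exact liftWater_water hG hmN hc

theorem replaceWater_spec (hmN : m < N ^ 2) (hS : IsSYTof S lam) (hS' : IsSYTof S' lam)
    (hcard : lam.card = N ^ 2 - m - 1) (hT : IsSquareSYT N T) (hWT : waterSingle N m T = S) :
    IsSquareSYT N (replaceWater N m S' T) ∧ waterSingle N m (replaceWater N m S' T) = S' ∧
      replaceWater N m S (replaceWater N m S' T) = T := by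
  obtain ⟨hTstd, hTshape⟩ := isSquareSYT_iff.1 hT
  set c := pos ((jdt (N ^ 2))^[m] T) (N ^ 2)
  have hG := isStdFilling_jdt_iterate hTstd hmN.le
  have hGS : liftWater m (N ^ 2) S c = (jdt (N ^ 2))^[m] T := hWT ▸ liftWater_waterSingle hmN hT
  have hshapeG : shape ((jdt (N ^ 2))^[m] T) = insert c (shape S) := by
    rw [← hGS, shape_liftWater (by omega)]
  have hGc : (jdt (N ^ 2))^[m] T c = N ^ 2 := by rw [← hGS, liftWater_apply_self]
  have hSc : c ∉ shape S := by rw [← hWT]; simp [waterSingle, hGc]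
  have hshapeS : shape S' = shape S := by rw [hasShape_iff.1 hS.2, hasShape_iff.1 hS'.2]
  have hlow : IsLowerSet (insert c (shape S')) := by
    rw [hshapeS, ← hshapeG]; exact (isStdFilling_iff.1 hG).2.1
  have hS'c : c ∉ shape S' := hshapeS ▸ hSc
  have hG' := isStdFilling_liftWater (m := m) (M := N ^ 2) (hcard ▸ hS'.1) (by omega) hS'c hlow
  have hshapeG' : shape (liftWater m (N ^ 2) S' c) = shape ((jdt (N ^ 2))^[m] T) := by
    rw [shape_liftWater (by omega), hshapeS, hshapeG]
  have hG'0 : IsStdFilling (liftWater m (N ^ 2) S' c) (0 + m) (N ^ 2) := by rwa [zero_add]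
  obtain ⟨hRstd, hRshape, hRG⟩ := revJdtAlong_spec (by omega) hTstd hG'0 hshapeG'
  have hpos : pos (liftWater m (N ^ 2) S' c) (N ^ 2) = c :=
    pos_eq (isStdFilling_iff.1 hG').1.injOn (by omega) liftWater_apply_self
  have hR : replaceWater N m S' T = revJdtAlong (N ^ 2) 0 m T (liftWater m (N ^ 2) S' c) := rfl
  refine ⟨isSquareSYT_iff.2 ⟨hRstd, hRshape.trans hTshape⟩, ?_, ?_⟩
  · rw [waterSingle_eq_water, hR, hRG]
    exact water_liftWater (hS'.apply_add_lt hcard hmN) (not_not.1 hS'c)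
  · rw [hR, replaceWater, hRG, hpos, hGS]
    exact revJdtAlong_revJdtAlong (by omega) hTstd hG'0 hshapeG'

end Square

theorem stmt9_general (N m : ℕ) (hN : 1 ≤ N) (hm : m ≤ N ^ 2 - 1)
    (lam : Finset Cell) (hcard : lam.card = N ^ 2 - m - 1)
    (S S' : Filling) (hS : IsSYTof S lam) (hS' : IsSYTof S' lam) :
    {T : Filling | IsSquareSYT N T ∧ waterSingle N m T = S}.ncard =
    {T : Filling | IsSquareSYT N T ∧ waterSingle N m T = S'}.ncard := by
  have hmN : m < N ^ 2 := by have := Nat.one_le_pow 2 N hN; omega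
  have hto := fun T (hT : IsSquareSYT N T ∧ waterSingle N m T = S) =>
    replaceWater_spec hmN hS hS' hcard hT.1 hT.2
  have hfrom := fun T (hT : IsSquareSYT N T ∧ waterSingle N m T = S') =>
    replaceWater_spec hmN hS' hS hcard hT.1 hT.2
  refine BijOn.ncard_eq (f := replaceWater N m S') (InvOn.bijOn (f' := replaceWater N m S)
    ⟨fun T hT => (hto T hT).2.2, fun T hT => (hfrom T hT).2.2⟩
    (fun T hT => ⟨(hto T hT).1, (hto T hT).2.1⟩)
    (fun T hT => ⟨(hfrom T hT).1, (hfrom T hT).2.1⟩))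

/-- Fix `N ≥ 1` and `0 ≤ m ≤ N²-1`, set `w := N²-m-1`, and let `lam`
be a Young diagram with `w` boxes contained in `□_N`.  For any two standard Young
tableaux `S, S'` of shape `lam`, the number of `T ∈ 𝒯_{□_N}` whose water configuration
`W'(T)` equals `S` is the same as the number of those with `W'(T) = S'`: the conditional
distribution of the water configuration given its shape `lam` is uniform on `𝒯_lam`. -/
theorem stmt9 (N m : ℕ) (hN : 1 ≤ N) (hm : m ≤ N ^ 2 - 1)
    (lam : Finset Cell) (hlam : IsYoung lam) (hcard : lam.card = N ^ 2 - m - 1)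
    (hsub : lam ⊆ squareDiagram N)
    (S S' : Filling) (hS : IsSYTof S lam) (hS' : IsSYTof S' lam) :
    {T : Filling | IsSquareSYT N T ∧ waterSingle N m T = S}.ncard =
    {T : Filling | IsSquareSYT N T ∧ waterSingle N m T = S'}.ncard :=
  stmt9_general N m hN hm lam hcard S S' hS hS'
end
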